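/- arXiv:2406.05592 — 8 statements merged into one kernel-verified Lean document; each statement's English description precedes it below -/
import Mathlib

section
/- Let n, d be positive integers, let X be a real n×d matrix of full column rank d, and let x ∈ ℝ^d. Define f : (0,1)^n → ℝ by f(v) = xᵀ (Xᵀ diag(v_i(1 − v_i)) X)⁻¹ x (the matrix Xᵀ diag(v_i(1−v_i)) X is positive definite for v ∈ (0,1)^n). Then f is convex: for all u, v ∈ (0,1)^n and all λ ∈ [0,1], f(λu + (1−λ)v) ≤ λ f(u) + (1−λ) f(v). -/
open Matrix Set

section Aux

variable {n d : ℕ}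

lemma aux_quad (X : Matrix (Fin n) (Fin d) ℝ) (c : Fin n → ℝ) (y : Fin d → ℝ) :
    y ⬝ᵥ (Xᵀ * Matrix.diagonal c * X) *ᵥ y = ∑ i, c i * (X *ᵥ y) i ^ 2 := by
  rw [← Matrix.mulVec_mulVec, ← Matrix.mulVec_mulVec, Matrix.dotProduct_mulVec,
    Matrix.vecMul_transpose]
  simp only [Matrix.mulVec_diagonal, dotProduct]
  congr 1; ext i; ring

lemma aux_inj (X : Matrix (Fin n) (Fin d) ℝ) (hX : X.rank = d) {y : Fin d → ℝ}
    (hy : X *ᵥ y = 0) : y = 0 := by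
  have h := X.mulVecLin.finrank_range_add_finrank_ker
  have hX' : Module.finrank ℝ (LinearMap.range X.mulVecLin) = d := hX
  rw [hX', Module.finrank_pi ℝ, Fintype.card_fin] at h
  have hker : LinearMap.ker X.mulVecLin = ⊥ :=
    Submodule.finrank_eq_zero.mp (by omega)
  have : y ∈ LinearMap.ker X.mulVecLin := by
    simpa [LinearMap.mem_ker, Matrix.mulVecLin_apply] using hy
  simpa [hker] using this

lemma aux_posdef (X : Matrix (Fin n) (Fin d) ℝ) (hX : X.rank = d)
    (c : Fin n → ℝ) (hc : ∀ i, 0 < c i) :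
    (Xᵀ * Matrix.diagonal c * X).PosDef := by
  rw [Matrix.posDef_iff_dotProduct_mulVec]
  constructor
  · rw [← Matrix.conjTranspose_eq_transpose_of_trivial X]
    exact Matrix.isHermitian_conjTranspose_mul_mul X (Matrix.isHermitian_diagonal c)
  · intro y hy
    have hXy : X *ᵥ y ≠ 0 := fun h => hy (aux_inj X hX h)
    have : star y ⬝ᵥ (Xᵀ * Matrix.diagonal c * X) *ᵥ y
        = ∑ i, c i * (X *ᵥ y) i ^ 2 := by
      simpa using aux_quad X c y
    rw [this]
    obtain ⟨i, hi⟩ : ∃ i, (X *ᵥ y) i ≠ 0 := by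
      by_contra h
      push_neg at h
      exact hXy (funext h)
    apply Finset.sum_pos' (fun j _ => mul_nonneg (hc j).le (sq_nonneg _))
    exact ⟨i, Finset.mem_univ i, mul_pos (hc i) (by positivity)⟩

/-- For positive definite `M` and any `y`, `2 x⬝y - yᵀ M y ≤ xᵀ M⁻¹ x`. -/
lemma aux_key {M : Matrix (Fin d) (Fin d) ℝ} (hM : M.PosDef) (x y : Fin d → ℝ) :
    2 * (x ⬝ᵥ y) - y ⬝ᵥ M *ᵥ y ≤ x ⬝ᵥ M⁻¹ *ᵥ x := by
  set z : Fin d → ℝ := M⁻¹ *ᵥ x with hz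
  have hMz : M *ᵥ z = x := by
    rw [hz, Matrix.mulVec_mulVec, Matrix.mul_nonsing_inv _ hM.det_pos.ne'.isUnit,
      Matrix.one_mulVec]
  have hMsym : Mᵀ = M := by
    rw [← Matrix.conjTranspose_eq_transpose_of_trivial M, hM.1]
  have e1 : z ⬝ᵥ M *ᵥ y = x ⬝ᵥ y := by
    rw [Matrix.dotProduct_mulVec, ← hMsym, Matrix.vecMul_transpose, hMz]
  have e2 : y ⬝ᵥ M *ᵥ z = x ⬝ᵥ y := by rw [hMz, dotProduct_comm]
  have e3 : z ⬝ᵥ M *ᵥ z = x ⬝ᵥ M⁻¹ *ᵥ x := by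
    rw [hMz, dotProduct_comm, hz]
  have h0 : 0 ≤ (y - z) ⬝ᵥ M *ᵥ (y - z) := by
    simpa using hM.posSemidef.dotProduct_mulVec_nonneg (y - z)
  rw [Matrix.mulVec_sub, dotProduct_sub, sub_dotProduct,
    sub_dotProduct] at h0
  linarith

end Aux

/-- convexity of `v ↦ xᵀ (Xᵀ diag(v(1-v)) X)⁻¹ x` on `(0,1)ⁿ`. -/
theorem stmt_0 (n d : ℕ) (hn : 0 < n) (hd : 0 < d)
    (X : Matrix (Fin n) (Fin d) ℝ) (hX : X.rank = d) (x : Fin d → ℝ)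
    (f : (Fin n → ℝ) → ℝ)
    (hf : ∀ v : Fin n → ℝ,
      f v = x ⬝ᵥ ((Xᵀ * Matrix.diagonal (fun i => v i * (1 - v i)) * X)⁻¹).mulVec x)
    (u v : Fin n → ℝ) (hu : ∀ i, u i ∈ Ioo (0:ℝ) 1) (hv : ∀ i, v i ∈ Ioo (0:ℝ) 1)
    (l : ℝ) (hl : l ∈ Icc (0:ℝ) 1) :
    f (l • u + (1 - l) • v) ≤ l * f u + (1 - l) * f v := by
  have hl0 : 0 ≤ l := hl.1
  have hl1 : 0 ≤ 1 - l := by linarith [hl.2]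
  set w := l • u + (1 - l) • v with hwdef
  have hw : ∀ i, w i ∈ Ioo (0:ℝ) 1 := by
    intro i
    have h := (convex_Ioo (0:ℝ) 1) (hu i) (hv i) hl0 hl1 (by ring)
    simpa [hwdef, smul_eq_mul] using h
  have hcpos : ∀ (g : Fin n → ℝ), (∀ i, g i ∈ Ioo (0:ℝ) 1) →
      ∀ i, 0 < g i * (1 - g i) :=
    fun g hg i => mul_pos (hg i).1 (by linarith [(hg i).2])
  have hMw := aux_posdef X hX _ (hcpos w hw)
  have hMu := aux_posdef X hX _ (hcpos u hu)
  have hMv := aux_posdef X hX _ (hcpos v hv)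
  set z := (Xᵀ * Matrix.diagonal (fun i => w i * (1 - w i)) * X)⁻¹ *ᵥ x with hz
  have hMz : (Xᵀ * Matrix.diagonal (fun i => w i * (1 - w i)) * X) *ᵥ z = x := by
    rw [hz, Matrix.mulVec_mulVec, Matrix.mul_nonsing_inv _ hMw.det_pos.ne'.isUnit,
      Matrix.one_mulVec]
  have hfw : f w = 2 * (x ⬝ᵥ z) -
      z ⬝ᵥ (Xᵀ * Matrix.diagonal (fun i => w i * (1 - w i)) * X) *ᵥ z := by
    rw [hf w, ← hz, hMz, dotProduct_comm z x]
    ring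
  have hquad : l * (z ⬝ᵥ (Xᵀ * Matrix.diagonal (fun i => u i * (1 - u i)) * X) *ᵥ z)
      + (1 - l) * (z ⬝ᵥ (Xᵀ * Matrix.diagonal (fun i => v i * (1 - v i)) * X) *ᵥ z)
      ≤ z ⬝ᵥ (Xᵀ * Matrix.diagonal (fun i => w i * (1 - w i)) * X) *ᵥ z := by
    rw [aux_quad, aux_quad, aux_quad, Finset.mul_sum, Finset.mul_sum,
      ← Finset.sum_add_distrib]
    apply Finset.sum_le_sum
    intro i _
    have hwi : w i = l * u i + (1 - l) * v i := by simp [hwdef, smul_eq_mul]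
    rw [hwi]
    nlinarith [mul_nonneg (mul_nonneg (mul_nonneg hl0 hl1) (sq_nonneg (u i - v i)))
      (sq_nonneg ((X *ᵥ z) i))]
  have keyu := aux_key hMu x z
  have keyv := aux_key hMv x z
  rw [hfw, hf u, hf v]
  nlinarith [mul_le_mul_of_nonneg_left keyu hl0, mul_le_mul_of_nonneg_left keyv hl1]
end

section
/- Let X ∈ ℝ^{n×d} have full column rank d, let x̄ ∈ ℝ^d, and let p_AT, p_C ∈ ℝ^n satisfy p_AT,i ≥ 0, p_C,i > 0, p_AT,i + p_C,i ≤ 1 for all i. Suppose there is η > 0 such that for every e ∈ [0,1]^n and every i, the induced treatment propensity w(e)_i = p_AT,i + p_C,i e_i lies in [η, 1−η]. Define the plug-in variance criterion Ṽ(e) = n · x̄ᵀ (Xᵀ diag(w(e)_i(1 − w(e)_i)) X)⁻¹ x̄, and define e* ∈ [0,1]^n coordinatewise by e*_i = (1 − 2 p_AT,i)/(2 p_C,i) if p_AT,i ≤ 1/2 and p_AT,i + p_C,i ≥ 1/2; e*_i = 0 if p_AT,i > 1/2; and e*_i = 1 if p_AT,i + p_C,i < 1/2. Then Ṽ(e*)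 ≤ Ṽ(e) for every e ∈ [0,1]^n. -/
open Matrix Set

lemma scalar_max_aux (a c t estar : ℝ) (ha : 0 ≤ a) (hc : 0 < c)
    (ht0 : 0 ≤ t) (ht1 : t ≤ 1)
    (he : estar = if a ≤ 1/2 ∧ 1/2 ≤ a + c then (1-2*a)/(2*c) else if 1/2 < a then 0 else 1) :
    (a + c*t)*(1-(a+c*t)) ≤ (a + c*estar)*(1-(a+c*estar)) := by
  split_ifs at he with h1 h2
  · have hw : a + c * estar = 1/2 := by
      rw [he]; field_simp; ring
    rw [hw]; nlinarith [sq_nonneg (a + c*t - 1/2)]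
  · rw [he]; nlinarith [mul_nonneg hc.le ht0]
  · push_neg at h1
    have h3 : a ≤ 1/2 := le_of_not_gt h2
    have h4 : a + c < 1/2 := h1 h3
    rw [he]; nlinarith [mul_nonneg hc.le (sub_nonneg.mpr ht1)]

lemma estar_mem_aux (a c : ℝ) (ha : 0 ≤ a) (hc : 0 < c) (hs : a + c ≤ 1) :
    (if a ≤ 1/2 ∧ 1/2 ≤ a + c then (1-2*a)/(2*c) else if 1/2 < a then 0 else 1) ∈
      Icc (0:ℝ) 1 := by
  split_ifs with h1 h2
  · constructor
    · apply div_nonneg <;> linarith [h1.1]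
    · rw [div_le_one (by linarith)]; linarith [h1.2]
  · exact ⟨le_refl 0, by norm_num⟩
  · exact ⟨by norm_num, le_refl 1⟩

lemma quad_form_aux (n d : ℕ) (X : Matrix (Fin n) (Fin d) ℝ) (f : Fin n → ℝ) (v : Fin d → ℝ) :
    v ⬝ᵥ (Xᵀ * Matrix.diagonal f * X).mulVec v = ∑ i, f i * (X.mulVec v i)^2 := by
  rw [← Matrix.mulVec_mulVec, ← Matrix.mulVec_mulVec, Matrix.dotProduct_mulVec,
    Matrix.vecMul_transpose]
  simp [dotProduct, Matrix.mulVec_diagonal]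
  congr 1; ext i; ring

lemma posdef_gram_aux (n d : ℕ) (X : Matrix (Fin n) (Fin d) ℝ)
    (hinj : Function.Injective X.mulVec)
    (f : Fin n → ℝ) (hf : ∀ i, 0 < f i) : (Xᵀ * Matrix.diagonal f * X).PosDef := by
  rw [Matrix.posDef_iff_dotProduct_mulVec]
  constructor
  · have h1 : (Xᵀ * Matrix.diagonal f * X)ᵀ = Xᵀ * Matrix.diagonal f * X := by
      rw [Matrix.transpose_mul, Matrix.transpose_mul, Matrix.transpose_transpose,
        Matrix.diagonal_transpose, Matrix.mul_assoc]
    simpa [Matrix.IsHermitian, Matrix.conjTranspose_eq_transpose_of_trivial] using h1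
  · intro x hx
    have hXx : X.mulVec x ≠ 0 := by
      intro h
      exact hx (hinj (by simpa [Matrix.mulVec_zero] using h))
    obtain ⟨i, hi⟩ := Function.ne_iff.mp hXx
    simp only [star_trivial]
    rw [quad_form_aux]
    exact Finset.sum_pos' (fun j _ => mul_nonneg (hf j).le (sq_nonneg _))
      ⟨i, Finset.mem_univ i, mul_pos (hf i) (pow_two_pos_of_ne_zero hi)⟩

lemma inv_quad_le_aux (m : ℕ) (A B : Matrix (Fin m) (Fin m) ℝ) (hA : A.PosDef) (hB : B.PosDef)
    (h : ∀ v, v ⬝ᵥ B.mulVec v ≤ v ⬝ᵥ A.mulVec v) (x : Fin m → ℝ) :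
    x ⬝ᵥ A⁻¹.mulVec x ≤ x ⬝ᵥ B⁻¹.mulVec x := by
  have hAu : A * A⁻¹ = 1 := Matrix.mul_nonsing_inv A (isUnit_iff_ne_zero.mpr hA.det_pos.ne')
  have hBu : B * B⁻¹ = 1 := Matrix.mul_nonsing_inv B (isUnit_iff_ne_zero.mpr hB.det_pos.ne')
  set y := A⁻¹.mulVec x with hy
  set z := B⁻¹.mulVec x with hz
  have hAy : A.mulVec y = x := by rw [hy, Matrix.mulVec_mulVec, hAu, Matrix.one_mulVec]
  have hBz : B.mulVec z = x := by rw [hz, Matrix.mulVec_mulVec, hBu, Matrix.one_mulVec]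
  have hBsymm : Bᵀ = B := hB.isHermitian
  have hS : 0 ≤ (z - y) ⬝ᵥ B.mulVec (z - y) := by
    have := hB.posSemidef.dotProduct_mulVec_nonneg (z - y)
    simpa using this
  have expand : (z - y) ⬝ᵥ B.mulVec (z - y)
      = z ⬝ᵥ B.mulVec z - 2 * (y ⬝ᵥ B.mulVec z) + y ⬝ᵥ B.mulVec y := by
    have hsw : z ⬝ᵥ B.mulVec y = y ⬝ᵥ B.mulVec z := by
      rw [Matrix.dotProduct_mulVec, ← hBsymm, Matrix.vecMul_transpose, hBsymm,
        dotProduct_comm]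
    simp only [Matrix.mulVec_sub, dotProduct_sub, sub_dotProduct]
    rw [hsw]; ring
  have h1 : z ⬝ᵥ B.mulVec z = x ⬝ᵥ z := by rw [hBz, dotProduct_comm]
  have h2 : y ⬝ᵥ B.mulVec z = y ⬝ᵥ x := by rw [hBz]
  have h3 : y ⬝ᵥ A.mulVec y = y ⬝ᵥ x := by rw [hAy]
  have hxy : x ⬝ᵥ y = y ⬝ᵥ x := dotProduct_comm _ _
  have hby := h y
  rw [expand, h1, h2] at hS
  rw [h3] at hby
  nlinarith [hS, hby, hxy]

/-- the unconstrained minimizer of the plug-in variance criterion. -/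
theorem stmt_5 (n d : ℕ) (X : Matrix (Fin n) (Fin d) ℝ) (hX : X.rank = d)
    (xbar : Fin d → ℝ) (pAT pC : Fin n → ℝ)
    (hAT : ∀ i, 0 ≤ pAT i) (hC : ∀ i, 0 < pC i) (hsum : ∀ i, pAT i + pC i ≤ 1)
    (η : ℝ) (hη : 0 < η)
    (hbound : ∀ e : Fin n → ℝ, (∀ i, e i ∈ Icc (0:ℝ) 1) →
      ∀ i, pAT i + pC i * e i ∈ Icc η (1 - η))
    (V : (Fin n → ℝ) → ℝ)
    (hV : ∀ e : Fin n → ℝ, V e = n * (xbar ⬝ᵥ ((Xᵀ * Matrix.diagonal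
      (fun i => (pAT i + pC i * e i) * (1 - (pAT i + pC i * e i))) * X)⁻¹).mulVec xbar))
    (estar : Fin n → ℝ)
    (hestar : ∀ i, estar i =
      if pAT i ≤ 1/2 ∧ 1/2 ≤ pAT i + pC i then (1 - 2 * pAT i) / (2 * pC i)
      else if 1/2 < pAT i then 0 else 1) :
    ∀ e : Fin n → ℝ, (∀ i, e i ∈ Icc (0:ℝ) 1) → V estar ≤ V e := by
  intro e he
  -- injectivity of mulVec from full column rank
  have hinj : Function.Injective X.mulVec := by
    have h := X.mulVecLin.finrank_range_add_finrank_ker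
    rw [show Module.finrank ℝ (LinearMap.range X.mulVecLin) = d from hX] at h
    simp [Module.finrank_pi] at h
    exact LinearMap.ker_eq_bot.mp h
  -- estar is a valid nudge propensity vector
  have hestar_mem : ∀ i, estar i ∈ Icc (0:ℝ) 1 := by
    intro i
    rw [hestar i]
    have := estar_mem_aux (pAT i) (pC i) (hAT i) (hC i) (hsum i)
    convert this using 2 <;> ring_nf
  -- positivity of the diagonal weights
  have hpos : ∀ (e' : Fin n → ℝ), (∀ i, e' i ∈ Icc (0:ℝ) 1) →
      ∀ i, 0 < (pAT i + pC i * e' i) * (1 - (pAT i + pC i * e' i)) := by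
    intro e' he' i
    obtain ⟨hl, hr⟩ := hbound e' he' i
    have h1 : 0 < pAT i + pC i * e' i := lt_of_lt_of_le hη hl
    have h2 : 0 < 1 - (pAT i + pC i * e' i) := by linarith
    exact mul_pos h1 h2
  set fA : Fin n → ℝ := fun i => (pAT i + pC i * estar i) * (1 - (pAT i + pC i * estar i))
    with hfA
  set fB : Fin n → ℝ := fun i => (pAT i + pC i * e i) * (1 - (pAT i + pC i * e i)) with hfB
  have hApd : (Xᵀ * Matrix.diagonal fA * X).PosDef :=
    posdef_gram_aux n d X hinj fA (hpos estar hestar_mem)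
  have hBpd : (Xᵀ * Matrix.diagonal fB * X).PosDef :=
    posdef_gram_aux n d X hinj fB (hpos e he)
  have hptwise : ∀ i, fB i ≤ fA i := by
    intro i
    have := scalar_max_aux (pAT i) (pC i) (e i) (estar i) (hAT i) (hC i)
      (he i).1 (he i).2 (hestar i)
    simpa [hfA, hfB] using this
  have hquadle : ∀ v, v ⬝ᵥ (Xᵀ * Matrix.diagonal fB * X).mulVec v
      ≤ v ⬝ᵥ (Xᵀ * Matrix.diagonal fA * X).mulVec v := by
    intro v
    rw [quad_form_aux, quad_form_aux]
    exact Finset.sum_le_sum fun i _ =>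
      mul_le_mul_of_nonneg_right (hptwise i) (sq_nonneg _)
  have key := inv_quad_le_aux d _ _ hApd hBpd hquadle xbar
  rw [hV estar, hV e]
  exact mul_le_mul_of_nonneg_left key (Nat.cast_nonneg n)
end

section
/- Let σ₀², σ₁² > 0 satisfy 1/2 ≤ σ₁²/σ₀² ≤ 2, and define g(e) = e(1−e)²/σ₁² + (1−e)e²/σ₀² for e ∈ [0,1]. Then g is concave on [0,1]: for all e₁, e₂ ∈ [0,1] and λ ∈ [0,1], g(λe₁ + (1−λ)e₂) ≥ λ g(e₁) + (1−λ) g(e₂). -/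
open Set

/-- the precision weight `g(e) = e(1-e)²/σ₁² + (1-e)e²/σ₀²` is concave
on `[0,1]` whenever the variance ratio lies in `[1/2, 2]`. -/
theorem stmt_7 (s0 s1 : ℝ) (hs0 : 0 < s0) (hs1 : 0 < s1)
    (hlo : 1/2 ≤ s1 / s0) (hhi : s1 / s0 ≤ 2)
    (g : ℝ → ℝ)
    (hg : ∀ e, g e = e * (1 - e)^2 / s1 + (1 - e) * e^2 / s0) :
    ∀ e₁ ∈ Icc (0:ℝ) 1, ∀ e₂ ∈ Icc (0:ℝ) 1, ∀ l ∈ Icc (0:ℝ) 1,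
      l * g e₁ + (1 - l) * g e₂ ≤ g (l * e₁ + (1 - l) * e₂) := by
  intro e1 h1 e2 h2 l hl
  obtain ⟨he10, he11⟩ := h1
  obtain ⟨he20, he21⟩ := h2
  obtain ⟨hl0, hl1⟩ := hl
  have hs12 : s1 ≤ 2 * s0 := by
    rw [div_le_iff₀ hs0] at hhi; linarith
  have hs21 : s0 ≤ 2 * s1 := by
    rw [le_div_iff₀ hs0] at hlo; linarith
  have hbr : 0 ≤ (2 * s0 - s1) - (s0 - s1) * ((1 + l) * e1 + (2 - l) * e2) := by
    rcases le_total s0 s1 with h | h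
    · nlinarith [mul_nonneg (sub_nonneg.2 h) (mul_nonneg (by linarith : (0:ℝ) ≤ 1 + l) he10),
        mul_nonneg (sub_nonneg.2 h) (mul_nonneg (by linarith : (0:ℝ) ≤ 2 - l) he20)]
    · have h3 : 0 ≤ 3 - ((1 + l) * e1 + (2 - l) * e2) := by
        nlinarith [mul_nonneg (by linarith : (0:ℝ) ≤ 1 + l) (by linarith : (0:ℝ) ≤ 1 - e1),
          mul_nonneg (by linarith : (0:ℝ) ≤ 2 - l) (by linarith : (0:ℝ) ≤ 1 - e2)]
      nlinarith [mul_nonneg (sub_nonneg.2 h) h3]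
  have key : g (l * e1 + (1 - l) * e2) - (l * g e1 + (1 - l) * g e2) =
      (l * (1 - l) * (e1 - e2)^2 *
        ((2 * s0 - s1) - (s0 - s1) * ((1 + l) * e1 + (2 - l) * e2))) / (s0 * s1) := by
    rw [hg, hg, hg]
    field_simp
    ring
  have hnn : 0 ≤ (l * (1 - l) * (e1 - e2)^2 *
      ((2 * s0 - s1) - (s0 - s1) * ((1 + l) * e1 + (2 - l) * e2))) / (s0 * s1) :=
    div_nonneg (mul_nonneg (mul_nonneg (mul_nonneg hl0 (by linarith)) (sq_nonneg _)) hbr)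
      (by positivity)
  linarith [key, hnn]
end

section
/- Let X ∈ ℝ^{n×d} have full column rank d and x̄ ∈ ℝ^d. Let p_AT, p_C ∈ ℝ^n satisfy p_AT,i ≥ 0, p_C,i > 0, p_AT,i + p_C,i ≤ 1, and suppose there is η > 0 such that w(e)_i = p_AT,i + p_C,i e_i ∈ [η, 1−η] for every e ∈ [0,1]^n and every i. Let σ₀,i², σ₁,i² > 0 satisfy 1/2 ≤ σ₁,i²/σ₀,i² ≤ 2 for every i, and define g_i(w) = w(1−w)²/σ₁,i² + (1−w)w²/σ₀,i². Then the heteroscedastic plug-in variance criterion Ṽ(e) = x̄ᵀ (Xᵀ diag(g_i(w(e)_i)) X)⁻¹ x̄ is a convex function of e on [0,1]^n: for all e, e' ∈ [0,1]^n and λ ∈ [0,1], Ṽ(λe + (1−λ)e') ≤ λṼ(e) + (1−λ)Ṽ(e'). -/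
open Matrix Set

lemma gconc (s0 s1 a b l : ℝ) (hs0 : 0 < s0) (hs1 : 0 < s1)
    (h1 : s0 ≤ 2*s1) (h2 : s1 ≤ 2*s0)
    (ha0 : 0 ≤ a) (ha1 : a ≤ 1) (hb0 : 0 ≤ b) (hb1 : b ≤ 1)
    (hl0 : 0 ≤ l) (hl1 : l ≤ 1) :
    l * (a * (1-a)^2 / s1 + (1-a) * a^2 / s0)
      + (1-l) * (b * (1-b)^2 / s1 + (1-b) * b^2 / s0)
    ≤ (l*a+(1-l)*b) * (1-(l*a+(1-l)*b))^2 / s1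
      + (1-(l*a+(1-l)*b)) * (l*a+(1-l)*b)^2 / s0 := by
  rw [← sub_nonneg]
  have key : ((l*a+(1-l)*b) * (1-(l*a+(1-l)*b))^2 / s1
      + (1-(l*a+(1-l)*b)) * (l*a+(1-l)*b)^2 / s0)
      - (l * (a * (1-a)^2 / s1 + (1-a) * a^2 / s0)
      + (1-l) * (b * (1-b)^2 / s1 + (1-b) * b^2 / s0))
      = l*(1-l)*(a-b)^2 *
        (s0*(2-(a+b+(l*a+(1-l)*b))) + s1*((a+b+(l*a+(1-l)*b))-1)) / (s0*s1) := by
    field_simp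
    ring
  rw [key]
  have ht1 : a+b+(l*a+(1-l)*b) ≤ 3 := by nlinarith
  have ht0 : 0 ≤ a+b+(l*a+(1-l)*b) := by nlinarith
  have : 0 ≤ s0*(2-(a+b+(l*a+(1-l)*b))) + s1*((a+b+(l*a+(1-l)*b))-1) := by nlinarith
  apply div_nonneg
  · exact mul_nonneg (mul_nonneg (mul_nonneg hl0 (by linarith)) (sq_nonneg _)) this
  · positivity

-- quadratic form of X^T D X
lemma quadform {n d : ℕ} (X : Matrix (Fin n) (Fin d) ℝ) (f : Fin n → ℝ) (v : Fin d → ℝ) :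
    v ⬝ᵥ (Xᵀ * Matrix.diagonal f * X) *ᵥ v = ∑ i, f i * (X *ᵥ v) i ^ 2 := by
  rw [← Matrix.mulVec_mulVec, ← Matrix.mulVec_mulVec, Matrix.dotProduct_mulVec,
    Matrix.vecMul_transpose]
  simp [dotProduct, Matrix.mulVec_diagonal]
  congr 1; ext i; ring

-- injectivity from full column rank
lemma inj_of_rank {n d : ℕ} (X : Matrix (Fin n) (Fin d) ℝ) (hX : X.rank = d)
    (v : Fin d → ℝ) (hv : X *ᵥ v = 0) : v = 0 := by
  have h1 := X.mulVecLin.finrank_range_add_finrank_ker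
  rw [show Matrix.rank X = Module.finrank ℝ (LinearMap.range X.mulVecLin) from rfl] at hX
  rw [hX] at h1
  simp [Module.finrank_fintype_fun_eq_card] at h1
  have hker : LinearMap.ker X.mulVecLin = ⊥ := h1
  have : v ∈ LinearMap.ker X.mulVecLin := by simpa [Matrix.mulVecLin_apply] using hv
  simpa [hker] using this

-- positive definiteness
lemma XDX_posdef {n d : ℕ} (X : Matrix (Fin n) (Fin d) ℝ) (hX : X.rank = d)
    (f : Fin n → ℝ) (hf : ∀ i, 0 < f i) : (Xᵀ * Matrix.diagonal f * X).PosDef := by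
  refine Matrix.PosDef.of_dotProduct_mulVec_pos ?_ ?_
  · show (Xᵀ * Matrix.diagonal f * X)ᴴ = _
    rw [Matrix.conjTranspose_eq_transpose_of_trivial, Matrix.transpose_mul, Matrix.transpose_mul,
      Matrix.transpose_transpose, Matrix.diagonal_transpose, Matrix.mul_assoc]
  · intro v hv
    rw [star_trivial, quadform]
    have hXv : X *ᵥ v ≠ 0 := fun h => hv (inj_of_rank X hX v h)
    obtain ⟨i, hi⟩ := Function.ne_iff.mp hXv
    refine Finset.sum_pos' (fun j _ => ?_) ⟨i, Finset.mem_univ i, ?_⟩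
    · have := (hf j).le; positivity
    · have : (X *ᵥ v) i ≠ 0 := hi
      have h2 : 0 < (X *ᵥ v) i ^ 2 := by positivity
      exact mul_pos (hf i) h2

-- Fenchel-type bound
lemma fenchel {d : ℕ} {M : Matrix (Fin d) (Fin d) ℝ} (hM : M.PosDef)
    (u x : Fin d → ℝ) : 2 * (u ⬝ᵥ x) - u ⬝ᵥ M *ᵥ u ≤ x ⬝ᵥ M⁻¹ *ᵥ x := by
  have hdet : IsUnit M.det := hM.det_pos.ne'.isUnit
  set z := M⁻¹ *ᵥ x with hz
  have hMz : M *ᵥ z = x := by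
    rw [hz, Matrix.mulVec_mulVec, Matrix.mul_nonsing_inv _ hdet, Matrix.one_mulVec]
  have hsym : Mᵀ = M := by
    have := hM.1
    rwa [Matrix.IsHermitian, Matrix.conjTranspose_eq_transpose_of_trivial] at this
  have hpsd := hM.posSemidef.dotProduct_mulVec_nonneg (u - z)
  rw [star_trivial] at hpsd
  have hzMu : z ⬝ᵥ M *ᵥ u = x ⬝ᵥ u := by
    rw [Matrix.dotProduct_mulVec, ← Matrix.mulVec_transpose, hsym, hMz]
  have hzMz : z ⬝ᵥ M *ᵥ z = x ⬝ᵥ z := by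
    rw [Matrix.dotProduct_mulVec, ← Matrix.mulVec_transpose, hsym, hMz]
  have hexp : (u - z) ⬝ᵥ M *ᵥ (u - z)
      = u ⬝ᵥ M *ᵥ u - u ⬝ᵥ x - x ⬝ᵥ u + x ⬝ᵥ z := by
    rw [Matrix.mulVec_sub, sub_dotProduct, dotProduct_sub, dotProduct_sub,
      hMz, hzMu, dotProduct_comm z x]
    ring
  rw [hexp] at hpsd
  have hcomm : u ⬝ᵥ x = x ⬝ᵥ u := dotProduct_comm u x
  linarith

lemma fenchel_eq {d : ℕ} {M : Matrix (Fin d) (Fin d) ℝ} (hM : M.PosDef)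
    (x : Fin d → ℝ) : x ⬝ᵥ M⁻¹ *ᵥ x = 2 * ((M⁻¹ *ᵥ x) ⬝ᵥ x) - (M⁻¹ *ᵥ x) ⬝ᵥ M *ᵥ (M⁻¹ *ᵥ x) := by
  have hdet : IsUnit M.det := hM.det_pos.ne'.isUnit
  set z := M⁻¹ *ᵥ x with hz
  have hMz : M *ᵥ z = x := by
    rw [hz, Matrix.mulVec_mulVec, Matrix.mul_nonsing_inv _ hdet, Matrix.one_mulVec]
  rw [hMz, dotProduct_comm x z]
  ring

/-- convexity of the heteroscedastic plug-in variance criterion when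
all variance ratios lie in `[1/2, 2]`. -/
theorem stmt_9 (n d : ℕ) (X : Matrix (Fin n) (Fin d) ℝ) (hX : X.rank = d)
    (xbar : Fin d → ℝ) (pAT pC : Fin n → ℝ)
    (hAT : ∀ i, 0 ≤ pAT i) (hC : ∀ i, 0 < pC i) (hsum : ∀ i, pAT i + pC i ≤ 1)
    (η : ℝ) (hη : 0 < η)
    (hbound : ∀ e : Fin n → ℝ, (∀ i, e i ∈ Icc (0:ℝ) 1) →
      ∀ i, pAT i + pC i * e i ∈ Icc η (1 - η))
    (s0 s1 : Fin n → ℝ) (hs0 : ∀ i, 0 < s0 i) (hs1 : ∀ i, 0 < s1 i)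
    (hratio : ∀ i, 1/2 ≤ s1 i / s0 i ∧ s1 i / s0 i ≤ 2)
    (g : Fin n → ℝ → ℝ)
    (hg : ∀ i w, g i w = w * (1 - w)^2 / s1 i + (1 - w) * w^2 / s0 i)
    (V : (Fin n → ℝ) → ℝ)
    (hV : ∀ e : Fin n → ℝ, V e = xbar ⬝ᵥ ((Xᵀ * Matrix.diagonal
      (fun i => g i (pAT i + pC i * e i)) * X)⁻¹).mulVec xbar) :
    ∀ e e' : Fin n → ℝ, (∀ i, e i ∈ Icc (0:ℝ) 1) → (∀ i, e' i ∈ Icc (0:ℝ) 1) →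
      ∀ l ∈ Icc (0:ℝ) 1, V (l • e + (1 - l) • e') ≤ l * V e + (1 - l) * V e' := by
  intro e e' he he' l hl
  obtain ⟨hl0, hl1⟩ := hl
  set c : Fin n → ℝ := l • e + (1 - l) • e' with hcdef
  have hci : ∀ i, c i = l * e i + (1 - l) * e' i := fun i => rfl
  have hc : ∀ i, c i ∈ Icc (0:ℝ) 1 := by
    intro i
    obtain ⟨h1, h2⟩ := he i; obtain ⟨h3, h4⟩ := he' i
    rw [hci]
    constructor
    · nlinarith
    · nlinarith
  -- weights in (0,1)
  have hwmem : ∀ (ee : Fin n → ℝ), (∀ i, ee i ∈ Icc (0:ℝ) 1) →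
      ∀ i, 0 ≤ pAT i + pC i * ee i ∧ pAT i + pC i * ee i ≤ 1 := by
    intro ee hee i
    obtain ⟨hw1, hw2⟩ := hbound ee hee i
    exact ⟨le_trans hη.le hw1, by linarith⟩
  -- positivity of g at weights
  have hgpos : ∀ (ee : Fin n → ℝ), (∀ i, ee i ∈ Icc (0:ℝ) 1) →
      ∀ i, 0 < g i (pAT i + pC i * ee i) := by
    intro ee hee i
    obtain ⟨hw1, hw2⟩ := hbound ee hee i
    have h0 : 0 < pAT i + pC i * ee i := lt_of_lt_of_le hη hw1
    have h1 : pAT i + pC i * ee i < 1 := by linarith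
    rw [hg]
    have := hs0 i; have := hs1 i
    have h2 : (0:ℝ) < 1 - (pAT i + pC i * ee i) := by linarith
    positivity
  -- ratio bounds
  have hrat : ∀ i, s0 i ≤ 2 * s1 i ∧ s1 i ≤ 2 * s0 i := by
    intro i
    obtain ⟨hr1, hr2⟩ := hratio i
    have h0 := hs0 i
    rw [le_div_iff₀ h0] at hr1
    rw [div_le_iff₀ h0] at hr2
    constructor <;> linarith
  -- define matrices
  set fe : Fin n → ℝ := fun i => g i (pAT i + pC i * e i) with hfe
  set fe' : Fin n → ℝ := fun i => g i (pAT i + pC i * e' i) with hfe'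
  set fc : Fin n → ℝ := fun i => g i (pAT i + pC i * c i) with hfc
  set Me := Xᵀ * Matrix.diagonal fe * X with hMe
  set Me' := Xᵀ * Matrix.diagonal fe' * X with hMe'
  set Mc := Xᵀ * Matrix.diagonal fc * X with hMc
  have hMepd : Me.PosDef := XDX_posdef X hX fe (hgpos e he)
  have hMe'pd : Me'.PosDef := XDX_posdef X hX fe' (hgpos e' he')
  have hMcpd : Mc.PosDef := XDX_posdef X hX fc (hgpos c hc)
  set z := Mc⁻¹ *ᵥ xbar with hzdef
  -- pointwise concavity applied to each i with weight (X *ᵥ z) i ^ 2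
  have hptwise : ∀ i, l * (fe i * (X *ᵥ z) i ^ 2) + (1 - l) * (fe' i * (X *ᵥ z) i ^ 2)
      ≤ fc i * (X *ᵥ z) i ^ 2 := by
    intro i
    have ha := hwmem e he i
    have hb := hwmem e' he' i
    have hcomb : pAT i + pC i * c i
        = l * (pAT i + pC i * e i) + (1 - l) * (pAT i + pC i * e' i) := by
      rw [hci]; ring
    have hr := hrat i
    have key := gconc (s0 i) (s1 i) (pAT i + pC i * e i) (pAT i + pC i * e' i) l
      (hs0 i) (hs1 i) hr.1 hr.2 ha.1 ha.2 hb.1 hb.2 hl0 hl1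
    rw [← hg, ← hg] at key
    have key2 : l * fe i + (1 - l) * fe' i ≤ fc i := by
      show l * g i (pAT i + pC i * e i) + (1 - l) * g i (pAT i + pC i * e' i)
        ≤ g i (pAT i + pC i * c i)
      rw [hcomb, hg i (l * (pAT i + pC i * e i) + (1 - l) * (pAT i + pC i * e' i))]
      exact key
    have hq : (0:ℝ) ≤ (X *ᵥ z) i ^ 2 := sq_nonneg _
    nlinarith [mul_le_mul_of_nonneg_right key2 hq]
  -- quadratic form concavity
  have hquad : l * (z ⬝ᵥ Me *ᵥ z) + (1 - l) * (z ⬝ᵥ Me' *ᵥ z) ≤ z ⬝ᵥ Mc *ᵥ z := by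
    rw [hMe, hMe', hMc, quadform, quadform, quadform, Finset.mul_sum, Finset.mul_sum,
      ← Finset.sum_add_distrib]
    exact Finset.sum_le_sum (fun i _ => hptwise i)
  -- Fenchel bounds
  have hVe : 2 * (z ⬝ᵥ xbar) - z ⬝ᵥ Me *ᵥ z ≤ V e := by
    rw [hV e]; exact fenchel hMepd z xbar
  have hVe' : 2 * (z ⬝ᵥ xbar) - z ⬝ᵥ Me' *ᵥ z ≤ V e' := by
    rw [hV e']; exact fenchel hMe'pd z xbar
  have hVc : V c = 2 * (z ⬝ᵥ xbar) - z ⬝ᵥ Mc *ᵥ z := by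
    rw [hV c]; exact fenchel_eq hMcpd xbar
  have h1 := mul_le_mul_of_nonneg_left hVe hl0
  have h2 := mul_le_mul_of_nonneg_left hVe' (by linarith : (0:ℝ) ≤ 1 - l)
  rw [hVc]
  linarith
end

section
/- Fix d ∈ ℕ, constants η ∈ (0, 1/2), c, C > 0, and n* ≥ d. For every n ≥ n* and every X ∈ ℝ^{n×d} with rows satisfying ‖X_i‖₂² ≤ C and Xᵀ X ⪰ n c I_d, every x̄ ∈ ℝ^d with ‖x̄‖₂² ≤ C, and any two vectors w, ŵ ∈ [0,1]^n with w_i ∈ [η, 1−η] for all i and ŵ_i(1 − ŵ_i) ≥ η(1−η)/2 for all i, there is a constant K depending only on η, c, C (not on n, X, x̄, w, ŵ) such that | n x̄ᵀ (Xᵀ diag(w_i(1−w_i)) X)⁻¹ x̄ − n x̄ᵀ (Xᵀ diag(ŵ_i(1−ŵ_i)) X)⁻¹ x̄ | ≤ K · max_i |ŵ_i − w_i|. -/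
open Matrix Set

private lemma quadId {n d : ℕ} (X : Matrix (Fin n) (Fin d) ℝ) (dv : Fin n → ℝ)
    (a b : Fin d → ℝ) :
    a ⬝ᵥ (Xᵀ * Matrix.diagonal dv * X) *ᵥ b
      = ∑ i, dv i * ((X *ᵥ a) i * (X *ᵥ b) i) := by
  rw [Matrix.mul_assoc, ← mulVec_mulVec, ← mulVec_mulVec, dotProduct_mulVec, vecMul_transpose]
  simp only [dotProduct, mulVec_diagonal]
  exact Finset.sum_congr rfl fun i _ => by ring

private lemma quadXX {n d : ℕ} (X : Matrix (Fin n) (Fin d) ℝ) (a : Fin d → ℝ) :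
    a ⬝ᵥ (Xᵀ * X) *ᵥ a = ∑ i, (X *ᵥ a) i * (X *ᵥ a) i := by
  have h := quadId X (fun _ => 1) a a
  simpa [Matrix.diagonal_one] using h

private lemma key {n d : ℕ} (X : Matrix (Fin n) (Fin d) ℝ) (dv : Fin n → ℝ)
    {γ nc C : ℝ} (hγ : 0 < γ) (hnc : 0 < nc) (hC : 0 < C)
    (hdv : ∀ i, γ ≤ dv i)
    (hXX : ∀ y : Fin d → ℝ, nc * (y ⬝ᵥ y) ≤ y ⬝ᵥ (Xᵀ * X) *ᵥ y)
    (xbar : Fin d → ℝ) (hxbar : xbar ⬝ᵥ xbar ≤ C) :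
    ∃ u : Fin d → ℝ,
      (Xᵀ * Matrix.diagonal dv * X) *ᵥ u = xbar ∧
      ((Xᵀ * Matrix.diagonal dv * X)⁻¹) *ᵥ xbar = u ∧
      ∑ i, (X *ᵥ u) i * (X *ᵥ u) i ≤ C / (γ * γ * nc) := by
  set M := Xᵀ * Matrix.diagonal dv * X with hM
  have hlow : ∀ y : Fin d → ℝ, γ * (nc * (y ⬝ᵥ y)) ≤ y ⬝ᵥ M *ᵥ y := by
    intro y
    have h1 : γ * (y ⬝ᵥ (Xᵀ * X) *ᵥ y) ≤ y ⬝ᵥ M *ᵥ y := by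
      rw [quadId, quadXX, Finset.mul_sum]
      refine Finset.sum_le_sum fun i _ => ?_
      exact mul_le_mul_of_nonneg_right (hdv i) (mul_self_nonneg _)
    have h2 : nc * (y ⬝ᵥ y) ≤ y ⬝ᵥ (Xᵀ * X) *ᵥ y := hXX y
    nlinarith [h2, h1]
  have hdotself : ∀ y : Fin d → ℝ, 0 ≤ y ⬝ᵥ y :=
    fun y => Finset.sum_nonneg fun i _ => mul_self_nonneg _
  have hPD : M.PosDef := by
    rw [posDef_iff_dotProduct_mulVec]
    constructor
    · rw [hM]
      have hX : Xᴴ = Xᵀ := conjTranspose_eq_transpose_of_trivial X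
      have := isHermitian_conjTranspose_mul_mul X (isHermitian_diagonal dv)
      rwa [hX] at this
    · intro x hx
      have hst : star x = x := funext fun i => star_trivial _
      rw [hst]
      have h1 := hlow x
      have h2 : 0 < x ⬝ᵥ x :=
        lt_of_le_of_ne (hdotself x) (fun h => hx (dotProduct_self_eq_zero.mp h.symm))
      have : 0 < γ * (nc * (x ⬝ᵥ x)) := by positivity
      linarith
  have hunit : IsUnit M.det := isUnit_iff_ne_zero.mpr hPD.det_pos.ne'
  refine ⟨M⁻¹ *ᵥ xbar, ?_, rfl, ?_⟩
  · rw [mulVec_mulVec, Matrix.mul_nonsing_inv M hunit, one_mulVec]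
  · set u := M⁻¹ *ᵥ xbar with hu
    have hMu : M *ᵥ u = xbar := by
      rw [hu, mulVec_mulVec, Matrix.mul_nonsing_inv M hunit, one_mulVec]
    set q := u ⬝ᵥ xbar with hq
    have h1 : γ * nc * (u ⬝ᵥ u) ≤ q := by
      have := hlow u
      rw [hMu] at this; rw [hq]; nlinarith [this]
    have hq0 : 0 ≤ q := le_trans (mul_nonneg (by positivity) (hdotself u)) h1
    have hCS : q ^ 2 ≤ (u ⬝ᵥ u) * (xbar ⬝ᵥ xbar) := by
      have := Finset.sum_mul_sq_le_sq_mul_sq Finset.univ u xbar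
      simp only [dotProduct, hq, sq]
      calc (∑ i, u i * xbar i) * (∑ i, u i * xbar i)
          = (∑ i, u i * xbar i) ^ 2 := by ring
        _ ≤ (∑ i, u i ^ 2) * ∑ i, xbar i ^ 2 := this
        _ = (∑ i, u i * u i) * ∑ i, xbar i * xbar i := by
            simp [sq]
    have hqb : q ≤ C / (γ * nc) := by
      rw [le_div_iff₀ (by positivity)]
      have h2 : q ^ 2 ≤ (u ⬝ᵥ u) * C :=
        le_trans hCS (mul_le_mul_of_nonneg_left hxbar (hdotself u))
      rcases eq_or_lt_of_le hq0 with h | h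
      · rw [← h, zero_mul]; exact hC.le
      · have e1 : γ * nc * (u ⬝ᵥ u) * C ≤ q * C := mul_le_mul_of_nonneg_right h1 hC.le
        have e2 : γ * nc * q ^ 2 ≤ γ * nc * (u ⬝ᵥ u * C) :=
          mul_le_mul_of_nonneg_left h2 (by positivity)
        nlinarith [e1, e2, h]
    have hsum : γ * (∑ i, (X *ᵥ u) i * (X *ᵥ u) i) ≤ q := by
      have h1' : γ * (∑ i, (X *ᵥ u) i * (X *ᵥ u) i)
          ≤ ∑ i, dv i * ((X *ᵥ u) i * (X *ᵥ u) i) := by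
        rw [Finset.mul_sum]
        exact Finset.sum_le_sum fun i _ =>
          mul_le_mul_of_nonneg_right (hdv i) (mul_self_nonneg _)
      have h2' : u ⬝ᵥ M *ᵥ u = q := by rw [hMu]
      rw [quadId] at h2'
      linarith [h1', h2'.le, h2'.ge]
    rw [le_div_iff₀ (by positivity)]
    calc (∑ i, (X *ᵥ u) i * (X *ᵥ u) i) * (γ * γ * nc)
        = (γ * (∑ i, (X *ᵥ u) i * (X *ᵥ u) i)) * (γ * nc) := by ring
      _ ≤ (C / (γ * nc)) * (γ * nc) :=
          mul_le_mul_of_nonneg_right (le_trans hsum hqb) (by positivity)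
      _ = C := by field_simp

/-- uniform Lipschitz-type bound, with constant depending only on
`η, c, C`, between the oracle and plug-in approximate variance criteria. -/
theorem stmt_15 (d : ℕ) (η c C : ℝ) (hη : η ∈ Ioo (0:ℝ) (1/2)) (hc : 0 < c) (hC : 0 < C)
    (nstar : ℕ) (hnstar : d ≤ nstar) :
    ∃ K : ℝ, ∀ n : ℕ, nstar ≤ n → ∀ X : Matrix (Fin n) (Fin d) ℝ,
      (∀ i, ∑ j, (X i j)^2 ≤ C) →
      (Xᵀ * X - ((n : ℝ) * c) • (1 : Matrix (Fin d) (Fin d) ℝ)).PosSemidef →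
      ∀ xbar : Fin d → ℝ, (∑ j, (xbar j)^2 ≤ C) →
      ∀ w wh : Fin n → ℝ, (∀ i, w i ∈ Icc η (1 - η)) →
      (∀ i, wh i ∈ Icc (0:ℝ) 1) →
      (∀ i, η * (1 - η) / 2 ≤ wh i * (1 - wh i)) →
      |(n : ℝ) * (xbar ⬝ᵥ ((Xᵀ * Matrix.diagonal (fun i => w i * (1 - w i)) * X)⁻¹).mulVec xbar)
        - (n : ℝ) * (xbar ⬝ᵥ ((Xᵀ * Matrix.diagonal (fun i => wh i * (1 - wh i)) * X)⁻¹).mulVec xbar)|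
        ≤ K * ⨆ i : Fin n, |wh i - w i| := by
  obtain ⟨hη0, hη2⟩ := hη
  set γ : ℝ := η * (1 - η) / 2 with hγdef
  have hγ : 0 < γ := by rw [hγdef]; nlinarith
  refine ⟨C / (γ ^ 2 * c), ?_⟩
  intro n hn X hX hPS xbar hxbar w wh hw hwh hwh2
  set s : ℝ := ⨆ i : Fin n, |wh i - w i| with hs
  have hbdd : BddAbove (Set.range fun i : Fin n => |wh i - w i|) :=
    Set.Finite.bddAbove (Set.finite_range _)
  have hs0 : 0 ≤ s := Real.iSup_nonneg fun i => abs_nonneg _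
  have hK0 : 0 ≤ C / (γ ^ 2 * c) := by positivity
  rcases Nat.eq_zero_or_pos n with hn0 | hnpos
  · subst hn0
    simp only [Nat.cast_zero, zero_mul, sub_zero, abs_zero]
    exact mul_nonneg hK0 hs0
  · have hnR : (0:ℝ) < (n:ℝ) := by exact_mod_cast hnpos
    have hnc : 0 < (n:ℝ) * c := by positivity
    have hXX : ∀ y : Fin d → ℝ, (n:ℝ) * c * (y ⬝ᵥ y) ≤ y ⬝ᵥ (Xᵀ * X) *ᵥ y := by
      intro y
      have h0 := hPS.dotProduct_mulVec_nonneg y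
      have hst : star y = y := funext fun i => star_trivial _
      rw [hst, sub_mulVec, dotProduct_sub, smul_mulVec, one_mulVec,
        dotProduct_smul, smul_eq_mul] at h0
      linarith
    have hxbar' : xbar ⬝ᵥ xbar ≤ C := by
      simpa [dotProduct, sq] using hxbar
    have hDw : ∀ i, γ ≤ w i * (1 - w i) := by
      intro i
      obtain ⟨h1, h2⟩ := hw i
      rw [hγdef]; nlinarith
    obtain ⟨u, hAu, hAinv, hSu⟩ :=
      key X (fun i => w i * (1 - w i)) hγ hnc hC hDw hXX xbar hxbar'
    obtain ⟨v, hBv, hBinv, hSv⟩ :=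
      key X (fun i => wh i * (1 - wh i)) hγ hnc hC hwh2 hXX xbar hxbar'
    rw [show ((Xᵀ * Matrix.diagonal (fun i => w i * (1 - w i)) * X)⁻¹).mulVec xbar = u
        from hAinv,
      show ((Xᵀ * Matrix.diagonal (fun i => wh i * (1 - wh i)) * X)⁻¹).mulVec xbar = v
        from hBinv]
    have e1 : xbar ⬝ᵥ u = ∑ i, (wh i * (1 - wh i)) * ((X *ᵥ u) i * (X *ᵥ v) i) := by
      calc xbar ⬝ᵥ u = u ⬝ᵥ xbar := dotProduct_comm _ _
        _ = u ⬝ᵥ (Xᵀ * Matrix.diagonal (fun i => wh i * (1 - wh i)) * X) *ᵥ v := by rw [hBv]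
        _ = _ := quadId X _ u v
    have e2 : xbar ⬝ᵥ v = ∑ i, (w i * (1 - w i)) * ((X *ᵥ u) i * (X *ᵥ v) i) := by
      calc xbar ⬝ᵥ v = (((Xᵀ * Matrix.diagonal (fun i => w i * (1 - w i)) * X)) *ᵥ u) ⬝ᵥ v := by
            rw [hAu]
        _ = v ⬝ᵥ (Xᵀ * Matrix.diagonal (fun i => w i * (1 - w i)) * X) *ᵥ u :=
            dotProduct_comm _ _
        _ = ∑ i, (w i * (1 - w i)) * ((X *ᵥ v) i * (X *ᵥ u) i) := quadId X _ v u
        _ = _ := Finset.sum_congr rfl fun i _ => by ring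
    have hterm : ∀ i, |wh i * (1 - wh i) - w i * (1 - w i)| ≤ s := by
      intro i
      have hrw : wh i * (1 - wh i) - w i * (1 - w i)
          = (wh i - w i) * (1 - wh i - w i) := by ring
      rw [hrw, abs_mul]
      obtain ⟨ha1, ha2⟩ := hw i
      obtain ⟨hb1, hb2⟩ := hwh i
      have h2 : |1 - wh i - w i| ≤ 1 := abs_le.mpr ⟨by linarith, by linarith⟩
      calc |wh i - w i| * |1 - wh i - w i| ≤ |wh i - w i| * 1 :=
            mul_le_mul_of_nonneg_left h2 (abs_nonneg _)
        _ = |wh i - w i| := mul_one _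
        _ ≤ s := le_ciSup hbdd i
    set R : ℝ := C / (γ * γ * ((n:ℝ) * c)) with hR
    have hR0 : 0 < R := by rw [hR]; positivity
    have hT : (∑ i, |(X *ᵥ u) i| * |(X *ᵥ v) i|) ≤ R := by
      set T : ℝ := ∑ i, |(X *ᵥ u) i| * |(X *ᵥ v) i| with hT'
      have hT0 : 0 ≤ T :=
        Finset.sum_nonneg fun i _ => mul_nonneg (abs_nonneg _) (abs_nonneg _)
      have hTsq : T ^ 2 ≤ R ^ 2 := by
        have hcs := Finset.sum_mul_sq_le_sq_mul_sq Finset.univ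
          (fun i => |(X *ᵥ u) i|) (fun i => |(X *ᵥ v) i|)
        have hu2 : (∑ i, |(X *ᵥ u) i| ^ 2) = ∑ i, (X *ᵥ u) i * (X *ᵥ u) i := by
          refine Finset.sum_congr rfl fun i _ => by rw [sq_abs]; ring
        have hv2 : (∑ i, |(X *ᵥ v) i| ^ 2) = ∑ i, (X *ᵥ v) i * (X *ᵥ v) i := by
          refine Finset.sum_congr rfl fun i _ => by rw [sq_abs]; ring
        rw [hu2, hv2] at hcs
        have hsu0 : 0 ≤ ∑ i, (X *ᵥ u) i * (X *ᵥ u) i :=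
          Finset.sum_nonneg fun i _ => mul_self_nonneg _
        have hsv0 : 0 ≤ ∑ i, (X *ᵥ v) i * (X *ᵥ v) i :=
          Finset.sum_nonneg fun i _ => mul_self_nonneg _
        calc T ^ 2 ≤ (∑ i, (X *ᵥ u) i * (X *ᵥ u) i) * ∑ i, (X *ᵥ v) i * (X *ᵥ v) i := hcs
          _ ≤ R * R := mul_le_mul hSu hSv hsv0 hR0.le
          _ = R ^ 2 := by ring
      nlinarith [hT0, hR0, hTsq]
    have hdiff : |xbar ⬝ᵥ u - xbar ⬝ᵥ v| ≤ s * R := by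
      rw [e1, e2, ← Finset.sum_sub_distrib]
      calc |∑ i, ((wh i * (1 - wh i)) * ((X *ᵥ u) i * (X *ᵥ v) i)
              - (w i * (1 - w i)) * ((X *ᵥ u) i * (X *ᵥ v) i))|
          ≤ ∑ i, |(wh i * (1 - wh i)) * ((X *ᵥ u) i * (X *ᵥ v) i)
              - (w i * (1 - w i)) * ((X *ᵥ u) i * (X *ᵥ v) i)| :=
            Finset.abs_sum_le_sum_abs _ _
        _ ≤ ∑ i, s * (|(X *ᵥ u) i| * |(X *ᵥ v) i|) := by
            refine Finset.sum_le_sum fun i _ => ?_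
            have : (wh i * (1 - wh i)) * ((X *ᵥ u) i * (X *ᵥ v) i)
                - (w i * (1 - w i)) * ((X *ᵥ u) i * (X *ᵥ v) i)
                = (wh i * (1 - wh i) - w i * (1 - w i)) * ((X *ᵥ u) i * (X *ᵥ v) i) := by
              ring
            rw [this, abs_mul, abs_mul]
            exact mul_le_mul_of_nonneg_right (hterm i)
              (mul_nonneg (abs_nonneg _) (abs_nonneg _))
        _ = s * ∑ i, |(X *ᵥ u) i| * |(X *ᵥ v) i| := by rw [Finset.mul_sum]
        _ ≤ s * R := mul_le_mul_of_nonneg_left hT hs0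
    have hfinal : (n:ℝ) * (s * R) = C / (γ ^ 2 * c) * s := by
      rw [hR]; field_simp
    calc |(n:ℝ) * (xbar ⬝ᵥ u) - (n:ℝ) * (xbar ⬝ᵥ v)|
        = (n:ℝ) * |xbar ⬝ᵥ u - xbar ⬝ᵥ v| := by
          rw [← mul_sub, abs_mul, abs_of_nonneg hnR.le]
      _ ≤ (n:ℝ) * (s * R) := mul_le_mul_of_nonneg_left hdiff hnR.le
      _ = C / (γ ^ 2 * c) * s := hfinal
end

section
/- Fix d ∈ ℕ, constants η ∈ (0, 1/2), c, C > 0, and n* ≥ d. There exists a constant K depending only on η, c, C, d such that the following holds for every n ≥ n*: for every X ∈ ℝ^{n×d} with rows satisfying ‖X_i‖₂² ≤ C and Xᵀ X ⪰ n c I_d, every x̄ ∈ ℝ^d with ‖x̄‖₂² ≤ C, and every w ∈ [η, 1−η]^n, if W = (W_1, …, W_n) is a random vector whose entries are independent with W_i ~ Bernoulli(w_i), and D = diag(W_i − w_i), then | n x̄ᵀ E[(Xᵀ D² X)⁻¹] x̄ − n x̄ᵀ (Xᵀ diag(w_i(1−w_i)) X)⁻¹ x̄ | ≤ K n^{−1/2}.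 (Here Xᵀ D² X ⪰ n η² c I_d always holds, so the inverse inside the expectation is well defined, and E[Xᵀ D² X] = Xᵀ diag(w_i(1−w_i)) X.) -/
open Matrix Set MeasureTheory ProbabilityTheory

/- ============ auxiliary lemmas ============ -/

lemma s16_entry {n d : ℕ} (X : Matrix (Fin n) (Fin d) ℝ) (v : Fin n → ℝ) (j k : Fin d) :
    (Xᵀ * diagonal v * X) j k = ∑ i, v i * (X i j * X i k) := by
  rw [Matrix.mul_apply]
  refine Finset.sum_congr rfl fun i _ => ?_
  rw [Matrix.mul_diagonal, Matrix.transpose_apply]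
  ring

lemma s16_mulVec {n d : ℕ} (X : Matrix (Fin n) (Fin d) ℝ) (v : Fin n → ℝ) (u : Fin d → ℝ)
    (j : Fin d) :
    ((Xᵀ * diagonal v * X).mulVec u) j = ∑ i, v i * (X i j * X.mulVec u i) := by
  rw [Matrix.mulVec, dotProduct]
  simp_rw [s16_entry, Finset.sum_mul]
  rw [Finset.sum_comm]
  refine Finset.sum_congr rfl fun i _ => ?_
  rw [Matrix.mulVec, dotProduct, Finset.mul_sum, Finset.mul_sum]
  refine Finset.sum_congr rfl fun k' _ => by ring

lemma s16_quad {n d : ℕ} (X : Matrix (Fin n) (Fin d) ℝ) (v : Fin n → ℝ) (x : Fin d → ℝ) :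
    x ⬝ᵥ (Xᵀ * diagonal v * X).mulVec x = ∑ i, v i * (X.mulVec x i)^2 := by
  rw [dotProduct]
  simp_rw [s16_mulVec, Finset.mul_sum]
  rw [Finset.sum_comm]
  refine Finset.sum_congr rfl fun i _ => ?_
  rw [sq, Matrix.mulVec, dotProduct, Finset.sum_mul, Finset.mul_sum]
  refine Finset.sum_congr rfl fun k' _ => by ring

lemma s16_dot_expand {d : ℕ} (u y : Fin d → ℝ) (M : Matrix (Fin d) (Fin d) ℝ) :
    u ⬝ᵥ M.mulVec y = ∑ j, ∑ k, u j * (M j k * y k) := by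
  rw [dotProduct]
  exact Finset.sum_congr rfl fun j _ => by rw [Matrix.mulVec, dotProduct, Finset.mul_sum]

lemma s16_isUnit {d : ℕ} {M : Matrix (Fin d) (Fin d) ℝ} {m : ℝ} (hm : 0 < m)
    (hlb : ∀ x : Fin d → ℝ, m * (∑ j, x j ^ 2) ≤ x ⬝ᵥ M.mulVec x) : IsUnit M.det := by
  rw [← Matrix.isUnit_iff_isUnit_det, ← Matrix.mulVec_injective_iff_isUnit]
  intro x y hxy
  have h0 : M.mulVec (x - y) = 0 := by
    rw [Matrix.mulVec_sub, hxy, sub_self]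
  have h2 := hlb (x - y)
  rw [h0, dotProduct_zero] at h2
  have hsum : ∑ j, (x - y) j ^ 2 ≤ 0 := by nlinarith
  have hz : x - y = 0 := by
    funext j
    have h1 : (x-y) j ^2 ≤ 0 := by
      have h3 : (x - y) j ^ 2 ≤ ∑ j', (x - y) j' ^ 2 :=
        Finset.single_le_sum (f := fun j => (x - y) j ^ 2)
          (fun j _ => sq_nonneg _) (Finset.mem_univ j)
      linarith
    have := sq_nonneg ((x-y) j)
    have : (x-y) j ^ 2 = 0 := le_antisymm h1 this
    exact pow_eq_zero_iff (by norm_num) |>.mp this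
  exact sub_eq_zero.mp hz

lemma s16_inv_apply {d : ℕ} {M : Matrix (Fin d) (Fin d) ℝ} {m : ℝ} (hm : 0 < m)
    (hlb : ∀ x : Fin d → ℝ, m * (∑ j, x j ^ 2) ≤ x ⬝ᵥ M.mulVec x) (z : Fin d → ℝ) :
    M.mulVec (M⁻¹.mulVec z) = z := by
  rw [Matrix.mulVec_mulVec, Matrix.mul_nonsing_inv _ (s16_isUnit hm hlb), Matrix.one_mulVec]

lemma s16_inv_sq {d : ℕ} {M : Matrix (Fin d) (Fin d) ℝ} {m : ℝ} (hm : 0 < m)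
    (hlb : ∀ x : Fin d → ℝ, m * (∑ j, x j ^ 2) ≤ x ⬝ᵥ M.mulVec x) (z : Fin d → ℝ) :
    m^2 * ∑ j, (M⁻¹.mulVec z) j ^ 2 ≤ ∑ j, z j ^ 2 := by
  set y := M⁻¹.mulVec z with hy
  have h1 : m * (∑ j, y j ^ 2) ≤ y ⬝ᵥ z := by
    have := hlb y
    rwa [s16_inv_apply hm hlb] at this
  have hcs : (y ⬝ᵥ z)^2 ≤ (∑ j, y j ^2) * ∑ j, z j ^2 := by
    rw [dotProduct]
    exact Finset.sum_mul_sq_le_sq_mul_sq _ _ _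
  set a := ∑ j, y j ^ 2 with ha
  have ha0 : 0 ≤ a := Finset.sum_nonneg fun j _ => sq_nonneg _
  set b := ∑ j, z j ^ 2 with hb
  have hb0 : 0 ≤ b := Finset.sum_nonneg fun j _ => sq_nonneg _
  rcases eq_or_lt_of_le ha0 with h | h
  · nlinarith
  · nlinarith [sq_nonneg (y ⬝ᵥ z), mul_pos hm h]

lemma s16_cs {d : ℕ} (u y : Fin d → ℝ) :
    |u ⬝ᵥ y| ≤ Real.sqrt (∑ j, u j ^2) * Real.sqrt (∑ j, y j ^2) := by
  have h := Finset.sum_mul_sq_le_sq_mul_sq Finset.univ u y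
  have h2 : |u ⬝ᵥ y| = Real.sqrt ((u ⬝ᵥ y)^2) := (Real.sqrt_sq_eq_abs _).symm
  rw [h2, ← Real.sqrt_mul (Finset.sum_nonneg fun j _ => sq_nonneg _)]
  exact Real.sqrt_le_sqrt (by simpa [dotProduct] using h)

lemma s16_inv_dot {d : ℕ} {M : Matrix (Fin d) (Fin d) ℝ} {m : ℝ} (hm : 0 < m)
    (hlb : ∀ x : Fin d → ℝ, m * (∑ j, x j ^ 2) ≤ x ⬝ᵥ M.mulVec x) (u z : Fin d → ℝ) :
    |u ⬝ᵥ M⁻¹.mulVec z| ≤ Real.sqrt (∑ j, u j ^2) * Real.sqrt (∑ j, z j ^2) / m := by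
  have hsq := s16_inv_sq hm hlb z
  refine (s16_cs u _).trans ?_
  rw [div_eq_mul_inv, mul_assoc]
  refine mul_le_mul_of_nonneg_left ?_ (Real.sqrt_nonneg _)
  have hy : ∑ j, (M⁻¹.mulVec z) j ^ 2 ≤ (∑ j, z j ^ 2) / m^2 := by
    rw [le_div_iff₀ (by positivity)]; linarith
  refine (Real.sqrt_le_sqrt hy).trans ?_
  rw [Real.sqrt_div (Finset.sum_nonneg fun j _ => sq_nonneg _), Real.sqrt_sq hm.le]
  ring_nf
  exact le_refl _

lemma s16_inv_sub_inv {d : ℕ} {A B : Matrix (Fin d) (Fin d) ℝ}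
    (hA : IsUnit A.det) (hB : IsUnit B.det) :
    A⁻¹ - B⁻¹ = A⁻¹ * (B - A) * B⁻¹ := by
  rw [Matrix.mul_sub, Matrix.sub_mul, Matrix.mul_assoc, Matrix.mul_nonsing_inv _ hB,
    Matrix.nonsing_inv_mul _ hA, Matrix.mul_one, Matrix.one_mul]

lemma s16_meas_det {d : ℕ} {Ω : Type} [MeasurableSpace Ω] {M : Ω → Matrix (Fin d) (Fin d) ℝ}
    (h : ∀ j k, Measurable fun ω => M ω j k) : Measurable fun ω => (M ω).det := by
  simp only [Matrix.det_apply, Units.smul_def, zsmul_eq_mul]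
  exact Finset.measurable_sum _ fun σ _ =>
    (measurable_const.mul (Finset.measurable_prod _ fun i _ => h _ _))

lemma s16_meas_inv {d : ℕ} {Ω : Type} [MeasurableSpace Ω] {M : Ω → Matrix (Fin d) (Fin d) ℝ}
    (h : ∀ j k, Measurable fun ω => M ω j k) (j k : Fin d) :
    Measurable fun ω => (M ω)⁻¹ j k := by
  simp only [Matrix.inv_def, Matrix.smul_apply, Matrix.adjugate_apply, smul_eq_mul,
    Ring.inverse_eq_inv']
  refine ((s16_meas_det h).inv).mul (s16_meas_det (fun a b => ?_))
  simp only [Matrix.updateRow_apply]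
  by_cases hak : a = k
  · simp [hak]
  · simp [hak]; exact h a b

lemma s16_integrable {Ω : Type} [MeasurableSpace Ω] {μ : Measure Ω} [IsProbabilityMeasure μ]
    {f : Ω → ℝ} (hf : Measurable f) {c : ℝ} (hb : ∀ ω, |f ω| ≤ c) : Integrable f μ :=
  (integrable_const c).mono' hf.aestronglyMeasurable
    (ae_of_all _ (by simpa [Real.norm_eq_abs] using hb))

lemma s16_EW {Ω : Type} [MeasurableSpace Ω] {μ : Measure Ω} [IsProbabilityMeasure μ]
    {f : Ω → ℝ} (hf : Measurable f) (h01 : ∀ ω, f ω = 0 ∨ f ω = 1) {p : ℝ} (hp : 0 ≤ p)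
    (hμ : μ {ω | f ω = 1} = ENNReal.ofReal p) : ∫ ω, f ω ∂μ = p := by
  have hset : MeasurableSet {ω | f ω = 1} := hf (measurableSet_singleton 1)
  have hind : f = Set.indicator {ω | f ω = 1} 1 := by
    funext ω
    rcases h01 ω with h | h
    · rw [h, Set.indicator_apply, if_neg (by simp [h])]
    · rw [h, Set.indicator_apply, if_pos (by simpa using h)]; rfl
  rw [hind, MeasureTheory.integral_indicator_one hset, measureReal_def, hμ, ENNReal.toReal_ofReal hp]

lemma s16_single_dot {d : ℕ} (M : Matrix (Fin d) (Fin d) ℝ) (j k : Fin d) :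
    (Pi.single j 1 : Fin d → ℝ) ⬝ᵥ M.mulVec (Pi.single k 1) = M j k := by
  simp [dotProduct, Matrix.mulVec, Pi.single_apply, Finset.sum_ite_eq',
    mul_ite, ite_mul, Finset.mul_sum]

lemma s16_single_sq {d : ℕ} (j : Fin d) :
    (∑ j' : Fin d, (Pi.single j 1 : Fin d → ℝ) j' ^ 2) = 1 := by
  simp [Pi.single_apply, ite_pow, Finset.sum_ite_eq']

set_option maxHeartbeats 2000000 in
theorem stmt_16 (d : ℕ) (η c C : ℝ) (hη : η ∈ Ioo (0:ℝ) (1/2)) (hc : 0 < c) (hC : 0 < C)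
    (nstar : ℕ) (hnstar : d ≤ nstar) :
    ∃ K : ℝ, ∀ n : ℕ, nstar ≤ n →
      ∀ X : Matrix (Fin n) (Fin d) ℝ, (∀ i, ∑ j, (X i j)^2 ≤ C) →
      (Xᵀ * X - ((n : ℝ) * c) • (1 : Matrix (Fin d) (Fin d) ℝ)).PosSemidef →
      ∀ xbar : Fin d → ℝ, (∑ j, (xbar j)^2 ≤ C) →
      ∀ w : Fin n → ℝ, (∀ i, w i ∈ Icc η (1 - η)) →
      ∀ (Ω : Type) (mΩ : MeasurableSpace Ω) (μ : Measure Ω), IsProbabilityMeasure μ →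
      ∀ W : Fin n → Ω → ℝ,
        (∀ i, Measurable (W i)) →
        (∀ i ω, W i ω = 0 ∨ W i ω = 1) →
        (∀ i, μ {ω | W i ω = 1} = ENNReal.ofReal (w i)) →
        iIndepFun W μ →
        |(n : ℝ) * (xbar ⬝ᵥ (Matrix.of (fun j k : Fin d =>
              ∫ ω, ((Xᵀ * Matrix.diagonal (fun i => (W i ω - w i)^2) * X)⁻¹) j k ∂μ)).mulVec xbar)
          - (n : ℝ) * (xbar ⬝ᵥ ((Xᵀ * Matrix.diagonal (fun i => w i * (1 - w i)) * X)⁻¹).mulVec xbar)|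
          ≤ K / Real.sqrt n := by
  obtain ⟨hη0, hη2⟩ := hη
  refine ⟨C^2 / (η^4 * c^2), ?_⟩
  intro n hn X hX hXX xbar hxbar w hw Ω mΩ μ hμ W hWmeas hW01 hWp hWindep
  have hK0 : (0:ℝ) ≤ C^2/(η^4*c^2) := by positivity
  by_cases hd : d = 0
  · subst hd
    have hz : ∀ v : Fin 0 → ℝ, xbar ⬝ᵥ v = 0 := fun v => by
      simp [dotProduct]
    rw [hz, hz]
    simpa using div_nonneg hK0 (Real.sqrt_nonneg _)
  -- main case
  have hd1 : 1 ≤ d := Nat.one_le_iff_ne_zero.mpr hd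
  have hn1 : 1 ≤ n := le_trans (le_trans hd1 hnstar) hn
  have hnR : (0:ℝ) < n := by exact_mod_cast hn1
  set m : ℝ := n * (η^2 * c) with hm_def
  have hm : 0 < m := by positivity
  -- quadratic lower bound machinery
  have hXXq : ∀ x : Fin d → ℝ, (n:ℝ) * c * (∑ j, x j ^2) ≤ ∑ i, (X.mulVec x i)^2 := by
    intro x
    have h3 := hXX.dotProduct_mulVec_nonneg x
    have h4 : x ⬝ᵥ (Xᵀ * X).mulVec x = ∑ i, (X.mulVec x i)^2 := by
      have h5 := s16_quad X (fun _ => 1) x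
      simp only [Matrix.diagonal_one, Matrix.mul_one, one_mul] at h5 ⊢
      rw [h5]
    simp only [Matrix.sub_mulVec, Matrix.smul_mulVec, Matrix.one_mulVec,
      dotProduct_sub, dotProduct_smul, smul_eq_mul, star_trivial] at h3
    have h6 : x ⬝ᵥ x = ∑ j, x j ^2 := by
      rw [dotProduct]; exact Finset.sum_congr rfl fun j _ => (sq (x j)).symm
    rw [h4, h6] at h3
    linarith
  have key_lb : ∀ v : Fin n → ℝ, (∀ i, η^2 ≤ v i) → ∀ x : Fin d → ℝ,
      m * (∑ j, x j ^2) ≤ x ⬝ᵥ (Xᵀ * diagonal v * X).mulVec x := by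
    intro v hv x
    rw [s16_quad]
    have h2 := hXXq x
    calc m * ∑ j, x j ^2 = η^2 * ((n*c) * ∑ j, x j^2) := by rw [hm_def]; ring
    _ ≤ η^2 * ∑ i, (X.mulVec x i)^2 := by
        refine mul_le_mul_of_nonneg_left ?_ (by positivity)
        calc (n:ℝ)*c * ∑ j, x j^2 = (n:ℝ) * c * ∑ j, x j^2 := by ring
        _ ≤ _ := h2
    _ ≤ ∑ i, v i * (X.mulVec x i)^2 := by
        rw [Finset.mul_sum]
        exact Finset.sum_le_sum fun i _ =>
          mul_le_mul_of_nonneg_right (hv i) (sq_nonneg _)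
  -- notation
  set A : Ω → Matrix (Fin d) (Fin d) ℝ :=
    fun ω => Xᵀ * diagonal (fun i => (W i ω - w i)^2) * X with hA_def
  set B : Matrix (Fin d) (Fin d) ℝ :=
    Xᵀ * diagonal (fun i => w i * (1 - w i)) * X with hB_def
  have hvA : ∀ ω i, η^2 ≤ (W i ω - w i)^2 := by
    intro ω i
    rcases hW01 i ω with h | h <;> rw [h] <;> nlinarith [(hw i).1, (hw i).2]
  have hvB : ∀ i, η^2 ≤ w i * (1 - w i) := by
    intro i; nlinarith [(hw i).1, (hw i).2]
  have hlbA : ∀ ω x, m * (∑ j, x j ^2) ≤ x ⬝ᵥ (A ω).mulVec x :=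
    fun ω => key_lb _ (hvA ω)
  have hlbB : ∀ x, m * (∑ j, x j ^2) ≤ x ⬝ᵥ B.mulVec x := key_lb _ hvB
  have hAunit : ∀ ω, IsUnit (A ω).det := fun ω => s16_isUnit hm (hlbA ω)
  have hBunit : IsUnit B.det := s16_isUnit hm hlbB
  set uB : Fin d → ℝ := B⁻¹.mulVec xbar with huB_def
  set r : Fin n → ℝ := X.mulVec uB with hr_def
  have huB_sq : ∑ j, uB j ^2 ≤ C / m^2 := by
    have h := s16_inv_sq hm hlbB xbar
    rw [le_div_iff₀ (by positivity)]
    calc (∑ j, uB j ^2) * m^2 = m^2 * ∑ j, uB j ^2 := by ring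
    _ ≤ ∑ j, xbar j ^2 := h
    _ ≤ C := hxbar
  have hr_sq : ∀ i, r i ^2 ≤ C * (C / m^2) := by
    intro i
    have hcs : r i ^2 ≤ (∑ k, X i k ^2) * ∑ k, uB k ^2 := by
      rw [hr_def, Matrix.mulVec, dotProduct]
      exact Finset.sum_mul_sq_le_sq_mul_sq _ _ _
    refine hcs.trans (mul_le_mul (hX i) huB_sq
      (Finset.sum_nonneg fun k _ => sq_nonneg _) hC.le)
  -- measurability & integrability of entries of (A ω)⁻¹
  have hAmeas : ∀ j k, Measurable fun ω => A ω j k := by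
    intro j k
    simp only [hA_def, s16_entry]
    exact Finset.measurable_sum _ fun i _ =>
      (((hWmeas i).sub_const (w i)).pow_const 2).mul_const _
  have hInvMeas : ∀ j k, Measurable fun ω => (A ω)⁻¹ j k := fun j k => s16_meas_inv hAmeas j k
  have hInvBd : ∀ ω j k, |(A ω)⁻¹ j k| ≤ 1 / m := by
    intro ω j k
    have h := s16_inv_dot hm (hlbA ω) (Pi.single j 1) (Pi.single k 1)
    rw [s16_single_dot, s16_single_sq, s16_single_sq, Real.sqrt_one, mul_one] at h
    exact h
  have hInvInt : ∀ j k, Integrable (fun ω => (A ω)⁻¹ j k) μ :=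
    fun j k => s16_integrable (hInvMeas j k) (fun ω => hInvBd ω j k)
  -- rewrite term 1 as an integral
  have hterm1 : (∫ ω, xbar ⬝ᵥ (A ω)⁻¹.mulVec xbar ∂μ)
      = xbar ⬝ᵥ (Matrix.of (fun j k : Fin d => ∫ ω, (A ω)⁻¹ j k ∂μ)).mulVec xbar := by
    simp_rw [s16_dot_expand xbar xbar]
    rw [MeasureTheory.integral_finset_sum _ (fun j _ =>
      integrable_finset_sum _ (fun k _ => ((hInvInt j k).mul_const (xbar k)).const_mul (xbar j)))]
    refine Finset.sum_congr rfl fun j _ => ?_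
    rw [MeasureTheory.integral_finset_sum _ (fun k _ =>
      ((hInvInt j k).mul_const (xbar k)).const_mul (xbar j))]
    refine Finset.sum_congr rfl fun k _ => ?_
    rw [MeasureTheory.integral_const_mul, MeasureTheory.integral_mul_const]
    rfl
  have hf1int : Integrable (fun ω => xbar ⬝ᵥ (A ω)⁻¹.mulVec xbar) μ := by
    have he : (fun ω => xbar ⬝ᵥ (A ω)⁻¹.mulVec xbar)
        = fun ω => ∑ j, ∑ k, xbar j * ((A ω)⁻¹ j k * xbar k) :=
      funext fun ω => s16_dot_expand _ _ _
    rw [he]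
    exact integrable_finset_sum _ fun j _ => integrable_finset_sum _ fun k _ =>
      ((hInvInt j k).mul_const _).const_mul _
  -- the centered random variables
  set ξ : Fin n → Ω → ℝ := fun i ω => w i * (1 - w i) - (W i ω - w i)^2 with hξ_def
  have hξbd : ∀ i ω, |ξ i ω| ≤ 1 := by
    intro i ω
    simp only [hξ_def, abs_le]
    rcases hW01 i ω with h | h <;> rw [h] <;>
      constructor <;> nlinarith [(hw i).1, (hw i).2, hη0, hη2]
  have hξmeas : ∀ i, Measurable (ξ i) := fun i =>
    measurable_const.sub (((hWmeas i).sub_const _).pow_const 2)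
  have hEξ : ∀ i, ∫ ω, ξ i ω ∂μ = 0 := by
    intro i
    have hWbd : ∀ ω, |W i ω| ≤ 1 := fun ω => by
      rcases hW01 i ω with h | h <;> simp [h]
    have hWint : Integrable (W i) μ := s16_integrable (hWmeas i) hWbd
    have hEW : ∫ ω, W i ω ∂μ = w i :=
      s16_EW (hWmeas i) (hW01 i) (le_trans hη0.le (hw i).1) (hWp i)
    have hsq : ∀ ω, (W i ω - w i)^2 = (1 - 2*w i) * W i ω + w i^2 := by
      intro ω; rcases hW01 i ω with h | h <;> rw [h] <;> ring
    have h1 : ∫ ω, (W i ω - w i)^2 ∂μ = w i * (1 - w i) := by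
      simp_rw [hsq]
      rw [MeasureTheory.integral_add (hWint.const_mul _) (integrable_const _),
        MeasureTheory.integral_const_mul, hEW, MeasureTheory.integral_const]
      simp [measure_univ]
      ring
    have h2 : Integrable (fun ω => (W i ω - w i)^2) μ := by
      refine s16_integrable (((hWmeas i).sub_const _).pow_const 2) (c := 1) (fun ω => ?_)
      rcases hW01 i ω with h | h <;> rw [h] <;>
        rw [abs_le] <;> constructor <;> nlinarith [(hw i).1, (hw i).2, hη0, hη2]
    rw [hξ_def]
    simp only
    rw [MeasureTheory.integral_sub (integrable_const _) h2, h1,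
      MeasureTheory.integral_const]
    simp [measure_univ]
  have hξint : ∀ i, Integrable (ξ i) μ := fun i => s16_integrable (hξmeas i) (hξbd i)
  -- second moment bound for each coordinate j
  have hSj : ∀ j : Fin d, (∫ ω, (∑ i, ξ i ω * (X i j * r i))^2 ∂μ) ≤ (∑ i, (X i j * r i)^2)
      ∧ Integrable (fun ω => (∑ i, ξ i ω * (X i j * r i))^2) μ := by
    intro j
    set Y : Fin n → Ω → ℝ := fun i ω => ξ i ω * (X i j * r i) with hY_def
    have hYmeas : ∀ i, Measurable (Y i) := fun i => (hξmeas i).mul_const _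
    have hYbd : ∀ i ω, |Y i ω| ≤ |X i j * r i| := by
      intro i ω
      rw [hY_def]
      simp only
      rw [abs_mul]
      calc |ξ i ω| * |X i j * r i| ≤ 1 * |X i j * r i| :=
        mul_le_mul_of_nonneg_right (hξbd i ω) (abs_nonneg _)
      _ = |X i j * r i| := one_mul _
    have hYmem : ∀ i, MemLp (Y i) 2 μ := fun i =>
      MemLp.of_bound (hYmeas i).aestronglyMeasurable _
        (ae_of_all _ (fun ω => by rw [Real.norm_eq_abs]; exact hYbd i ω))
    have hYint : ∀ i, Integrable (Y i) μ := fun i => (hYmem i).integrable one_le_two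
    have hEY : ∀ i, ∫ ω, Y i ω ∂μ = 0 := by
      intro i
      rw [hY_def]
      simp only
      rw [MeasureTheory.integral_mul_const, hEξ i, zero_mul]
    have hsum_mem : MemLp (∑ i, Y i) 2 μ := memLp_finset_sum' _ (fun i _ => hYmem i)
    have hindep : Set.Pairwise ↑(Finset.univ : Finset (Fin n))
        (fun i i' => IndepFun (Y i) (Y i') μ) := by
      intro i _ i' _ hii'
      have hg : ∀ i'' : Fin n, Measurable
          (fun x : ℝ => (w i'' * (1 - w i'') - (x - w i'')^2) * (X i'' j * r i'')) :=
        fun i'' => (measurable_const.sub ((measurable_id.sub_const _).pow_const 2)).mul_const _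
      exact (hWindep.indepFun hii').comp (hg i) (hg i')
    have hvar : variance (∑ i, Y i) μ = ∑ i, variance (Y i) μ :=
      IndepFun.variance_sum (fun i _ => hYmem i) hindep
    have hES : (∫ ω, (∑ i, Y i) ω ∂μ) = 0 := by
      have h1 : (∫ ω, (∑ i, Y i) ω ∂μ) = ∑ i, ∫ ω, Y i ω ∂μ := by
        simp_rw [Finset.sum_apply]
        exact MeasureTheory.integral_finset_sum _ (fun i _ => hYint i)
      rw [h1]
      simp [hEY]
    have hvarY : ∀ i, variance (Y i) μ ≤ (X i j * r i)^2 := by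
      intro i
      rw [variance_eq_sub (hYmem i)]
      have hb : ∀ ω, ((Y i)^2) ω ≤ (X i j * r i)^2 := by
        intro ω
        have h1 := hYbd i ω
        have h2 : ((Y i)^2) ω = Y i ω ^ 2 := rfl
        rw [h2]
        nlinarith [sq_abs (Y i ω), sq_abs (X i j * r i), abs_nonneg (Y i ω),
          abs_nonneg (X i j * r i)]
      have h3 : (∫ ω, ((Y i)^2) ω ∂μ) ≤ (X i j * r i)^2 := by
        calc (∫ ω, ((Y i)^2) ω ∂μ) ≤ ∫ _ω, (X i j * r i)^2 ∂μ :=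
          MeasureTheory.integral_mono (hYmem i).integrable_sq (integrable_const _) hb
        _ = (X i j * r i)^2 := by simp [measure_univ]
      have h4 : (0:ℝ) ≤ (∫ ω, Y i ω ∂μ)^2 := sq_nonneg _
      linarith
    have hkey : (∫ ω, ((∑ i, Y i)^2) ω ∂μ) = variance (∑ i, Y i) μ := by
      have h5 := variance_eq_sub hsum_mem
      have h6 : (∫ ω, (∑ i, Y i) ω ∂μ) = 0 := hES
      rw [h5, h6]
      ring
    constructor
    · have he1 : (fun ω => (∑ i, ξ i ω * (X i j * r i))^2) = (∑ i, Y i)^2 := by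
        funext ω
        simp [Finset.sum_apply, hY_def]
      calc (∫ ω, (∑ i, ξ i ω * (X i j * r i))^2 ∂μ) = (∫ ω, ((∑ i, Y i)^2) ω ∂μ) := by rw [← he1]
      _ = variance (∑ i, Y i) μ := hkey
      _ = ∑ i, variance (Y i) μ := hvar
      _ ≤ ∑ i, (X i j * r i)^2 := Finset.sum_le_sum fun i _ => hvarY i
    · have h7 := hsum_mem.integrable_sq
      have he2 : (fun ω => ((∑ i, Y i) ω)^2) = (fun ω => (∑ i, ξ i ω * (X i j * r i))^2) := by
        funext ω
        simp [Finset.sum_apply, hY_def]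
      rwa [he2] at h7
  -- the quadratic functional q
  set q : Ω → ℝ := fun ω => ∑ j, (∑ i, ξ i ω * (X i j * r i))^2 with hq_def
  have hq_nonneg : ∀ ω, 0 ≤ q ω := fun ω =>
    Finset.sum_nonneg fun j _ => sq_nonneg _
  have hq_int : Integrable q μ := by
    rw [hq_def]
    exact integrable_finset_sum _ (fun j _ => (hSj j).2)
  set V : ℝ := (n:ℝ) * (C * (C * (C/m^2))) with hV_def
  have hV : 0 < V := by positivity
  have hEq : ∫ ω, q ω ∂μ ≤ V := by
    rw [hq_def]
    rw [MeasureTheory.integral_finset_sum _ (fun j _ => (hSj j).2)]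
    calc (∑ j, ∫ ω, (∑ i, ξ i ω * (X i j * r i))^2 ∂μ)
        ≤ ∑ j, ∑ i, (X i j * r i)^2 := Finset.sum_le_sum fun j _ => (hSj j).1
    _ = ∑ i, (∑ j, X i j ^2) * r i ^2 := by
        rw [Finset.sum_comm]
        refine Finset.sum_congr rfl fun i _ => ?_
        rw [Finset.sum_mul]
        exact Finset.sum_congr rfl fun j _ => by ring
    _ ≤ ∑ _i : Fin n, C * (C * (C/m^2)) := by
        refine Finset.sum_le_sum fun i _ => ?_
        exact mul_le_mul (hX i) (hr_sq i) (sq_nonneg _) hC.le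
    _ = V := by
        rw [Finset.sum_const, Finset.card_univ, Fintype.card_fin, nsmul_eq_mul, hV_def]
  set s : ℝ := Real.sqrt V with hs_def
  have hs : 0 < s := Real.sqrt_pos.mpr hV
  have hs_sq : s^2 = V := Real.sq_sqrt hV.le
  have hsqrt_q : ∀ ω, Real.sqrt (q ω) ≤ q ω/(2*s) + s/2 := by
    intro ω
    have h0 : 0 ≤ q ω := hq_nonneg ω
    have h2 : Real.sqrt (q ω)^2 = q ω := Real.sq_sqrt h0
    have h4 : Real.sqrt (q ω) ≤ (q ω + s^2)/(2*s) := by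
      rw [le_div_iff₀ (by positivity)]
      nlinarith [sq_nonneg (Real.sqrt (q ω) - s)]
    have h5 : (q ω + s^2)/(2*s) = q ω/(2*s) + s/2 := by
      field_simp
    linarith
  -- pointwise identity and bound
  have hpoint : ∀ ω, xbar ⬝ᵥ (A ω)⁻¹.mulVec xbar - xbar ⬝ᵥ B⁻¹.mulVec xbar
      = xbar ⬝ᵥ (A ω)⁻¹.mulVec ((B - A ω).mulVec uB) := by
    intro ω
    rw [← dotProduct_sub, ← Matrix.sub_mulVec,
      s16_inv_sub_inv (hAunit ω) hBunit, ← Matrix.mulVec_mulVec, ← Matrix.mulVec_mulVec]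
  have hzq : ∀ ω, (∑ j, ((B - A ω).mulVec uB) j ^2) = q ω := by
    intro ω
    have hBA : B - A ω = Xᵀ * diagonal (fun i => ξ i ω) * X := by
      rw [hB_def, hA_def, hξ_def]
      ext j' k'
      simp only [Matrix.sub_apply, s16_entry]
      rw [← Finset.sum_sub_distrib]
      exact Finset.sum_congr rfl fun i _ => by ring
    rw [hq_def]
    refine Finset.sum_congr rfl fun j _ => ?_
    rw [hBA, s16_mulVec]
  have hDbd : ∀ ω, |xbar ⬝ᵥ (A ω)⁻¹.mulVec xbar - xbar ⬝ᵥ B⁻¹.mulVec xbar|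
      ≤ Real.sqrt C / m * (q ω/(2*s) + s/2) := by
    intro ω
    rw [hpoint ω]
    have h := s16_inv_dot hm (hlbA ω) xbar ((B - A ω).mulVec uB)
    have hx : Real.sqrt (∑ j, xbar j ^2) ≤ Real.sqrt C := Real.sqrt_le_sqrt hxbar
    calc |xbar ⬝ᵥ (A ω)⁻¹.mulVec ((B - A ω).mulVec uB)|
        ≤ Real.sqrt (∑ j, xbar j ^2) * Real.sqrt (∑ j, ((B - A ω).mulVec uB) j ^2) / m := h
    _ = Real.sqrt (∑ j, xbar j ^2) * Real.sqrt (q ω) / m := by rw [hzq]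
    _ ≤ Real.sqrt C * Real.sqrt (q ω) / m := by gcongr
    _ = Real.sqrt C / m * Real.sqrt (q ω) := by ring
    _ ≤ Real.sqrt C / m * (q ω/(2*s) + s/2) := by
        refine mul_le_mul_of_nonneg_left (hsqrt_q ω) (by positivity)
  -- assemble
  have goal_eq : (n : ℝ) * (xbar ⬝ᵥ (Matrix.of (fun j k : Fin d =>
        ∫ ω, (A ω)⁻¹ j k ∂μ)).mulVec xbar)
      - (n : ℝ) * (xbar ⬝ᵥ (B⁻¹).mulVec xbar)
      = ∫ ω, (n:ℝ) * (xbar ⬝ᵥ (A ω)⁻¹.mulVec xbar - xbar ⬝ᵥ B⁻¹.mulVec xbar) ∂μ := by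
    rw [MeasureTheory.integral_const_mul,
      MeasureTheory.integral_sub hf1int (integrable_const _), hterm1,
      MeasureTheory.integral_const]
    simp [measure_univ]
    ring
  have hHint : Integrable (fun ω => (n:ℝ) * (Real.sqrt C / m * (q ω/(2*s) + s/2))) μ :=
    (((hq_int.div_const _).add (integrable_const _)).const_mul _).const_mul _
  have hbound : |∫ ω, (n:ℝ) * (xbar ⬝ᵥ (A ω)⁻¹.mulVec xbar - xbar ⬝ᵥ B⁻¹.mulVec xbar) ∂μ|
      ≤ ∫ ω, (n:ℝ) * (Real.sqrt C / m * (q ω/(2*s) + s/2)) ∂μ := by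
    have hGint : Integrable
        (fun ω => (n:ℝ) * (xbar ⬝ᵥ (A ω)⁻¹.mulVec xbar - xbar ⬝ᵥ B⁻¹.mulVec xbar)) μ :=
      (hf1int.sub (integrable_const _)).const_mul _
    refine le_trans ?_ (MeasureTheory.integral_mono hGint.abs hHint (fun ω => ?_))
    · have h8 := MeasureTheory.norm_integral_le_integral_norm (μ := μ)
        (f := fun ω => (n:ℝ) * (xbar ⬝ᵥ (A ω)⁻¹.mulVec xbar - xbar ⬝ᵥ B⁻¹.mulVec xbar))
      simp only [Real.norm_eq_abs] at h8
      exact h8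
    · show |(n:ℝ) * (xbar ⬝ᵥ (A ω)⁻¹.mulVec xbar - xbar ⬝ᵥ B⁻¹.mulVec xbar)| ≤ _
      rw [abs_mul, abs_of_nonneg (le_of_lt hnR)]
      exact mul_le_mul_of_nonneg_left (hDbd ω) hnR.le
  have hIH : (∫ ω, (n:ℝ) * (Real.sqrt C / m * (q ω/(2*s) + s/2)) ∂μ)
      ≤ (n:ℝ) * (Real.sqrt C / m) * s := by
    have h1 : (∫ ω, (n:ℝ) * (Real.sqrt C / m * (q ω/(2*s) + s/2)) ∂μ)
        = (n:ℝ) * (Real.sqrt C / m) * ((∫ ω, q ω ∂μ)/(2*s) + s/2) := by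
      rw [MeasureTheory.integral_const_mul]
      rw [show (fun ω => Real.sqrt C / m * (q ω/(2*s) + s/2))
          = fun ω => Real.sqrt C / m * (q ω/(2*s) + s/2) from rfl]
      rw [MeasureTheory.integral_const_mul,
        MeasureTheory.integral_add (hq_int.div_const _) (integrable_const _),
        MeasureTheory.integral_div, MeasureTheory.integral_const]
      simp [measure_univ]
      ring
    rw [h1]
    have h2 : (∫ ω, q ω ∂μ)/(2*s) + s/2 ≤ s := by
      have h3 : (∫ ω, q ω ∂μ)/(2*s) ≤ s/2 := by
        rw [div_le_iff₀ (by positivity)]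
        nlinarith [hEq, hs_sq]
      linarith
    refine mul_le_mul_of_nonneg_left h2 (by positivity)
  have hfinal : (n:ℝ) * (Real.sqrt C / m) * s = C^2/(η^4*c^2) / Real.sqrt n := by
    have hs_eq : s = Real.sqrt (n:ℝ) * (C * Real.sqrt C) / m := by
      rw [hs_def]
      have hVeq : V = (Real.sqrt (n:ℝ) * (C * Real.sqrt C) / m)^2 := by
        rw [div_pow, mul_pow, mul_pow, Real.sq_sqrt hnR.le, Real.sq_sqrt hC.le, hV_def]
        field_simp
      rw [hVeq, Real.sqrt_sq (by positivity)]
    rw [hs_eq, hm_def]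
    have hCsq : Real.sqrt C * Real.sqrt C = C := Real.mul_self_sqrt hC.le
    have hnsq : Real.sqrt (n:ℝ) * Real.sqrt (n:ℝ) = (n:ℝ) := Real.mul_self_sqrt hnR.le
    have hsn : Real.sqrt (n:ℝ) ≠ 0 := by positivity
    field_simp
    linear_combination (Real.sqrt C * Real.sqrt C) * hnsq + (n:ℝ) * hCsq
  -- finish
  calc |(n : ℝ) * (xbar ⬝ᵥ (Matrix.of (fun j k : Fin d =>
          ∫ ω, ((Xᵀ * Matrix.diagonal (fun i => (W i ω - w i)^2) * X)⁻¹) j k ∂μ)).mulVec xbar)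
        - (n : ℝ) * (xbar ⬝ᵥ ((Xᵀ * Matrix.diagonal (fun i => w i * (1 - w i)) * X)⁻¹).mulVec xbar)|
      = |∫ ω, (n:ℝ) * (xbar ⬝ᵥ (A ω)⁻¹.mulVec xbar - xbar ⬝ᵥ B⁻¹.mulVec xbar) ∂μ| := by
        rw [← goal_eq]
  _ ≤ ∫ ω, (n:ℝ) * (Real.sqrt C / m * (q ω/(2*s) + s/2)) ∂μ := hbound
  _ ≤ (n:ℝ) * (Real.sqrt C / m) * s := hIH
  _ = C^2/(η^4*c^2) / Real.sqrt n := hfinal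
end

section
/- Fix d ∈ ℕ, constants η ∈ (0, 1/2), c, C, σ² > 0, n* ≥ d, and γ ∈ ℝ^d. For each n ≥ n*, let X^{(n)} ∈ ℝ^{n×d} be deterministic with rows satisfying ‖X_i‖₂² ≤ C and Xᵀ X ⪰ n c I_d, and let e^{(n)} ∈ [η, 1−η]^n be deterministic treatment propensities. On a common probability space, for each n let W^{(n)} ∈ {0,1}^n, m^{(n)} ∈ ℝ^n, m̂^{(n)} ∈ ℝ^n, ê^{(n)} ∈ ℝ^n, and ε̃^{(n)} ∈ ℝ^n be random vectors with E[(ε̃_i^{(n)})²] ≤ σ² for all i ≤ n, and let Y^{(n)} = m^{(n)} + diag(W^{(n)} − e^{(n)}) X^{(n)} γ + ε̃^{(n)}. Define M = Xᵀ diag(W − e)² X (which satisfies M ⪰ n η² c I_d and hence is invertible), M̂ = Xᵀ diag(W − ê)² X, γ̂_oracle = M⁻¹ Xᵀ diag(W − e)(Y − m), and, whenever M̂ is invertible, γ̂_plug-in = M̂⁻¹ Xᵀ diag(W − ê)(Y − m̂). Assume: (1) max_{i ≤ n} |ê_i^{(n)} − e_i^{(n)}| → 0 in probability as n → ∞; and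 (2) (1/n) Σ_{i ≤ n} (m̂_i^{(n)} − m_i^{(n)})² → 0 in probability as n → ∞. Then M̂ is invertible with probability tending to one and ‖γ̂_oracle − γ̂_plug-in‖₂ → 0 in probability as n → ∞. -/
open Matrix Set MeasureTheory Filter

/-- The Euclidean norm of a vector. -/
noncomputable def vnorm {k : ℕ} (v : Fin k → ℝ) : ℝ :=
  Real.sqrt (∑ i, (v i)^2)

lemma vnorm_nonneg {k : ℕ} (v : Fin k → ℝ) : 0 ≤ vnorm v := Real.sqrt_nonneg _

lemma sq_vnorm {k : ℕ} (v : Fin k → ℝ) : vnorm v ^ 2 = ∑ i, (v i)^2 :=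
  Real.sq_sqrt (by positivity)

lemma vnorm_le_of_sq_le {k : ℕ} {v : Fin k → ℝ} {b : ℝ} (hb : 0 ≤ b)
    (h : ∑ i, (v i)^2 ≤ b^2) : vnorm v ≤ b := by
  rw [vnorm]
  calc Real.sqrt (∑ i, (v i)^2) ≤ Real.sqrt (b^2) := Real.sqrt_le_sqrt h
    _ = b := Real.sqrt_sq hb

lemma dot_le_vnorm {k : ℕ} (x y : Fin k → ℝ) : ∑ i, x i * y i ≤ vnorm x * vnorm y := by
  have h := Finset.sum_mul_sq_le_sq_mul_sq Finset.univ x y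
  nlinarith [sq_vnorm x, sq_vnorm y, vnorm_nonneg x, vnorm_nonneg y,
    mul_nonneg (vnorm_nonneg x) (vnorm_nonneg y)]

lemma vnorm_mul_le {k : ℕ} {t : Fin k → ℝ} {s : ℝ} (hs : 0 ≤ s) (ht : ∀ i, |t i| ≤ s)
    (x : Fin k → ℝ) : vnorm (fun i => t i * x i) ≤ s * vnorm x := by
  refine vnorm_le_of_sq_le (mul_nonneg hs (vnorm_nonneg x)) ?_
  have : ∀ i, (t i * x i)^2 ≤ s^2 * (x i)^2 := by
    intro i
    have h1 : (t i)^2 ≤ s^2 := by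
      have := ht i; nlinarith [abs_nonneg (t i), sq_abs (t i)]
    nlinarith [sq_nonneg (x i)]
  calc ∑ i, (t i * x i)^2 ≤ ∑ i, s^2 * (x i)^2 := Finset.sum_le_sum (fun i _ => this i)
    _ = s^2 * ∑ i, (x i)^2 := by rw [Finset.mul_sum]
    _ = (s * vnorm x)^2 := by rw [mul_pow, sq_vnorm]

lemma vnorm_add_le {k : ℕ} (x y : Fin k → ℝ) :
    vnorm (fun i => x i + y i) ≤ vnorm x + vnorm y := by
  refine vnorm_le_of_sq_le (add_nonneg (vnorm_nonneg x) (vnorm_nonneg y)) ?_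
  have hexp : ∑ i, (x i + y i)^2 = ∑ i, (x i)^2 + 2 * ∑ i, x i * y i + ∑ i, (y i)^2 := by
    rw [Finset.mul_sum, ← Finset.sum_add_distrib, ← Finset.sum_add_distrib]
    exact Finset.sum_congr rfl (fun i _ => by ring)
  rw [hexp]
  nlinarith [dot_le_vnorm x y, sq_vnorm x, sq_vnorm y]

lemma diag_mulVec {n : ℕ} (f w : Fin n → ℝ) :
    Matrix.diagonal f *ᵥ w = fun i => f i * w i := by
  ext i; simp [Matrix.mulVec_diagonal]

lemma dot_transpose_mulVec {n d : ℕ} (X : Matrix (Fin n) (Fin d) ℝ)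
    (u : Fin d → ℝ) (w : Fin n → ℝ) :
    u ⬝ᵥ (Xᵀ *ᵥ w) = ∑ i, (X *ᵥ u) i * w i := by
  simp only [Matrix.mulVec, dotProduct, Matrix.transpose_apply, Finset.mul_sum,
    Finset.sum_mul]
  rw [Finset.sum_comm]
  exact Finset.sum_congr rfl fun i _ => Finset.sum_congr rfl fun j _ => by ring

lemma tri_mulVec {n d : ℕ} (X : Matrix (Fin n) (Fin d) ℝ) (f : Fin n → ℝ) (z : Fin d → ℝ) :
    (Xᵀ * Matrix.diagonal f * X) *ᵥ z = Xᵀ *ᵥ (fun i => f i * (X *ᵥ z) i) := by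
  rw [← Matrix.mulVec_mulVec, ← Matrix.mulVec_mulVec, diag_mulVec]

lemma quad_id {n d : ℕ} (X : Matrix (Fin n) (Fin d) ℝ) (f : Fin n → ℝ) (u z : Fin d → ℝ) :
    u ⬝ᵥ ((Xᵀ * Matrix.diagonal f * X) *ᵥ z) = ∑ i, f i * ((X *ᵥ u) i * (X *ᵥ z) i) := by
  rw [tri_mulVec, dot_transpose_mulVec]
  exact Finset.sum_congr rfl (fun i _ => by ring)

lemma pos_conv {n d : ℕ} (X : Matrix (Fin n) (Fin d) ℝ) (t : ℝ)
    (h : (Xᵀ * X - t • (1 : Matrix (Fin d) (Fin d) ℝ)).PosSemidef) :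
    ∀ u : Fin d → ℝ, t * (∑ j, (u j)^2) ≤ ∑ i, ((X *ᵥ u) i)^2 := by
  intro u
  have h2 := h.dotProduct_mulVec_nonneg u
  rw [Matrix.sub_mulVec] at h2
  simp only [star_trivial, dotProduct_sub] at h2
  have e1 : u ⬝ᵥ ((Xᵀ * X) *ᵥ u) = ∑ i, ((X *ᵥ u) i)^2 := by
    rw [← Matrix.mulVec_mulVec, dot_transpose_mulVec]
    exact Finset.sum_congr rfl (fun i _ => by ring)
  have e2 : u ⬝ᵥ ((t • (1 : Matrix (Fin d) (Fin d) ℝ)) *ᵥ u) = t * ∑ j, (u j)^2 := by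
    rw [Matrix.smul_mulVec, Matrix.one_mulVec, dotProduct_smul]
    simp [dotProduct, Finset.mul_sum, sq]
  rw [e1, e2] at h2
  linarith

lemma isUnit_det_aux {n d : ℕ} {c τ : ℝ} (hc : 0 < c) (hn : 0 < n) (hτ : 0 < τ)
    (X : Matrix (Fin n) (Fin d) ℝ)
    (hXpos : ∀ u : Fin d → ℝ, (n:ℝ) * c * (∑ j, (u j)^2) ≤ ∑ i, ((X *ᵥ u) i)^2)
    (f : Fin n → ℝ) (hf : ∀ i, τ ≤ |f i|) :
    IsUnit ((Xᵀ * Matrix.diagonal (fun i => f i * f i) * X)).det := by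
  rw [isUnit_iff_ne_zero]
  intro h0
  obtain ⟨v, hv, hMv⟩ := Matrix.exists_mulVec_eq_zero_iff.mpr h0
  have h1 : v ⬝ᵥ ((Xᵀ * Matrix.diagonal (fun i => f i * f i) * X) *ᵥ v) = 0 := by
    rw [hMv, dotProduct_zero]
  rw [quad_id] at h1
  obtain ⟨j, hj⟩ := Function.ne_iff.mp hv
  have hvpos : 0 < ∑ j, (v j)^2 := by
    refine Finset.sum_pos' (fun i _ => sq_nonneg _) ⟨j, Finset.mem_univ _, ?_⟩
    have hj' : v j ≠ 0 := by simpa using hj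
    have h3 : 0 < |v j| ^ 2 := pow_pos (abs_pos.mpr hj') 2
    rwa [sq_abs] at h3
  have hXv : (n:ℝ) * c * (∑ j, (v j)^2) ≤ ∑ i, ((X *ᵥ v) i)^2 := hXpos v
  have hlow : ∑ i, τ^2 * ((X *ᵥ v) i)^2 ≤ ∑ i, f i * f i * ((X *ᵥ v) i * (X *ᵥ v) i) := by
    refine Finset.sum_le_sum (fun i _ => ?_)
    have h4 : τ^2 ≤ f i * f i := by
      nlinarith [hf i, hτ, abs_mul_abs_self (f i)]
    have h5 := mul_le_mul_of_nonneg_right h4 (sq_nonneg ((X *ᵥ v) i))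
    nlinarith [h5]
  have hms : τ^2 * ∑ i, ((X *ᵥ v) i)^2 = ∑ i, τ^2 * ((X *ᵥ v) i)^2 := Finset.mul_sum _ _ _
  have hn' : (0:ℝ) < (n:ℝ) := by exact_mod_cast hn
  have hp : 0 < τ^2 * (((n:ℝ) * c) * ∑ j, (v j)^2) :=
    mul_pos (pow_pos hτ 2) (mul_pos (mul_pos hn' hc) hvpos)
  have h2 : τ^2 * (((n:ℝ) * c) * ∑ j, (v j)^2) ≤ τ^2 * ∑ i, ((X *ᵥ v) i)^2 := by
    rw [← mul_assoc, mul_assoc]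
    exact mul_le_mul_of_nonneg_left hXv (sq_nonneg τ)
  linarith

lemma quad_lower {n : ℕ} {τ : ℝ} (hτ : 0 ≤ τ) (g p : Fin n → ℝ) (hg : ∀ i, τ ≤ |g i|) :
    τ^2 * ∑ i, (p i)^2 ≤ ∑ i, (g i * g i) * (p i * p i) := by
  rw [Finset.mul_sum]
  refine Finset.sum_le_sum fun i _ => ?_
  have h4 : τ^2 ≤ g i * g i := by nlinarith [hg i, abs_mul_abs_self (g i), abs_nonneg (g i), hτ]
  nlinarith [mul_le_mul_of_nonneg_right h4 (sq_nonneg (p i))]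

lemma vnorm_mulVec_le {n d : ℕ} {C : ℝ} (hC : 0 ≤ C) (X : Matrix (Fin n) (Fin d) ℝ)
    (hXrow : ∀ i, ∑ j, (X i j)^2 ≤ C) (z : Fin d → ℝ) :
    vnorm (X *ᵥ z) ≤ Real.sqrt ((n:ℝ) * C) * vnorm z := by
  refine vnorm_le_of_sq_le (mul_nonneg (Real.sqrt_nonneg _) (vnorm_nonneg _)) ?_
  have hterm : ∀ i, ((X *ᵥ z) i)^2 ≤ C * ∑ j, (z j)^2 := by
    intro i
    have h := Finset.sum_mul_sq_le_sq_mul_sq Finset.univ (fun j => X i j) z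
    have he : (X *ᵥ z) i = ∑ j, X i j * z j := by
      simp [Matrix.mulVec, dotProduct]
    rw [he]
    calc (∑ j, X i j * z j)^2 ≤ (∑ j, (X i j)^2) * ∑ j, (z j)^2 := h
      _ ≤ C * ∑ j, (z j)^2 :=
        mul_le_mul_of_nonneg_right (hXrow i) (by positivity)
  calc ∑ i, ((X *ᵥ z) i)^2 ≤ ∑ _i : Fin n, C * ∑ j, (z j)^2 :=
        Finset.sum_le_sum (fun i _ => hterm i)
    _ = (n:ℝ) * (C * ∑ j, (z j)^2) := by
        rw [Finset.sum_const, Finset.card_univ, Fintype.card_fin, nsmul_eq_mul]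
    _ = (Real.sqrt ((n:ℝ) * C) * vnorm z)^2 := by
        rw [mul_pow, Real.sq_sqrt (by positivity), sq_vnorm]; ring

lemma vnorm_le_sqrt {n : ℕ} {b : ℝ} (hb : 0 ≤ b) {x : Fin n → ℝ}
    (hx : ∑ i, (x i)^2 ≤ b) : vnorm x ≤ Real.sqrt b :=
  vnorm_le_of_sq_le (Real.sqrt_nonneg _) (by rw [Real.sq_sqrt hb]; exact hx)

set_option maxHeartbeats 2000000 in
lemma key_bound {n d : ℕ} (hn : 0 < n) {c C η K δ δ₂ : ℝ}
    (hc : 0 < c) (hC : 0 < C) (hη : 0 < η) (hK : 0 ≤ K)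
    (hδ0 : 0 ≤ δ) (hδ1 : δ ≤ 1) (hδη : δ ≤ η/2) (hδ₂ : 0 ≤ δ₂)
    (X : Matrix (Fin n) (Fin d) ℝ)
    (hXrow : ∀ i, ∑ j, (X i j)^2 ≤ C)
    (hXpos : ∀ u : Fin d → ℝ, (n:ℝ) * c * (∑ j, (u j)^2) ≤ ∑ i, ((X *ᵥ u) i)^2)
    (γ : Fin d → ℝ) (a ah εv dm ym : Fin n → ℝ)
    (hal : ∀ i, η ≤ |a i|) (hau : ∀ i, |a i| ≤ 1)
    (hah : ∀ i, |ah i - a i| ≤ δ)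
    (hεv : ∑ i, (εv i)^2 ≤ (n:ℝ) * K)
    (hdm : ∑ i, (dm i)^2 ≤ (n:ℝ) * δ₂)
    (hymdef : ∀ i, ym i = a i * (X *ᵥ γ) i + εv i)
    (M Mh : Matrix (Fin d) (Fin d) ℝ)
    (hM : M = Xᵀ * Matrix.diagonal (fun i => a i * a i) * X)
    (hMh : Mh = Xᵀ * Matrix.diagonal (fun i => ah i * ah i) * X)
    (γo γp : Fin d → ℝ)
    (hγo : γo = M⁻¹ *ᵥ (Xᵀ *ᵥ (fun i => a i * ym i)))
    (hγp : γp = Mh⁻¹ *ᵥ (Xᵀ *ᵥ (fun i => ah i * (ym i - dm i)))) :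
    vnorm (γo - γp) ≤ (4/η^2) * (3*δ*Real.sqrt (C/c) * (vnorm γ + Real.sqrt (K/c)/η^2)
      + δ*(Real.sqrt (C/c) * vnorm γ + Real.sqrt (K/c)) + 2*Real.sqrt (δ₂/c)) := by
  have hn' : (0:ℝ) < n := by exact_mod_cast hn
  have hηh : (0:ℝ) < η/2 := by linarith
  have hahl : ∀ i, η/2 ≤ |ah i| := by
    intro i
    have h2 := hah i
    have h3 := abs_sub_abs_le_abs_sub (a i) (ah i)
    rw [abs_sub_comm] at h3
    have := hal i; linarith
  have hahu : ∀ i, |ah i| ≤ 2 := by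
    intro i
    have h3 := abs_sub_abs_le_abs_sub (ah i) (a i)
    have := hau i; have := hah i; linarith
  have hMdet : IsUnit M.det := hM ▸ isUnit_det_aux hc hn hη X hXpos a hal
  have hMhdet : IsUnit Mh.det := hMh ▸ isUnit_det_aux hc hn hηh X hXpos ah hahl
  have hMγo : M *ᵥ γo = Xᵀ *ᵥ (fun i => a i * ym i) := by
    rw [hγo, Matrix.mulVec_mulVec, Matrix.mul_nonsing_inv _ hMdet, Matrix.one_mulVec]
  have hMhγp : Mh *ᵥ γp = Xᵀ *ᵥ (fun i => ah i * (ym i - dm i)) := by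
    rw [hγp, Matrix.mulVec_mulVec, Matrix.mul_nonsing_inv _ hMhdet, Matrix.one_mulVec]
  -- oracle norm bound
  set v : Fin d → ℝ := γo - γ with hv
  have hMγ : M *ᵥ γ = Xᵀ *ᵥ (fun i => (a i * a i) * (X *ᵥ γ) i) := by
    rw [hM, tri_mulVec]
  have hMv : M *ᵥ v = Xᵀ *ᵥ (fun i => a i * εv i) := by
    have hsplit : (fun i => a i * ym i)
        = (fun i => (a i * a i) * (X *ᵥ γ) i) + (fun i => a i * εv i) := by
      funext i; simp only [Pi.add_apply, hymdef i]; ring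
    rw [hv, Matrix.mulVec_sub, hMγo, hMγ, hsplit, Matrix.mulVec_add, add_sub_cancel_left]
  have hq1 : v ⬝ᵥ (M *ᵥ v) = ∑ i, (a i * a i) * ((X *ᵥ v) i * (X *ᵥ v) i) := by
    rw [hM, quad_id]
  have hq2 : v ⬝ᵥ (M *ᵥ v) = ∑ i, (X *ᵥ v) i * (a i * εv i) := by
    rw [hMv, dot_transpose_mulVec]
  have hεnorm : vnorm εv ≤ Real.sqrt ((n:ℝ)*K) := vnorm_le_sqrt (by positivity) hεv
  have hub : v ⬝ᵥ (M *ᵥ v) ≤ vnorm (X *ᵥ v) * Real.sqrt ((n:ℝ)*K) := by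
    rw [hq2]
    calc ∑ i, (X *ᵥ v) i * (a i * εv i)
        ≤ vnorm (X *ᵥ v) * vnorm (fun i => a i * εv i) := dot_le_vnorm _ _
      _ ≤ vnorm (X *ᵥ v) * (1 * vnorm εv) :=
          mul_le_mul_of_nonneg_left (vnorm_mul_le zero_le_one hau εv) (vnorm_nonneg _)
      _ ≤ vnorm (X *ᵥ v) * Real.sqrt ((n:ℝ)*K) := by
          rw [one_mul]; exact mul_le_mul_of_nonneg_left hεnorm (vnorm_nonneg _)
  have hlb : η^2 * (vnorm (X *ᵥ v))^2 ≤ v ⬝ᵥ (M *ᵥ v) := by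
    rw [hq1, sq_vnorm]; exact quad_lower (le_of_lt hη) a (X *ᵥ v) hal
  have hXv_le : η^2 * vnorm (X *ᵥ v) ≤ Real.sqrt ((n:ℝ)*K) := by
    rcases eq_or_lt_of_le (vnorm_nonneg (X *ᵥ v)) with h0 | h0
    · rw [← h0, mul_zero]; exact Real.sqrt_nonneg _
    · nlinarith [hub, hlb]
  have hv_le : vnorm v ≤ Real.sqrt (K/c) / η^2 := by
    have hp2 : η^4 * (vnorm (X *ᵥ v))^2 ≤ (n:ℝ)*K := by
      have := pow_le_pow_left₀ (mul_nonneg (sq_nonneg η) (vnorm_nonneg _)) hXv_le 2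
      rw [mul_pow, Real.sq_sqrt (by positivity)] at this
      calc η^4 * (vnorm (X *ᵥ v))^2 = (η^2)^2 * (vnorm (X *ᵥ v))^2 := by ring
        _ ≤ (n:ℝ)*K := this
    have hXp := hXpos v
    rw [← sq_vnorm v, ← sq_vnorm (X *ᵥ v)] at hXp
    refine vnorm_le_of_sq_le (by positivity) ?_
    have hb2 : (Real.sqrt (K/c) / η^2)^2 = (K/c)/η^4 := by
      rw [div_pow, Real.sq_sqrt (by positivity)]; ring_nf
    rw [← sq_vnorm v, hb2, div_div, le_div_iff₀ (by positivity)]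
    nlinarith [hp2, mul_le_mul_of_nonneg_left hXp (by positivity : (0:ℝ) ≤ η^4), hn']
  have hγo_norm : vnorm γo ≤ vnorm γ + Real.sqrt (K/c) / η^2 := by
    have hgg : γo = fun j => γ j + v j := by funext j; simp [hv]
    rw [hgg]
    exact le_trans (vnorm_add_le γ v) (by linarith [hv_le, vnorm_nonneg γ])
  -- residual vector
  set G : ℝ := vnorm γ + Real.sqrt (K/c) / η^2 with hG
  set r : Fin n → ℝ := fun i =>
    (ah i * ah i - a i * a i) * (X *ᵥ γo) i + ((a i - ah i) * ym i + ah i * dm i) with hr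
  have hXtr : Xᵀ *ᵥ r = Mh *ᵥ γo - Mh *ᵥ γp := by
    have hMhγo : Mh *ᵥ γo = Xᵀ *ᵥ (fun i => (ah i * ah i) * (X *ᵥ γo) i) := by
      rw [hMh, tri_mulVec]
    have hMγo2 : M *ᵥ γo = Xᵀ *ᵥ (fun i => (a i * a i) * (X *ᵥ γo) i) := by
      rw [hM, tri_mulVec]
    have hrsplit : r = ((fun i => (ah i * ah i) * (X *ᵥ γo) i)
          - (fun i => (a i * a i) * (X *ᵥ γo) i))
        + ((fun i => a i * ym i) - (fun i => ah i * (ym i - dm i))) := by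
      funext i
      simp only [Pi.add_apply, Pi.sub_apply, hr]
      ring
    rw [hrsplit, Matrix.mulVec_add, Matrix.mulVec_sub, Matrix.mulVec_sub,
      ← hMhγo, ← hMγo2, ← hMγo, ← hMhγp, hMγo]
    rw [← hMγo]
    abel
  set u : Fin d → ℝ := γo - γp with hu
  have hMhu : Mh *ᵥ u = Xᵀ *ᵥ r := by rw [hu, Matrix.mulVec_sub, hXtr]
  -- bound on r
  have hXγo : vnorm (X *ᵥ γo) ≤ Real.sqrt ((n:ℝ)*C) * G :=
    le_trans (vnorm_mulVec_le (le_of_lt hC) X hXrow γo)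
      (mul_le_mul_of_nonneg_left hγo_norm (Real.sqrt_nonneg _))
  have hr1 : vnorm (fun i => (ah i * ah i - a i * a i) * (X *ᵥ γo) i)
      ≤ 3*δ*(Real.sqrt ((n:ℝ)*C) * G) := by
    have habs : ∀ i, |ah i * ah i - a i * a i| ≤ 3*δ := by
      intro i
      have h1 : ah i * ah i - a i * a i = (ah i - a i) * (ah i + a i) := by ring
      rw [h1, abs_mul]
      have h2 : |ah i + a i| ≤ 3 := le_trans (abs_add_le _ _) (by linarith [hahu i, hau i])
      calc |ah i - a i| * |ah i + a i| ≤ δ * 3 :=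
        mul_le_mul (hah i) h2 (abs_nonneg _) hδ0
        _ = 3*δ := by ring
    calc vnorm (fun i => (ah i * ah i - a i * a i) * (X *ᵥ γo) i)
        ≤ (3*δ) * vnorm (X *ᵥ γo) := vnorm_mul_le (by linarith) habs _
      _ ≤ 3*δ*(Real.sqrt ((n:ℝ)*C) * G) := by
          have := mul_le_mul_of_nonneg_left hXγo (by linarith : (0:ℝ) ≤ 3*δ)
          linarith
  have hym_norm : vnorm ym ≤ Real.sqrt ((n:ℝ)*C) * vnorm γ + Real.sqrt ((n:ℝ)*K) := by
    have hsplit : ym = fun i => (a i * (X *ᵥ γ) i) + εv i := by funext i; exact hymdef i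
    rw [hsplit]
    refine le_trans (vnorm_add_le _ _) ?_
    have h1 : vnorm (fun i => a i * (X *ᵥ γ) i) ≤ 1 * vnorm (X *ᵥ γ) :=
      vnorm_mul_le zero_le_one hau _
    have h2 := vnorm_mulVec_le (le_of_lt hC) X hXrow γ
    linarith [hεnorm]
  have hr2 : vnorm (fun i => (a i - ah i) * ym i)
      ≤ δ * (Real.sqrt ((n:ℝ)*C) * vnorm γ + Real.sqrt ((n:ℝ)*K)) := by
    have habs : ∀ i, |a i - ah i| ≤ δ := by
      intro i; rw [abs_sub_comm]; exact hah i
    refine le_trans (vnorm_mul_le hδ0 habs ym) ?_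
    exact mul_le_mul_of_nonneg_left hym_norm hδ0
  have hdm_norm : vnorm dm ≤ Real.sqrt ((n:ℝ)*δ₂) := vnorm_le_sqrt (by positivity) hdm
  have hr3 : vnorm (fun i => ah i * dm i) ≤ 2 * Real.sqrt ((n:ℝ)*δ₂) := by
    refine le_trans (vnorm_mul_le (by norm_num) hahu dm) ?_
    exact mul_le_mul_of_nonneg_left hdm_norm (by norm_num)
  have hr_norm : vnorm r ≤ 3*δ*(Real.sqrt ((n:ℝ)*C) * G)
      + (δ * (Real.sqrt ((n:ℝ)*C) * vnorm γ + Real.sqrt ((n:ℝ)*K))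
      + 2 * Real.sqrt ((n:ℝ)*δ₂)) := by
    have t1 : vnorm r ≤ vnorm (fun i => (ah i * ah i - a i * a i) * (X *ᵥ γo) i)
        + vnorm (fun i => (a i - ah i) * ym i + ah i * dm i) :=
      vnorm_add_le _ _
    have t2 : vnorm (fun i => (a i - ah i) * ym i + ah i * dm i)
        ≤ vnorm (fun i => (a i - ah i) * ym i) + vnorm (fun i => ah i * dm i) :=
      vnorm_add_le _ _
    linarith [hr1, hr2, hr3]
  -- final quadratic argument
  have hqu1 : u ⬝ᵥ (Mh *ᵥ u) = ∑ i, (ah i * ah i) * ((X *ᵥ u) i * (X *ᵥ u) i) := by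
    rw [hMh, quad_id]
  have hqu2 : u ⬝ᵥ (Mh *ᵥ u) = ∑ i, (X *ᵥ u) i * r i := by
    rw [hMhu, dot_transpose_mulVec]
  have hlb2 : (η/2)^2 * (vnorm (X *ᵥ u))^2 ≤ u ⬝ᵥ (Mh *ᵥ u) := by
    rw [hqu1, sq_vnorm]; exact quad_lower (le_of_lt hηh) ah (X *ᵥ u) hahl
  have hub2 : u ⬝ᵥ (Mh *ᵥ u) ≤ vnorm (X *ᵥ u) * vnorm r := by
    rw [hqu2]; exact dot_le_vnorm _ _
  have hq : η^2 * vnorm (X *ᵥ u) ≤ 4 * vnorm r := by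
    rcases eq_or_lt_of_le (vnorm_nonneg (X *ᵥ u)) with h0 | h0
    · rw [← h0, mul_zero]
      exact mul_nonneg (by norm_num) (vnorm_nonneg _)
    · nlinarith [hlb2, hub2]
  have hu_le : vnorm u ≤ (4 * vnorm r) / (η^2 * Real.sqrt ((n:ℝ)*c)) := by
    have hsq : 0 < Real.sqrt ((n:ℝ)*c) := Real.sqrt_pos.mpr (by positivity)
    refine vnorm_le_of_sq_le (div_nonneg (mul_nonneg (by norm_num) (vnorm_nonneg _))
      (le_of_lt (by positivity))) ?_
    have hb2 : ((4 * vnorm r) / (η^2 * Real.sqrt ((n:ℝ)*c)))^2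
        = 16 * (vnorm r)^2 / (η^4 * ((n:ℝ)*c)) := by
      rw [div_pow, mul_pow, mul_pow, Real.sq_sqrt (by positivity)]
      ring_nf
    have hp2 : η^4 * (vnorm (X *ᵥ u))^2 ≤ 16 * (vnorm r)^2 := by
      have := pow_le_pow_left₀ (mul_nonneg (sq_nonneg η) (vnorm_nonneg _)) hq 2
      nlinarith [this]
    have hXp := hXpos u
    rw [← sq_vnorm u, ← sq_vnorm (X *ᵥ u)] at hXp
    rw [← sq_vnorm u, hb2, le_div_iff₀ (by positivity)]
    nlinarith [hp2, mul_le_mul_of_nonneg_left hXp (by positivity : (0:ℝ) ≤ η^4), hn']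
  -- algebraic simplification
  have hfin : (4 * (3*δ*(Real.sqrt ((n:ℝ)*C) * G)
      + (δ * (Real.sqrt ((n:ℝ)*C) * vnorm γ + Real.sqrt ((n:ℝ)*K))
      + 2 * Real.sqrt ((n:ℝ)*δ₂)))) / (η^2 * Real.sqrt ((n:ℝ)*c))
      = (4/η^2) * (3*δ*Real.sqrt (C/c) * G
        + δ*(Real.sqrt (C/c) * vnorm γ + Real.sqrt (K/c)) + 2*Real.sqrt (δ₂/c)) := by
    have hsn : (0:ℝ) < Real.sqrt (n:ℝ) := Real.sqrt_pos.mpr hn'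
    have hsc : (0:ℝ) < Real.sqrt c := Real.sqrt_pos.mpr hc
    rw [Real.sqrt_mul (le_of_lt hn') C, Real.sqrt_mul (le_of_lt hn') K,
      Real.sqrt_mul (le_of_lt hn') δ₂, Real.sqrt_mul (le_of_lt hn') c,
      Real.sqrt_div (le_of_lt hC) c, Real.sqrt_div hK c, Real.sqrt_div hδ₂ c]
    have hη0 : η ≠ 0 := ne_of_gt hη
    have hsn0 : Real.sqrt (n:ℝ) ≠ 0 := ne_of_gt hsn
    have hsc0 : Real.sqrt c ≠ 0 := ne_of_gt hsc
    field_simp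
    ring
  have hmono : (4 * vnorm r) / (η^2 * Real.sqrt ((n:ℝ)*c))
      ≤ (4 * (3*δ*(Real.sqrt ((n:ℝ)*C) * G)
      + (δ * (Real.sqrt ((n:ℝ)*C) * vnorm γ + Real.sqrt ((n:ℝ)*K))
      + 2 * Real.sqrt ((n:ℝ)*δ₂)))) / (η^2 * Real.sqrt ((n:ℝ)*c)) := by
    have hsq : 0 < η^2 * Real.sqrt ((n:ℝ)*c) := by positivity
    gcongr

  calc vnorm (γo - γp) = vnorm u := rfl
    _ ≤ (4 * vnorm r) / (η^2 * Real.sqrt ((n:ℝ)*c)) := hu_le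
    _ ≤ _ := hmono
    _ = _ := hfin


set_option maxHeartbeats 2000000 in
/-- consistency of the plug-in LATE regression estimator: the
plug-in weighted-regression matrix is invertible with probability tending to one,
and the plug-in estimator converges in probability to the oracle estimator. -/
theorem stmt_17 (d : ℕ) (η c C σ2 : ℝ) (hη : η ∈ Ioo (0:ℝ) (1/2)) (hc : 0 < c)
    (hC : 0 < C) (hσ2 : 0 < σ2) (nstar : ℕ) (hnstar : d ≤ nstar) (γ : Fin d → ℝ)
    (X : ∀ n : ℕ, Matrix (Fin n) (Fin d) ℝ)
    (hXrow : ∀ n : ℕ, nstar ≤ n → ∀ i, ∑ j, (X n i j)^2 ≤ C)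
    (hXpos : ∀ n : ℕ, nstar ≤ n →
      ((X n)ᵀ * X n - ((n : ℝ) * c) • (1 : Matrix (Fin d) (Fin d) ℝ)).PosSemidef)
    (e : ∀ n : ℕ, Fin n → ℝ) (he : ∀ n : ℕ, nstar ≤ n → ∀ i, e n i ∈ Icc η (1 - η))
    (Ω : Type) [MeasurableSpace Ω] (μ : Measure Ω) [IsProbabilityMeasure μ]
    (W m mh eh εt Y : ∀ n : ℕ, Ω → Fin n → ℝ)
    (hW01 : ∀ n ω i, W n ω i = 0 ∨ W n ω i = 1)
    (hεmeas : ∀ n i, Measurable (fun ω => εt n ω i))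
    (hεint : ∀ n : ℕ, nstar ≤ n → ∀ i, Integrable (fun ω => (εt n ω i)^2) μ)
    (hεvar : ∀ n : ℕ, nstar ≤ n → ∀ i, ∫ ω, (εt n ω i)^2 ∂μ ≤ σ2)
    (hY : ∀ n ω, Y n ω = m n ω
      + (Matrix.diagonal (fun i => W n ω i - e n i)).mulVec ((X n).mulVec γ) + εt n ω)
    (M Mh : ∀ n : ℕ, Ω → Matrix (Fin d) (Fin d) ℝ)
    (hM : ∀ n ω, M n ω = (X n)ᵀ * (Matrix.diagonal (fun i => W n ω i - e n i)) ^ 2 * X n)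
    (hMh : ∀ n ω, Mh n ω = (X n)ᵀ * (Matrix.diagonal (fun i => W n ω i - eh n ω i)) ^ 2 * X n)
    (γo γp : ∀ n : ℕ, Ω → Fin d → ℝ)
    (hγo : ∀ n ω, γo n ω = ((M n ω)⁻¹ * ((X n)ᵀ * Matrix.diagonal (fun i => W n ω i - e n i))).mulVec
      (Y n ω - m n ω))
    (hγp : ∀ n ω, γp n ω = ((Mh n ω)⁻¹ * ((X n)ᵀ * Matrix.diagonal (fun i => W n ω i - eh n ω i))).mulVec
      (Y n ω - mh n ω))
    -- (1) uniform consistency of the estimated propensities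
    (h1 : ∀ ε > (0:ℝ), Tendsto (fun n : ℕ => μ {ω | ε ≤ ⨆ i : Fin n, |eh n ω i - e n i|})
      atTop (nhds 0))
    -- (2) mean-square consistency of the estimated adjustment functionals
    (h2 : ∀ ε > (0:ℝ), Tendsto (fun n : ℕ => μ {ω | ε ≤ (1 / (n : ℝ)) * ∑ i, (mh n ω i - m n ω i)^2})
      atTop (nhds 0)) :
    Tendsto (fun n : ℕ => μ {ω | IsUnit (Mh n ω).det}) atTop (nhds 1) ∧
    ∀ ε > (0:ℝ), Tendsto (fun n : ℕ => μ {ω | ε ≤ vnorm (γo n ω - γp n ω)}) atTop (nhds 0) := by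
  obtain ⟨hη0, hη2⟩ := hη
  have hpos : ∀ n : ℕ, nstar ≤ n → ∀ u : Fin d → ℝ,
      (n:ℝ) * c * (∑ j, (u j)^2) ≤ ∑ i, ((X n *ᵥ u) i)^2 :=
    fun n hn => pos_conv (X n) _ (hXpos n hn)
  have ha : ∀ n, nstar ≤ n → ∀ ω i,
      η ≤ |W n ω i - e n i| ∧ |W n ω i - e n i| ≤ 1 := by
    intro n hn ω i
    obtain ⟨ha1, ha2⟩ := he n hn i
    rcases hW01 n ω i with h | h <;> rw [h]
    · constructor
      · rw [zero_sub, abs_neg, abs_of_nonneg (by linarith)]; exact ha1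
      · rw [zero_sub, abs_neg, abs_of_nonneg (by linarith)]; linarith
    · constructor
      · rw [abs_of_nonneg (by linarith)]; linarith
      · rw [abs_of_nonneg (by linarith)]; linarith
  have hinv : ∀ n, max nstar 1 ≤ n → ∀ ω,
      (⨆ i : Fin n, |eh n ω i - e n i|) < η/2 → IsUnit (Mh n ω).det := by
    intro n hn ω hsup
    have hn1 : 1 ≤ n := le_trans (le_max_right _ _) hn
    have hns : nstar ≤ n := le_trans (le_max_left _ _) hn
    have hnpos : 0 < n := hn1
    haveI : Nonempty (Fin n) := ⟨⟨0, hnpos⟩⟩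
    have hbdd : BddAbove (Set.range (fun i : Fin n => |eh n ω i - e n i|)) :=
      (Set.finite_range _).bddAbove
    have heach : ∀ i, |eh n ω i - e n i| < η/2 :=
      fun i => lt_of_le_of_lt (le_ciSup hbdd i) hsup
    have hahl : ∀ i, η/2 ≤ |W n ω i - eh n ω i| := by
      intro i
      have h3 := abs_sub_abs_le_abs_sub (W n ω i - e n i) (W n ω i - eh n ω i)
      have h4 : (W n ω i - e n i) - (W n ω i - eh n ω i) = eh n ω i - e n i := by ring
      rw [h4] at h3
      have h5 := (ha n hns ω i).1
      have h6 := heach i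
      linarith
    have hud := isUnit_det_aux hc hnpos (by linarith : (0:ℝ) < η/2) (X n) (hpos n hns) _ hahl
    have hdiag : (Matrix.diagonal (fun i => W n ω i - eh n ω i))^2
        = Matrix.diagonal (fun i => (W n ω i - eh n ω i) * (W n ω i - eh n ω i)) := by
      rw [sq, Matrix.diagonal_mul_diagonal]
    rw [hMh n ω, hdiag]
    exact hud
  constructor
  · have hB := h1 (η/2) (by linarith)
    have hTlow : Tendsto (fun n : ℕ =>
        1 - μ {ω | η/2 ≤ ⨆ i : Fin n, |eh n ω i - e n i|}) atTop (nhds 1) := by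
      have := ENNReal.Tendsto.sub
        (tendsto_const_nhds : Tendsto (fun _ : ℕ => (1:ENNReal)) atTop (nhds 1)) hB
        (Or.inl ENNReal.one_ne_top)
      simpa using this
    refine tendsto_of_tendsto_of_tendsto_of_le_of_le' hTlow tendsto_const_nhds ?_ ?_
    · filter_upwards [eventually_ge_atTop (max nstar 1)] with n hn
      have hsub : Set.univ ⊆ {ω | IsUnit (Mh n ω).det}
          ∪ {ω | η/2 ≤ ⨆ i : Fin n, |eh n ω i - e n i|} := by
        intro ω _
        by_cases hca : η/2 ≤ ⨆ i : Fin n, |eh n ω i - e n i|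
        · exact Or.inr hca
        · exact Or.inl (hinv n hn ω (lt_of_not_ge hca))
      have h5 : (1:ENNReal) ≤ μ {ω | IsUnit (Mh n ω).det}
          + μ {ω | η/2 ≤ ⨆ i : Fin n, |eh n ω i - e n i|} := by
        calc (1:ENNReal) = μ Set.univ := measure_univ.symm
          _ ≤ μ ({ω | IsUnit (Mh n ω).det}
              ∪ {ω | η/2 ≤ ⨆ i : Fin n, |eh n ω i - e n i|}) := measure_mono hsub
          _ ≤ _ := measure_union_le _ _
      exact tsub_le_iff_right.mpr h5
    · exact Filter.Eventually.of_forall (fun n => prob_le_one)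
  · intro ε hε
    rw [ENNReal.tendsto_nhds_zero]
    intro θ hθ
    have hmin : (0:ENNReal) < min 1 θ := lt_min one_pos hθ
    have hminne : min 1 θ ≠ ⊤ := ne_top_of_le_ne_top ENNReal.one_ne_top (min_le_left _ _)
    have ht0 : 0 < (min 1 θ).toReal := ENNReal.toReal_pos (ne_of_gt hmin) hminne
    set t : ℝ := (min 1 θ).toReal with htdef
    have hofr : ENNReal.ofReal t = min 1 θ := ENNReal.ofReal_toReal hminne
    set K : ℝ := max 1 (3*σ2/t) with hKdef
    have hK1 : (1:ℝ) ≤ K := le_max_left _ _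
    have hK0 : (0:ℝ) < K := lt_of_lt_of_le one_pos hK1
    have hσK : σ2/K ≤ t/3 := by
      have h6 : 3*σ2/t ≤ K := le_max_right _ _
      rw [div_le_iff₀ ht0] at h6
      rw [div_le_div_iff₀ hK0 (by norm_num)]
      nlinarith [hσ2, ht0, hK0]
    have hsc : (0:ℝ) < Real.sqrt c := Real.sqrt_pos.mpr hc
    have hG0 : (0:ℝ) ≤ vnorm γ + Real.sqrt (K/c)/η^2 :=
      add_nonneg (vnorm_nonneg γ) (div_nonneg (Real.sqrt_nonneg _) (sq_nonneg η))
    set T : ℝ := (4/η^2) * (3*Real.sqrt (C/c)*(vnorm γ + Real.sqrt (K/c)/η^2)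
      + (Real.sqrt (C/c)*vnorm γ + Real.sqrt (K/c)) + 2/Real.sqrt c) with hTdef
    have hT0 : 0 ≤ T := by
      apply mul_nonneg (div_nonneg (by norm_num) (sq_nonneg η))
      have h7 : (0:ℝ) ≤ 3*Real.sqrt (C/c)*(vnorm γ + Real.sqrt (K/c)/η^2) :=
        mul_nonneg (mul_nonneg (by norm_num) (Real.sqrt_nonneg _)) hG0
      have h8 : (0:ℝ) ≤ Real.sqrt (C/c)*vnorm γ + Real.sqrt (K/c) :=
        add_nonneg (mul_nonneg (Real.sqrt_nonneg _) (vnorm_nonneg γ)) (Real.sqrt_nonneg _)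
      have h9 : (0:ℝ) ≤ 2/Real.sqrt c := div_nonneg (by norm_num) (le_of_lt hsc)
      linarith
    set δ : ℝ := min (η/2) (min 1 (ε/(T+1))) with hδdef
    have hδpos : 0 < δ :=
      lt_min (by linarith) (lt_min one_pos (div_pos hε (by linarith)))
    have hδ1 : δ ≤ 1 := le_trans (min_le_right _ _) (min_le_left _ _)
    have hδη : δ ≤ η/2 := min_le_left _ _
    have hbound : (4/η^2) * (3*δ*Real.sqrt (C/c)*(vnorm γ + Real.sqrt (K/c)/η^2)
        + δ*(Real.sqrt (C/c)*vnorm γ + Real.sqrt (K/c)) + 2*Real.sqrt (δ^2/c)) < ε := by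
      have hsqδ : Real.sqrt (δ^2/c) = δ / Real.sqrt c := by
        rw [Real.sqrt_div (sq_nonneg δ) c, Real.sqrt_sq (le_of_lt hδpos)]
      rw [hsqδ]
      have hEq : (4/η^2) * (3*δ*Real.sqrt (C/c)*(vnorm γ + Real.sqrt (K/c)/η^2)
          + δ*(Real.sqrt (C/c)*vnorm γ + Real.sqrt (K/c)) + 2*(δ/Real.sqrt c)) = δ * T := by
        rw [hTdef]
        have hη0' : η ≠ 0 := ne_of_gt hη0
        have hsc0 : Real.sqrt c ≠ 0 := ne_of_gt hsc
        field_simp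
      rw [hEq]
      have hδε : δ ≤ ε/(T+1) := le_trans (min_le_right _ _) (min_le_right _ _)
      have h10 : δ * T ≤ (ε/(T+1)) * T := mul_le_mul_of_nonneg_right hδε hT0
      have h11 : (ε/(T+1)) * T < ε := by
        rw [div_mul_eq_mul_div, div_lt_iff₀ (by linarith : (0:ℝ) < T+1)]
        nlinarith [hε, hT0]
      linarith
    have hθ3 : (0:ENNReal) < θ/3 := ENNReal.div_pos (ne_of_gt hθ) (by norm_num)
    have hB1 := (ENNReal.tendsto_nhds_zero.mp (h1 δ hδpos)) (θ/3) hθ3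
    have hB2 := (ENNReal.tendsto_nhds_zero.mp (h2 (δ^2) (by positivity))) (θ/3) hθ3
    filter_upwards [hB1, hB2, eventually_ge_atTop (max nstar 1)] with n hb1 hb2 hn
    have hns : nstar ≤ n := le_trans (le_max_left _ _) hn
    have hn1 : 0 < n := le_trans (le_max_right _ _) hn
    have hn' : (0:ℝ) < n := by exact_mod_cast hn1
    haveI : Nonempty (Fin n) := ⟨⟨0, hn1⟩⟩
    -- Markov bound
    have hmark : μ {ω | (n:ℝ)*K ≤ ∑ i, (εt n ω i)^2} ≤ ENNReal.ofReal (σ2/K) := by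
      have hfint : Integrable (fun ω => ∑ i, (εt n ω i)^2) μ :=
        integrable_finset_sum _ (fun i _ => hεint n hns i)
      have hml := mul_meas_ge_le_integral_of_nonneg
        (Filter.Eventually.of_forall (fun ω => Finset.sum_nonneg (fun i _ => sq_nonneg _)))
        hfint ((n:ℝ)*K)
      have hintsum : ∫ ω, (∑ i, (εt n ω i)^2) ∂μ = ∑ i, ∫ ω, (εt n ω i)^2 ∂μ :=
        integral_finset_sum _ (fun i _ => hεint n hns i)
      have hsum_le : ∑ i : Fin n, ∫ ω, (εt n ω i)^2 ∂μ ≤ (n:ℝ)*σ2 := by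
        calc ∑ i : Fin n, ∫ ω, (εt n ω i)^2 ∂μ ≤ ∑ _i : Fin n, σ2 :=
              Finset.sum_le_sum (fun i _ => hεvar n hns i)
          _ = (n:ℝ)*σ2 := by
              rw [Finset.sum_const, Finset.card_univ, Fintype.card_fin, nsmul_eq_mul]
      rw [hintsum, measureReal_def] at hml
      have htr : (μ {ω | (n:ℝ)*K ≤ ∑ i, (εt n ω i)^2}).toReal ≤ σ2/K := by
        have hnn := ENNReal.toReal_nonneg
          (a := μ {ω | (n:ℝ)*K ≤ ∑ i, (εt n ω i)^2})
        rw [le_div_iff₀ hK0]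
        nlinarith [hml, hsum_le, hn', hK0, hnn]
      calc μ {ω | (n:ℝ)*K ≤ ∑ i, (εt n ω i)^2}
          = ENNReal.ofReal ((μ {ω | (n:ℝ)*K ≤ ∑ i, (εt n ω i)^2}).toReal) :=
            (ENNReal.ofReal_toReal (measure_ne_top μ _)).symm
        _ ≤ ENNReal.ofReal (σ2/K) := ENNReal.ofReal_le_ofReal htr
    have hmark3 : μ {ω | (n:ℝ)*K ≤ ∑ i, (εt n ω i)^2} ≤ θ/3 := by
      refine le_trans hmark ?_
      calc ENNReal.ofReal (σ2/K) ≤ ENNReal.ofReal (t/3) := ENNReal.ofReal_le_ofReal hσK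
        _ = ENNReal.ofReal t / ENNReal.ofReal 3 := ENNReal.ofReal_div_of_pos (by norm_num)
        _ = min 1 θ / 3 := by rw [hofr]; norm_num
        _ ≤ θ/3 := by gcongr; exact min_le_right _ _
    -- inclusion in bad events
    have hincl : {ω | ε ≤ vnorm (γo n ω - γp n ω)} ⊆
        ({ω | δ ≤ ⨆ i : Fin n, |eh n ω i - e n i|}
          ∪ {ω | δ^2 ≤ (1 / (n:ℝ)) * ∑ i, (mh n ω i - m n ω i)^2})
        ∪ {ω | (n:ℝ)*K ≤ ∑ i, (εt n ω i)^2} := by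
      intro ω hω
      by_cases hc1 : δ ≤ ⨆ i : Fin n, |eh n ω i - e n i|
      · exact Or.inl (Or.inl hc1)
      by_cases hc2 : δ^2 ≤ (1 / (n:ℝ)) * ∑ i, (mh n ω i - m n ω i)^2
      · exact Or.inl (Or.inr hc2)
      by_cases hc3 : (n:ℝ)*K ≤ ∑ i, (εt n ω i)^2
      · exact Or.inr hc3
      exfalso
      push_neg at hc1 hc2 hc3
      have hbdd : BddAbove (Set.range (fun i : Fin n => |eh n ω i - e n i|)) :=
        (Set.finite_range _).bddAbove
      have heach : ∀ i, |eh n ω i - e n i| ≤ δ :=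
        fun i => le_of_lt (lt_of_le_of_lt (le_ciSup hbdd i) hc1)
      have hah' : ∀ i, |(W n ω i - eh n ω i) - (W n ω i - e n i)| ≤ δ := by
        intro i
        have h4 : (W n ω i - eh n ω i) - (W n ω i - e n i) = -(eh n ω i - e n i) := by ring
        rw [h4, abs_neg]; exact heach i
      have hdm' : ∑ i, (mh n ω i - m n ω i)^2 ≤ (n:ℝ) * δ^2 := by
        have h12 := mul_lt_mul_of_pos_left hc2 hn'
        rw [← mul_assoc, mul_one_div_cancel (ne_of_gt hn'), one_mul] at h12
        linarith
      have hym : ∀ i, (Y n ω i - m n ω i)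
          = (W n ω i - e n i) * ((X n) *ᵥ γ) i + εt n ω i := by
        intro i
        rw [hY n ω]
        simp only [Pi.add_apply, diag_mulVec]
        ring
      have hMd : M n ω = (X n)ᵀ
          * Matrix.diagonal (fun i => (W n ω i - e n i) * (W n ω i - e n i)) * X n := by
        rw [hM n ω, sq, Matrix.diagonal_mul_diagonal]
      have hMhd : Mh n ω = (X n)ᵀ
          * Matrix.diagonal (fun i => (W n ω i - eh n ω i) * (W n ω i - eh n ω i)) * X n := by
        rw [hMh n ω, sq, Matrix.diagonal_mul_diagonal]
      have hγoEq : γo n ω = (M n ω)⁻¹ *ᵥ ((X n)ᵀ *ᵥ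
          (fun i => (W n ω i - e n i) * (Y n ω i - m n ω i))) := by
        rw [hγo n ω, ← Matrix.mulVec_mulVec, ← Matrix.mulVec_mulVec, diag_mulVec]
        rfl
      have hγpEq : γp n ω = (Mh n ω)⁻¹ *ᵥ ((X n)ᵀ *ᵥ
          (fun i => (W n ω i - eh n ω i) * ((Y n ω i - m n ω i) - (mh n ω i - m n ω i)))) := by
        have hypm : (fun i => (W n ω i - eh n ω i) * (Y n ω - mh n ω) i)
            = (fun i => (W n ω i - eh n ω i)
                * ((Y n ω i - m n ω i) - (mh n ω i - m n ω i))) := by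
          funext i
          have hsub : (Y n ω - mh n ω) i = Y n ω i - mh n ω i := rfl
          rw [hsub]; ring
        rw [hγp n ω, ← Matrix.mulVec_mulVec, ← Matrix.mulVec_mulVec, diag_mulVec, hypm]
      have hkey := key_bound hn1 hc hC hη0 (le_of_lt (lt_of_lt_of_le one_pos hK1))
        (le_of_lt hδpos) hδ1 hδη (sq_nonneg δ) (X n) (hXrow n hns) (hpos n hns) γ
        (fun i => W n ω i - e n i) (fun i => W n ω i - eh n ω i) (εt n ω)
        (fun i => mh n ω i - m n ω i) (fun i => Y n ω i - m n ω i)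
        (fun i => (ha n hns ω i).1) (fun i => (ha n hns ω i).2) hah'
        (le_of_lt hc3) hdm' hym (M n ω) (Mh n ω) hMd hMhd (γo n ω) (γp n ω) hγoEq hγpEq
      have hωle : ε ≤ vnorm (γo n ω - γp n ω) := hω
      linarith [hkey, hbound, hωle]
    calc μ {ω | ε ≤ vnorm (γo n ω - γp n ω)}
        ≤ μ (({ω | δ ≤ ⨆ i : Fin n, |eh n ω i - e n i|}
          ∪ {ω | δ^2 ≤ (1 / (n:ℝ)) * ∑ i, (mh n ω i - m n ω i)^2})
          ∪ {ω | (n:ℝ)*K ≤ ∑ i, (εt n ω i)^2}) := measure_mono hincl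
      _ ≤ μ ({ω | δ ≤ ⨆ i : Fin n, |eh n ω i - e n i|}
          ∪ {ω | δ^2 ≤ (1 / (n:ℝ)) * ∑ i, (mh n ω i - m n ω i)^2})
          + μ {ω | (n:ℝ)*K ≤ ∑ i, (εt n ω i)^2} := measure_union_le _ _
      _ ≤ (μ {ω | δ ≤ ⨆ i : Fin n, |eh n ω i - e n i|}
          + μ {ω | δ^2 ≤ (1 / (n:ℝ)) * ∑ i, (mh n ω i - m n ω i)^2})
          + μ {ω | (n:ℝ)*K ≤ ∑ i, (εt n ω i)^2} :=
            add_le_add (measure_union_le _ _) le_rfl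
      _ ≤ (θ/3 + θ/3) + θ/3 := add_le_add (add_le_add hb1 hb2) hmark3
      _ = θ := ENNReal.add_thirds θ
end

section
/- Fix d ∈ ℕ, constants η ∈ (0, 1/2), c, C > 0, and n* ≥ d. For each n ≥ n*, let X^{(n)} ∈ ℝ^{n×d} be deterministic with rows satisfying ‖X_i‖₂² ≤ C and Xᵀ X ⪰ n c I_d, let x̄^{(n)} ∈ ℝ^d with ‖x̄^{(n)}‖₂² ≤ C, let p_AT^{(n)}, p_C^{(n)} ∈ ℝ^n be deterministic, and let 𝒞_n ⊆ [0,1]^n be a nonempty feasible set such that w(e)_i = p_AT,i + p_C,i e_i ∈ [η, 1−η] for every e ∈ 𝒞_n and every i. For e ∈ 𝒞_n define the oracle variance V_n(e) = n x̄ᵀ E[(Xᵀ diag(W − w(e))² X)⁻¹] x̄, where W has independent Bernoulli(w(e)_i) entries, and, given random vectors p̂_AT^{(n)}, p̂_C^{(n)} on a common probability space, define ŵ(e)_i = p̂_AT,i + p̂_C,i e_i and the plug-in criterion Ṽ_n(e) = n x̄ᵀ (Xᵀ diag(ŵ(e)_i(1 − ŵ(e)_i)) X)⁻¹ x̄ (on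 the event that this matrix is invertible). Assume max_{i ≤ n} (|p̂_AT,i − p_AT,i| + |p̂_C,i − p_C,i|) → 0 in probability as n → ∞. Let e*_n ∈ 𝒞_n minimize V_n over 𝒞_n and let ê*_n be a random element of 𝒞_n that almost surely minimizes Ṽ_n over 𝒞_n. Then |V_n(ê*_n) − V_n(e*_n)| → 0 in probability as n → ∞. -/
open Matrix Set MeasureTheory Filter

namespace S18
variable {n d : ℕ}


lemma mv_xdx (X : Matrix (Fin n) (Fin d) ℝ) (v : Fin n → ℝ) (y : Fin d → ℝ) :
    (Xᵀ * Matrix.diagonal v * X) *ᵥ y = Xᵀ *ᵥ (fun i => v i * (X *ᵥ y) i) := by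
  rw [Matrix.mul_assoc, ← Matrix.mulVec_mulVec, ← Matrix.mulVec_mulVec]
  have h : Matrix.diagonal v *ᵥ (X *ᵥ y) = fun i => v i * (X *ᵥ y) i :=
    funext fun i => Matrix.mulVec_diagonal _ _ _
  rw [h]

lemma dp_t (X : Matrix (Fin n) (Fin d) ℝ) (a : Fin d → ℝ) (z : Fin n → ℝ) :
    a ⬝ᵥ (Xᵀ *ᵥ z) = (X *ᵥ a) ⬝ᵥ z := by
  rw [Matrix.dotProduct_mulVec, Matrix.vecMul_transpose]

lemma qf (X : Matrix (Fin n) (Fin d) ℝ) (v : Fin n → ℝ) (a b : Fin d → ℝ) :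
    a ⬝ᵥ (Xᵀ * Matrix.diagonal v * X) *ᵥ b = ∑ i, v i * (X *ᵥ a) i * (X *ᵥ b) i := by
  rw [mv_xdx, dp_t, dotProduct]
  exact Finset.sum_congr rfl fun i _ => by ring

lemma entry_xdx (X : Matrix (Fin n) (Fin d) ℝ) (v : Fin n → ℝ) (y : Fin d → ℝ) (k : Fin d) :
    ((Xᵀ * Matrix.diagonal v * X) *ᵥ y) k = ∑ i, X i k * (v i * (X *ᵥ y) i) := by
  rw [mv_xdx]; rfl



lemma dp_self_nonneg (v : Fin d → ℝ) : 0 ≤ v ⬝ᵥ v :=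
  Finset.sum_nonneg fun i _ => mul_self_nonneg _

lemma cs (a b : Fin d → ℝ) : (a ⬝ᵥ b)^2 ≤ (a ⬝ᵥ a) * (b ⬝ᵥ b) := by
  have := Finset.sum_mul_sq_le_sq_mul_sq Finset.univ a b
  simpa [dotProduct, pow_two] using this


variable {M : Matrix (Fin d) (Fin d) ℝ} {m : ℝ}

lemma herm (hsym : Mᵀ = M) : M.IsHermitian := by
  show Mᴴ = M
  rw [Matrix.conjTranspose]
  ext i j; have := congrFun (congrFun hsym i) j; simpa using this

lemma posdef (hsym : Mᵀ = M) (hm : 0 < m)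
    (hlb : ∀ v : Fin d → ℝ, m * (v ⬝ᵥ v) ≤ v ⬝ᵥ M *ᵥ v) : M.PosDef := by
  refine Matrix.PosDef.of_dotProduct_mulVec_pos (herm hsym) fun x hx => ?_
  have h1 : 0 < x ⬝ᵥ x := by
    rcases (dp_self_nonneg x).lt_or_eq with h | h
    · exact h
    · exact absurd ((dotProduct_self_eq_zero).mp h.symm) hx
  have := hlb x
  simp only [star_trivial]
  nlinarith

lemma inv_mulVec (hsym : Mᵀ = M) (hm : 0 < m)
    (hlb : ∀ v : Fin d → ℝ, m * (v ⬝ᵥ v) ≤ v ⬝ᵥ M *ᵥ v) (v : Fin d → ℝ) :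
    M *ᵥ (M⁻¹ *ᵥ v) = v := by
  rw [Matrix.mulVec_mulVec, Matrix.mul_nonsing_inv _ (posdef hsym hm hlb).det_pos.ne'.isUnit,
    Matrix.one_mulVec]

lemma inv_symm (hsym : Mᵀ = M) : (M⁻¹)ᵀ = M⁻¹ := by
  rw [Matrix.transpose_nonsing_inv, hsym]

lemma inv_bounds (hsym : Mᵀ = M) (hm : 0 < m)
    (hlb : ∀ v : Fin d → ℝ, m * (v ⬝ᵥ v) ≤ v ⬝ᵥ M *ᵥ v) (v : Fin d → ℝ) :
    (M⁻¹ *ᵥ v) ⬝ᵥ (M⁻¹ *ᵥ v) ≤ (v ⬝ᵥ v) / m^2 ∧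
    0 ≤ v ⬝ᵥ (M⁻¹ *ᵥ v) ∧ v ⬝ᵥ (M⁻¹ *ᵥ v) ≤ (v ⬝ᵥ v) / m := by
  set u := M⁻¹ *ᵥ v with hu
  have hMu : M *ᵥ u = v := inv_mulVec hsym hm hlb v
  have hs : 0 ≤ u ⬝ᵥ u := dp_self_nonneg u
  have ht : 0 ≤ v ⬝ᵥ v := dp_self_nonneg v
  have h1 : m * (u ⬝ᵥ u) ≤ u ⬝ᵥ v := by have := hlb u; rwa [hMu] at this
  have hcs : (u ⬝ᵥ v)^2 ≤ (u ⬝ᵥ u) * (v ⬝ᵥ v) := cs u v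
  have hvu : v ⬝ᵥ u = u ⬝ᵥ v := dotProduct_comm v u
  have key : m^2 * (u ⬝ᵥ u) ≤ v ⬝ᵥ v := by
    rcases eq_or_lt_of_le hs with h | h
    · rw [← h]; simpa using ht
    · have h2 := pow_le_pow_left₀ (mul_nonneg hm.le hs) h1 2
      nlinarith [h2, hcs, h]
  have huv0 : 0 ≤ u ⬝ᵥ v := le_trans (by positivity) h1
  refine ⟨?_, by rw [hvu]; exact huv0, ?_⟩
  · rw [le_div_iff₀ (by positivity)]; nlinarith
  · rw [hvu, le_div_iff₀ hm]; nlinarith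



lemma sum_pi_bool (g : Fin n → Bool → ℝ) :
    ∑ b : Fin n → Bool, ∏ i, g i (b i) = ∏ i, (g i true + g i false) := by
  have h := Fintype.prod_sum (κ := fun _ : Fin n => Bool) (f := g)
  rw [← h]
  exact Finset.prod_congr rfl fun i _ => by simp [Fintype.sum_bool, add_comm]

/-- the Bernoulli weight -/
def piw (w : Fin n → ℝ) (b : Fin n → Bool) : ℝ := ∏ i, if b i then w i else 1 - w i

lemma piw_nonneg {w : Fin n → ℝ} (hw : ∀ i, 0 ≤ w i ∧ w i ≤ 1) (b : Fin n → Bool) :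
    0 ≤ piw w b :=
  Finset.prod_nonneg fun i _ => by rcases b i with _|_ <;> simp [(hw i).1, (hw i).2] <;> linarith [(hw i).2]

lemma sum_piw (w : Fin n → ℝ) : ∑ b : Fin n → Bool, piw w b = 1 := by
  unfold piw
  rw [sum_pi_bool (fun i β => if β then w i else 1 - w i)]
  simp

lemma sum_piw_mul (w : Fin n → ℝ) (j : Fin n) (f : Bool → ℝ) :
    ∑ b : Fin n → Bool, piw w b * f (b j)
      = w j * f true + (1 - w j) * f false := by
  have h1 : ∀ b : Fin n → Bool, piw w b * f (b j)
      = ∏ i, ((if b i then w i else 1 - w i) * (if i = j then f (b i) else 1)) := by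
    intro b
    rw [Finset.prod_mul_distrib, Finset.prod_ite_eq' Finset.univ j (fun i => f (b i))]
    simp [piw]
  simp only [h1]
  rw [sum_pi_bool (fun i β => (if β then w i else 1 - w i) * (if i = j then f β else 1))]
  rw [Finset.prod_eq_single j]
  · simp
  · intro i _ hij; simp [hij]
  · simp

lemma sum_piw_mul_two (w : Fin n → ℝ) (j k : Fin n) (hjk : j ≠ k) (φ ψ : Bool → ℝ) :
    ∑ b : Fin n → Bool, piw w b * (φ (b j) * ψ (b k))
      = (w j * φ true + (1 - w j) * φ false) * (w k * ψ true + (1 - w k) * ψ false) := by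
  have h1 : ∀ b : Fin n → Bool, piw w b * (φ (b j) * ψ (b k))
      = ∏ i, ((if b i then w i else 1 - w i) *
          ((if i = j then φ (b i) else 1) * (if i = k then ψ (b i) else 1))) := by
    intro b
    rw [Finset.prod_mul_distrib, Finset.prod_mul_distrib,
      Finset.prod_ite_eq' Finset.univ j (fun i => φ (b i)),
      Finset.prod_ite_eq' Finset.univ k (fun i => ψ (b i))]
    simp [piw]
  simp only [h1]
  rw [sum_pi_bool (fun i β => (if β then w i else 1 - w i) *
      ((if i = j then φ β else 1) * (if i = k then ψ β else 1)))]
  rw [← Finset.mul_prod_erase Finset.univ _ (Finset.mem_univ j),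
    ← Finset.mul_prod_erase _ _ (Finset.mem_erase.mpr ⟨Ne.symm hjk, Finset.mem_univ k⟩),
    Finset.prod_eq_one]
  · simp [hjk, Ne.symm hjk]
  · intro i hi
    simp only [Finset.mem_erase] at hi
    simp [hi.1, hi.2.1]



lemma dp_sq (a : Fin d → ℝ) : a ⬝ᵥ a = ∑ j, (a j)^2 := by
  simp [dotProduct, pow_two]

lemma symm_dot {M : Matrix (Fin d) (Fin d) ℝ} (hsym : Mᵀ = M) (a b : Fin d → ℝ) :
    (M *ᵥ a) ⬝ᵥ b = a ⬝ᵥ (M *ᵥ b) := by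
  calc (M *ᵥ a) ⬝ᵥ b = a ᵥ* Mᵀ ⬝ᵥ b := by rw [Matrix.vecMul_transpose]
  _ = a ᵥ* M ⬝ᵥ b := by rw [hsym]
  _ = a ⬝ᵥ (M *ᵥ b) := (Matrix.dotProduct_mulVec a M b).symm

lemma bilin_bound (v a b : Fin n → ℝ) (t S : ℝ) (ht : 0 ≤ t) (hS : 0 ≤ S)
    (hv : ∀ i, |v i| ≤ t) (ha : ∑ i, (a i)^2 ≤ S) (hb : ∑ i, (b i)^2 ≤ S) :
    |∑ i, v i * a i * b i| ≤ t * S := by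
  have hcs := Finset.sum_mul_sq_le_sq_mul_sq Finset.univ (fun i => v i * a i) b
  have h1 : ∑ i, (v i * a i)^2 ≤ t^2 * ∑ i, (a i)^2 := by
    rw [Finset.mul_sum]
    refine Finset.sum_le_sum fun i _ => ?_
    have hv2 : (v i)^2 ≤ t^2 := by nlinarith [sq_abs (v i), abs_nonneg (v i), hv i]
    calc (v i * a i)^2 = (v i)^2 * (a i)^2 := by ring
    _ ≤ t^2 * (a i)^2 := mul_le_mul_of_nonneg_right hv2 (sq_nonneg _)
  have h2 : (∑ i, v i * a i * b i)^2 ≤ (t*S)^2 := by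
    calc (∑ i, v i * a i * b i)^2 ≤ (∑ i, (v i * a i)^2) * ∑ i, (b i)^2 := hcs
    _ ≤ (t^2 * S) * S := by
        have hbnn : (0:ℝ) ≤ ∑ i, (b i)^2 := Finset.sum_nonneg fun i _ => sq_nonneg _
        have hann : (0:ℝ) ≤ ∑ i, (v i * a i)^2 := Finset.sum_nonneg fun i _ => sq_nonneg _
        have := mul_le_mul_of_nonneg_left ha (sq_nonneg t)
        nlinarith
    _ = (t*S)^2 := by ring
  nlinarith [abs_nonneg (∑ i, v i * a i * b i), sq_abs (∑ i, v i * a i * b i),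
    mul_nonneg ht hS]


lemma inv_mulVec' {M : Matrix (Fin d) (Fin d) ℝ} {m : ℝ} (hsym : Mᵀ = M) (hm : 0 < m)
    (hlb : ∀ v : Fin d → ℝ, m * (v ⬝ᵥ v) ≤ v ⬝ᵥ M *ᵥ v) (v : Fin d → ℝ) :
    M⁻¹ *ᵥ (M *ᵥ v) = v := by
  rw [Matrix.mulVec_mulVec, Matrix.nonsing_inv_mul _ (posdef hsym hm hlb).det_pos.ne'.isUnit,
    Matrix.one_mulVec]


lemma sbnd1 {e t : ℝ} (h0 : 0 < e) (h2 : e ≤ t) (h3 : t ≤ 1 - e) : e^2/4 ≤ ((1:ℝ) - t)^2 := by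
  nlinarith

lemma sbnd2 {e t : ℝ} (h0 : 0 < e) (h2 : e ≤ t) : e^2/4 ≤ t^2 := by nlinarith

lemma sbnd3 {e t : ℝ} (h0 : 0 < e) (h2 : e/2 ≤ t) (h3 : t ≤ 1 - e/2) : e^2/4 ≤ t*(1-t) := by
  nlinarith

lemma sbnd4 {e t : ℝ} (h0 : 0 < e) (hh : e < 1/2) (h2 : e ≤ t) (h3 : t ≤ 1 - e) :
    |t*(1-t) - (1-t)^2| ≤ 1 ∧ |t*(1-t) - t^2| ≤ 1 := by
  constructor <;> rw [abs_le] <;> constructor <;> nlinarith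

lemma sbnd5 {s t δ : ℝ} (h1 : 0 ≤ s) (h2 : s ≤ 1) (h3 : 0 ≤ t) (h4 : t ≤ 1)
    (h5 : |s - t| ≤ δ) : |s*(1-s) - t*(1-t)| ≤ δ := by
  have he : s*(1-s) - t*(1-t) = (s-t)*(1-s-t) := by ring
  rw [he, abs_mul]
  have h6 : |1 - s - t| ≤ 1 := by rw [abs_le]; constructor <;> linarith
  calc |s - t| * |1 - s - t| ≤ |s - t| * 1 := mul_le_mul_of_nonneg_left h6 (abs_nonneg _)
  _ = |s - t| := mul_one _
  _ ≤ δ := h5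

lemma sbnd6 {a pt pf : ℝ} (ha0 : 0 ≤ a) (ha1 : a ≤ 1) (h1 : |pt| ≤ 1) (h2 : |pf| ≤ 1) :
    a * (pt*pt) + (1-a)*(pf*pf) ≤ 1 ∧ 0 ≤ a*(pt*pt)+(1-a)*(pf*pf) := by
  have e1 : pt*pt ≤ 1 := by nlinarith [abs_nonneg pt, sq_abs pt]
  have e2 : pf*pf ≤ 1 := by nlinarith [abs_nonneg pf, sq_abs pf]
  constructor <;> nlinarith [mul_self_nonneg pt, mul_self_nonneg pf]

lemma dot_sum_smul_mulVec {ι : Type*} [Fintype ι] (c : ι → ℝ)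
    (f : ι → Matrix (Fin d) (Fin d) ℝ) (v : Fin d → ℝ) :
    v ⬝ᵥ ((∑ b, c b • f b) *ᵥ v) = ∑ b, c b * (v ⬝ᵥ (f b *ᵥ v)) := by
  have h1 : (∑ b, c b • f b) *ᵥ v = ∑ b, c b • (f b *ᵥ v) := by
    ext k
    calc ((∑ b, c b • f b) *ᵥ v) k
        = ∑ l, (∑ b, c b * f b k l) * v l := by
          simp [Matrix.mulVec, dotProduct, Matrix.sum_apply]
      _ = ∑ l, ∑ b, c b * f b k l * v l := Finset.sum_congr rfl fun l _ => by
          rw [Finset.sum_mul]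
      _ = ∑ b, ∑ l, c b * f b k l * v l := Finset.sum_comm
      _ = ∑ b, (c b • (f b *ᵥ v)) k := by
          refine Finset.sum_congr rfl fun b _ => ?_
          simp [Matrix.mulVec, dotProduct, Finset.mul_sum, mul_assoc]
      _ = (∑ b, c b • (f b *ᵥ v)) k := by rw [Finset.sum_apply]
  rw [h1]
  calc v ⬝ᵥ (∑ b, c b • (f b *ᵥ v))
      = ∑ k, v k * ∑ b, c b * (f b *ᵥ v) k := by
        simp [dotProduct, Finset.sum_apply]
    _ = ∑ k, ∑ b, v k * (c b * (f b *ᵥ v) k) := Finset.sum_congr rfl fun k _ => by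
        rw [Finset.mul_sum]
    _ = ∑ b, ∑ k, v k * (c b * (f b *ᵥ v) k) := Finset.sum_comm
    _ = ∑ b, c b * (v ⬝ᵥ (f b *ᵥ v)) := by
        refine Finset.sum_congr rfl fun b _ => ?_
        simp [dotProduct, Finset.mul_sum]
        exact Finset.sum_congr rfl fun k _ => by ring

set_option maxHeartbeats 2000000 in
lemma core (hn : 1 ≤ n) (η c C : ℝ) (hη0 : 0 < η) (hη2 : η < 1/2)
    (hc : 0 < c) (hC : 0 < C)
    (X : Matrix (Fin n) (Fin d) ℝ) (hXrow : ∀ i, ∑ j, (X i j)^2 ≤ C)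
    (hXlb : ∀ v : Fin d → ℝ, ((n:ℝ)*c) * (v ⬝ᵥ v) ≤ v ⬝ᵥ (Xᵀ * X) *ᵥ v)
    (xb : Fin d → ℝ) (hxb : ∑ j, (xb j)^2 ≤ C)
    (w wh : Fin n → ℝ) (hw : ∀ i, η ≤ w i ∧ w i ≤ 1 - η)
    (δ : ℝ) (hδ0 : 0 ≤ δ) (hδη : δ ≤ η/2) (hwh : ∀ i, |wh i - w i| ≤ δ) :
    |(n : ℝ) * (xb ⬝ᵥ ((∑ b : Fin n → Bool, piw w b •
        (Xᵀ * Matrix.diagonal (fun i => ((if b i then (1:ℝ) else 0) - w i)^2) * X)⁻¹) *ᵥ xb))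
      - n * (xb ⬝ᵥ ((Xᵀ * Matrix.diagonal (fun i => wh i * (1 - wh i)) * X)⁻¹ *ᵥ xb))|
      ≤ 16*C^2/(η^4*c^2) * δ + 64*C^3/(η^6*c^3) / n := by
  have hn0 : (0:ℝ) < n := by exact_mod_cast hn
  set m₀ : ℝ := η^2/4 with hm₀def
  have hm₀ : 0 < m₀ := by positivity
  set m : ℝ := m₀ * ((n:ℝ)*c) with hmdef
  have hm : 0 < m := by positivity
  set Db : (Fin n → Bool) → Fin n → ℝ :=
    fun b i => ((if b i then (1:ℝ) else 0) - w i)^2 with hDbdef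
  set Eb : Fin n → ℝ := fun i => w i * (1 - w i) with hEbdef
  set Dh : Fin n → ℝ := fun i => wh i * (1 - wh i) with hDhdef
  -- pointwise bounds on the diagonals
  have hwh2 : ∀ i, η/2 ≤ wh i ∧ wh i ≤ 1 - η/2 := by
    intro i
    obtain ⟨h1, h2⟩ := abs_le.mp (hwh i)
    exact ⟨by linarith [(hw i).1], by linarith [(hw i).2]⟩
  have hDb_lb : ∀ b i, m₀ ≤ Db b i := by
    intro b i
    obtain ⟨h1, h2⟩ := hw i
    rw [hm₀def]
    by_cases hb : b i
    · have hd : Db b i = (1 - w i)^2 := by simp [hDbdef, hb]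
      rw [hd]; exact sbnd1 hη0 h1 h2
    · have hd : Db b i = (w i)^2 := by simp [hDbdef, hb]
      rw [hd]; exact sbnd2 hη0 h1
  have hEb_lb : ∀ i, m₀ ≤ Eb i := by
    intro i; obtain ⟨h1, h2⟩ := hw i
    rw [hm₀def]; exact sbnd3 hη0 (by linarith) (by linarith)
  have hDh_lb : ∀ i, m₀ ≤ Dh i := by
    intro i; obtain ⟨h1, h2⟩ := hwh2 i
    rw [hm₀def]; exact sbnd3 hη0 h1 h2
  have hdiffh : ∀ i, |Eb i - Dh i| ≤ δ := by
    intro i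
    obtain ⟨h1, h2⟩ := hw i
    obtain ⟨h3, h4⟩ := hwh2 i
    refine sbnd5 (by linarith) (by linarith) (by linarith) (by linarith) ?_
    have := hwh i; rw [abs_sub_comm]; exact this
  have hdiffE : ∀ b i, |Eb i - Db b i| ≤ 1 := by
    intro b i
    obtain ⟨h1, h2⟩ := hw i
    have hEbi : Eb i = w i * (1 - w i) := rfl
    by_cases hb : b i
    · have hd : Db b i = (1 - w i)^2 := by simp [hDbdef, hb]
      rw [hd, hEbi]; exact (sbnd4 hη0 hη2 h1 h2).1
    · have hd : Db b i = (w i)^2 := by simp [hDbdef, hb]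
      rw [hd, hEbi]; exact (sbnd4 hη0 hη2 h1 h2).2
  -- matrix infrastructure
  have hsymXDX : ∀ v : Fin n → ℝ,
      (Xᵀ * Matrix.diagonal v * X)ᵀ = Xᵀ * Matrix.diagonal v * X := by
    intro v
    rw [Matrix.transpose_mul, Matrix.transpose_mul, Matrix.transpose_transpose,
      Matrix.diagonal_transpose, Matrix.mul_assoc]
  have hXsq : ∀ a : Fin d → ℝ, ∑ i, ((X *ᵥ a) i)^2 = a ⬝ᵥ (Xᵀ * X) *ᵥ a := by
    intro a
    have h1 : Xᵀ * X = Xᵀ * Matrix.diagonal (fun _ : Fin n => (1:ℝ)) * X := by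
      rw [Matrix.diagonal_one, Matrix.mul_one]
    rw [h1, qf]
    exact Finset.sum_congr rfl fun i _ => by ring
  have hXub : ∀ a : Fin d → ℝ, ∑ i, ((X *ᵥ a) i)^2 ≤ ((n:ℝ)*C) * (a ⬝ᵥ a) := by
    intro a
    calc ∑ i, ((X *ᵥ a) i)^2 ≤ ∑ _i : Fin n, C * (a ⬝ᵥ a) := by
          refine Finset.sum_le_sum fun i _ => ?_
          have hcs := Finset.sum_mul_sq_le_sq_mul_sq Finset.univ (fun j => X i j) a
          have hXa : (X *ᵥ a) i = ∑ j, X i j * a j := rfl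
          have haa : (0:ℝ) ≤ ∑ j, (a j)^2 := Finset.sum_nonneg fun j _ => sq_nonneg _
          rw [hXa, dp_sq]
          calc (∑ j, X i j * a j)^2 ≤ (∑ j, (X i j)^2) * (∑ j, (a j)^2) := hcs
          _ ≤ C * (∑ j, (a j)^2) := mul_le_mul_of_nonneg_right (hXrow i) haa
    _ = ((n:ℝ)*C) * (a ⬝ᵥ a) := by
          rw [Finset.sum_const, Finset.card_univ, Fintype.card_fin, nsmul_eq_mul]
          ring
  have hlb : ∀ v : Fin n → ℝ, (∀ i, m₀ ≤ v i) → ∀ a : Fin d → ℝ,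
      m * (a ⬝ᵥ a) ≤ a ⬝ᵥ (Xᵀ * Matrix.diagonal v * X) *ᵥ a := by
    intro v hv a
    rw [qf]
    calc m * (a ⬝ᵥ a) = m₀ * (((n:ℝ)*c)*(a ⬝ᵥ a)) := by rw [hmdef]; ring
    _ ≤ m₀ * (a ⬝ᵥ (Xᵀ*X) *ᵥ a) := mul_le_mul_of_nonneg_left (hXlb a) hm₀.le
    _ = ∑ i, m₀ * ((X *ᵥ a) i)^2 := by rw [← hXsq a, Finset.mul_sum]
    _ ≤ ∑ i, v i * (X *ᵥ a) i * (X *ᵥ a) i := Finset.sum_le_sum fun i _ => by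
          have h := mul_le_mul_of_nonneg_right (hv i) (sq_nonneg ((X *ᵥ a) i))
          calc m₀ * ((X *ᵥ a) i)^2 ≤ v i * ((X *ᵥ a) i)^2 := h
          _ = v i * (X *ᵥ a) i * (X *ᵥ a) i := by ring
  set A : (Fin n → Bool) → Matrix (Fin d) (Fin d) ℝ :=
    fun b => Xᵀ * Matrix.diagonal (Db b) * X with hAdef
  set B : Matrix (Fin d) (Fin d) ℝ := Xᵀ * Matrix.diagonal Eb * X with hBdef
  set Bh : Matrix (Fin d) (Fin d) ℝ := Xᵀ * Matrix.diagonal Dh * X with hBhdef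
  set y : Fin d → ℝ := B⁻¹ *ᵥ xb with hydef
  set yh : Fin d → ℝ := Bh⁻¹ *ᵥ xb with hyhdef
  set z : (Fin n → Bool) → Fin d → ℝ := fun b => (A b)⁻¹ *ᵥ xb with hzdef
  have hxbC : xb ⬝ᵥ xb ≤ C := by rw [dp_sq]; exact hxb
  have hyb := inv_bounds (hsymXDX Eb) hm (hlb Eb hEb_lb) xb
  have hyhb := inv_bounds (hsymXDX Dh) hm (hlb Dh hDh_lb) xb
  have hy2 : y ⬝ᵥ y ≤ C/m^2 := le_trans hyb.1 (by gcongr)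
  have hyh2 : yh ⬝ᵥ yh ≤ C/m^2 := le_trans hyhb.1 (by gcongr)
  set P : ℝ := ((n:ℝ)*C) * (C/m^2) with hPdef
  have hP0 : (0:ℝ) ≤ P := by rw [hPdef]; positivity
  have hXy2 : ∑ i, ((X *ᵥ y) i)^2 ≤ P := le_trans (hXub y) (by
    rw [hPdef]; exact mul_le_mul_of_nonneg_left hy2 (by positivity))
  have hXyh2 : ∑ i, ((X *ᵥ yh) i)^2 ≤ P := le_trans (hXub yh) (by
    rw [hPdef]; exact mul_le_mul_of_nonneg_left hyh2 (by positivity))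
  have hxbBy : B *ᵥ y = xb := inv_mulVec (hsymXDX Eb) hm (hlb Eb hEb_lb) xb
  have hxbBhyh : Bh *ᵥ yh = xb := inv_mulVec (hsymXDX Dh) hm (hlb Dh hDh_lb) xb
  -- Step 1 : plug-in at true vs estimated probabilities
  have step1 : |xb ⬝ᵥ y - xb ⬝ᵥ yh| ≤ δ * P := by
    have e1 : xb ⬝ᵥ yh = y ⬝ᵥ (B *ᵥ yh) := by
      conv_lhs => rw [← hxbBy]
      exact symm_dot (hsymXDX Eb) y yh
    have e2 : xb ⬝ᵥ y = y ⬝ᵥ (Bh *ᵥ yh) := by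
      conv_lhs => rw [← hxbBhyh]
      exact dotProduct_comm _ _
    have hBB : B - Bh = Xᵀ * Matrix.diagonal (fun i => Eb i - Dh i) * X := by
      rw [hBdef, hBhdef, ← Matrix.sub_mul, ← Matrix.mul_sub, Matrix.diagonal_sub]
    have e3 : xb ⬝ᵥ yh - xb ⬝ᵥ y = ∑ i, (Eb i - Dh i) * (X *ᵥ y) i * (X *ᵥ yh) i := by
      rw [e1, e2, ← dotProduct_sub, ← Matrix.sub_mulVec, hBB, qf]
    rw [abs_sub_comm, e3]
    exact bilin_bound _ _ _ δ P hδ0 hP0 hdiffh hXy2 hXyh2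
  -- Step 2 : oracle variance vs plug-in at true probabilities
  set dd : (Fin n → Bool) → Fin n → ℝ := fun b i => Eb i - Db b i with hdddef
  set u : (Fin n → Bool) → Fin d → ℝ :=
    fun b => (Xᵀ * Matrix.diagonal (dd b) * X) *ᵥ y with hudef
  have hBA : ∀ b, B - A b = Xᵀ * Matrix.diagonal (dd b) * X := by
    intro b
    rw [hBdef, hAdef, ← Matrix.sub_mul, ← Matrix.mul_sub, Matrix.diagonal_sub]
  have hAinvA : ∀ b (v : Fin d → ℝ), (A b)⁻¹ *ᵥ ((A b) *ᵥ v) = v :=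
    fun b v => inv_mulVec' (hsymXDX (Db b)) hm (hlb (Db b) (hDb_lb b)) v
  have hAAinv : ∀ b (v : Fin d → ℝ), (A b) *ᵥ ((A b)⁻¹ *ᵥ v) = v :=
    fun b v => inv_mulVec (hsymXDX (Db b)) hm (hlb (Db b) (hDb_lb b)) v
  have hzb : ∀ b, z b = y + (A b)⁻¹ *ᵥ u b := by
    intro b
    have h2 : u b = xb - A b *ᵥ y := by
      have h3 : (B - A b) *ᵥ y = u b := by rw [hBA b, hudef]
      rw [Matrix.sub_mulVec, hxbBy] at h3
      exact h3.symm
    have h1 : A b *ᵥ (y + (A b)⁻¹ *ᵥ u b) = xb := by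
      rw [Matrix.mulVec_add, hAAinv b (u b), h2]
      abel
    calc z b = (A b)⁻¹ *ᵥ xb := by rw [hzdef]
    _ = (A b)⁻¹ *ᵥ (A b *ᵥ (y + (A b)⁻¹ *ᵥ u b)) := by rw [h1]
    _ = y + (A b)⁻¹ *ᵥ u b := hAinvA b _
  have hdecomp : ∀ b, xb ⬝ᵥ z b - xb ⬝ᵥ y
      = y ⬝ᵥ u b + (u b) ⬝ᵥ ((A b)⁻¹ *ᵥ u b) := by
    intro b
    rw [hzb b, dotProduct_add]
    have hr : A b *ᵥ ((A b)⁻¹ *ᵥ u b) = u b := hAAinv b (u b)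
    have h2 : xb ⬝ᵥ ((A b)⁻¹ *ᵥ u b)
        = (u b) ⬝ᵥ ((A b)⁻¹ *ᵥ u b) + y ⬝ᵥ u b := by
      calc xb ⬝ᵥ ((A b)⁻¹ *ᵥ u b) = (B *ᵥ y) ⬝ᵥ ((A b)⁻¹ *ᵥ u b) := by rw [hxbBy]
      _ = y ⬝ᵥ (B *ᵥ ((A b)⁻¹ *ᵥ u b)) := symm_dot (hsymXDX Eb) _ _
      _ = y ⬝ᵥ (((B - A b) + A b) *ᵥ ((A b)⁻¹ *ᵥ u b)) := by rw [sub_add_cancel]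
      _ = y ⬝ᵥ ((B - A b) *ᵥ ((A b)⁻¹ *ᵥ u b)) + y ⬝ᵥ (A b *ᵥ ((A b)⁻¹ *ᵥ u b)) := by
            rw [Matrix.add_mulVec, dotProduct_add]
      _ = (u b) ⬝ᵥ ((A b)⁻¹ *ᵥ u b) + y ⬝ᵥ u b := by
            rw [hr]
            congr 1
            rw [hBA b]
            rw [← symm_dot (hsymXDX (dd b)) y ((A b)⁻¹ *ᵥ u b)]
    rw [h2]; ring
  -- expectation tools
  set φ : Fin n → Bool → ℝ :=
    fun i β => Eb i - ((if β then (1:ℝ) else 0) - w i)^2 with hφdef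
  set cf : Fin n → Fin d → ℝ := fun i k => X i k * (X *ᵥ y) i with hcfdef
  have hφb : ∀ b i, dd b i = φ i (b i) := by
    intro b i; simp only [hdddef, hφdef, hDbdef]
  have hw01 : ∀ i, 0 ≤ w i ∧ w i ≤ 1 := fun i => ⟨by linarith [(hw i).1], by linarith [(hw i).2]⟩
  have hEφ : ∀ i, w i * φ i true + (1 - w i) * φ i false = 0 := by
    intro i
    simp only [hφdef, hEbdef, if_true, if_false]
    norm_num
    ring
  have hφt : ∀ i, |φ i true| ≤ 1 := by
    intro i
    have he : φ i true = w i * (1 - w i) - (1 - w i)^2 := by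
      simp only [hφdef, hEbdef, if_true]
    rw [he]; exact (sbnd4 hη0 hη2 (hw i).1 (hw i).2).1
  have hφf : ∀ i, |φ i false| ≤ 1 := by
    intro i
    have he : φ i false = w i * (1 - w i) - (w i)^2 := by
      simp only [hφdef, hEbdef, if_false]
      norm_num
    rw [he]; exact (sbnd4 hη0 hη2 (hw i).1 (hw i).2).2
  have hφsq_ub : ∀ i, ∑ b : Fin n → Bool, piw w b * (φ i (b i) * φ i (b i)) ≤ 1 := by
    intro i
    rw [sum_piw_mul w i (fun β => φ i β * φ i β)]
    exact (sbnd6 (hw01 i).1 (hw01 i).2 (hφt i) (hφf i)).1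
  have hcross : ∀ i i' : Fin n, i ≠ i' →
      ∑ b : Fin n → Bool, piw w b * (φ i (b i) * φ i' (b i')) = 0 := by
    intro i i' hne
    rw [sum_piw_mul_two w i i' hne (φ i) (φ i'), hEφ i, zero_mul]
  -- first-order term vanishes
  have hfirst : ∑ b : Fin n → Bool, piw w b * (y ⬝ᵥ u b) = 0 := by
    have e : ∀ b, y ⬝ᵥ u b = ∑ i, dd b i * (X *ᵥ y) i * (X *ᵥ y) i := by
      intro b; rw [hudef]; exact qf X (dd b) y y
    calc ∑ b : Fin n → Bool, piw w b * (y ⬝ᵥ u b)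
        = ∑ b : Fin n → Bool, ∑ i, piw w b *
            (φ i (b i) * ((X *ᵥ y) i * (X *ᵥ y) i)) := by
          refine Finset.sum_congr rfl fun b _ => ?_
          rw [e b, Finset.mul_sum]
          exact Finset.sum_congr rfl fun i _ => by rw [hφb b i]; ring
      _ = ∑ i, ∑ b : Fin n → Bool, piw w b *
            (φ i (b i) * ((X *ᵥ y) i * (X *ᵥ y) i)) := Finset.sum_comm
      _ = 0 := by
          refine Finset.sum_eq_zero fun i _ => ?_
          have h := sum_piw_mul w i (fun β => φ i β * ((X *ᵥ y) i * (X *ᵥ y) i))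
          rw [h]
          linear_combination ((X *ᵥ y) i * (X *ᵥ y) i) * hEφ i
  -- second-moment bound
  have hub : ∀ b k, u b k = ∑ i, φ i (b i) * cf i k := by
    intro b k
    rw [hudef]
    calc ((Xᵀ * Matrix.diagonal (dd b) * X) *ᵥ y) k
        = ∑ i, X i k * (dd b i * (X *ᵥ y) i) := entry_xdx X (dd b) y k
    _ = ∑ i, φ i (b i) * cf i k := by
        refine Finset.sum_congr rfl fun i _ => ?_
        rw [hφb b i, hcfdef]; ring
  have huu : ∑ b : Fin n → Bool, piw w b * (u b ⬝ᵥ u b) ≤ C * P := by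
    have expand : ∑ b : Fin n → Bool, piw w b * (u b ⬝ᵥ u b)
        = ∑ k, ∑ i, ∑ i', (cf i k * cf i' k) *
            (∑ b : Fin n → Bool, piw w b * (φ i (b i) * φ i' (b i'))) := by
      have step1' : ∀ b, u b ⬝ᵥ u b
          = ∑ k, ∑ i, ∑ i', (φ i (b i) * cf i k) * (φ i' (b i') * cf i' k) := by
        intro b
        have hd : u b ⬝ᵥ u b = ∑ k, u b k * u b k := rfl
        rw [hd]
        refine Finset.sum_congr rfl fun k _ => ?_
        rw [hub b k]
        exact Finset.sum_mul_sum _ _ _ _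
      calc ∑ b : Fin n → Bool, piw w b * (u b ⬝ᵥ u b)
          = ∑ b : Fin n → Bool, ∑ k, ∑ i, ∑ i',
              piw w b * ((φ i (b i) * cf i k) * (φ i' (b i') * cf i' k)) := by
            refine Finset.sum_congr rfl fun b _ => ?_
            rw [step1' b]
            simp only [Finset.mul_sum]
        _ = ∑ k, ∑ b : Fin n → Bool, ∑ i, ∑ i',
              piw w b * ((φ i (b i) * cf i k) * (φ i' (b i') * cf i' k)) := Finset.sum_comm
        _ = ∑ k, ∑ i, ∑ b : Fin n → Bool, ∑ i',
              piw w b * ((φ i (b i) * cf i k) * (φ i' (b i') * cf i' k)) :=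
            Finset.sum_congr rfl fun k _ => Finset.sum_comm
        _ = ∑ k, ∑ i, ∑ i', ∑ b : Fin n → Bool,
              piw w b * ((φ i (b i) * cf i k) * (φ i' (b i') * cf i' k)) :=
            Finset.sum_congr rfl fun k _ => Finset.sum_congr rfl fun i _ => Finset.sum_comm
        _ = ∑ k, ∑ i, ∑ i', (cf i k * cf i' k) *
              (∑ b : Fin n → Bool, piw w b * (φ i (b i) * φ i' (b i'))) := by
            refine Finset.sum_congr rfl fun k _ => Finset.sum_congr rfl fun i _ =>
              Finset.sum_congr rfl fun i' _ => ?_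
            rw [Finset.mul_sum]
            exact Finset.sum_congr rfl fun b _ => by ring
    rw [expand]
    have collapse : ∀ k i, ∑ i', (cf i k * cf i' k) *
        (∑ b : Fin n → Bool, piw w b * (φ i (b i) * φ i' (b i')))
        = (cf i k * cf i k) *
          (∑ b : Fin n → Bool, piw w b * (φ i (b i) * φ i (b i))) := by
      intro k i
      refine Finset.sum_eq_single i (fun i' _ hne => ?_) (fun h => absurd (Finset.mem_univ i) h)
      rw [hcross i i' (Ne.symm hne), mul_zero]
    calc ∑ k, ∑ i, ∑ i', (cf i k * cf i' k) *
            (∑ b : Fin n → Bool, piw w b * (φ i (b i) * φ i' (b i')))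
        = ∑ k, ∑ i, (cf i k * cf i k) *
            (∑ b : Fin n → Bool, piw w b * (φ i (b i) * φ i (b i))) :=
          Finset.sum_congr rfl fun k _ => Finset.sum_congr rfl fun i _ => collapse k i
      _ ≤ ∑ k, ∑ i, (cf i k * cf i k) * 1 := by
          refine Finset.sum_le_sum fun k _ => Finset.sum_le_sum fun i _ => ?_
          exact mul_le_mul_of_nonneg_left (hφsq_ub i) (mul_self_nonneg _)
      _ = ∑ i, ∑ k, ((X *ᵥ y) i)^2 * (X i k)^2 := by
          rw [Finset.sum_comm]
          refine Finset.sum_congr rfl fun i _ => Finset.sum_congr rfl fun k _ => ?_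
          rw [hcfdef]; ring
      _ ≤ ∑ i, ((X *ᵥ y) i)^2 * C := by
          refine Finset.sum_le_sum fun i _ => ?_
          rw [← Finset.mul_sum]
          exact mul_le_mul_of_nonneg_left (hXrow i) (sq_nonneg _)
      _ = C * ∑ i, ((X *ᵥ y) i)^2 := by rw [← Finset.sum_mul, mul_comm]
      _ ≤ C * P := mul_le_mul_of_nonneg_left hXy2 hC.le
  have hsecond0 : ∀ b, 0 ≤ (u b) ⬝ᵥ ((A b)⁻¹ *ᵥ u b) :=
    fun b => (inv_bounds (hsymXDX (Db b)) hm (hlb (Db b) (hDb_lb b)) (u b)).2.1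
  have hsecond1 : ∀ b, (u b) ⬝ᵥ ((A b)⁻¹ *ᵥ u b) ≤ (u b ⬝ᵥ u b)/m :=
    fun b => (inv_bounds (hsymXDX (Db b)) hm (hlb (Db b) (hDb_lb b)) (u b)).2.2
  have step2 : |(∑ b : Fin n → Bool, piw w b * (xb ⬝ᵥ z b)) - xb ⬝ᵥ y| ≤ C * P / m := by
    have hsplit : (∑ b : Fin n → Bool, piw w b * (xb ⬝ᵥ z b)) - xb ⬝ᵥ y
        = ∑ b : Fin n → Bool, piw w b * (xb ⬝ᵥ z b - xb ⬝ᵥ y) := by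
      simp only [mul_sub]
      rw [Finset.sum_sub_distrib, ← Finset.sum_mul, sum_piw, one_mul]
    have hsplit2 : ∑ b : Fin n → Bool, piw w b * (xb ⬝ᵥ z b - xb ⬝ᵥ y)
        = (∑ b : Fin n → Bool, piw w b * (y ⬝ᵥ u b))
          + ∑ b : Fin n → Bool, piw w b * ((u b) ⬝ᵥ ((A b)⁻¹ *ᵥ u b)) := by
      rw [← Finset.sum_add_distrib]
      exact Finset.sum_congr rfl fun b _ => by rw [hdecomp b]; ring
    rw [hsplit, hsplit2, hfirst, zero_add]
    rw [abs_of_nonneg (Finset.sum_nonneg fun b _ =>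
      mul_nonneg (piw_nonneg hw01 b) (hsecond0 b))]
    calc ∑ b : Fin n → Bool, piw w b * ((u b) ⬝ᵥ ((A b)⁻¹ *ᵥ u b))
        ≤ ∑ b : Fin n → Bool, piw w b * ((u b ⬝ᵥ u b)/m) :=
          Finset.sum_le_sum fun b _ =>
            mul_le_mul_of_nonneg_left (hsecond1 b) (piw_nonneg hw01 b)
      _ = (∑ b : Fin n → Bool, piw w b * (u b ⬝ᵥ u b))/m := by
          rw [Finset.sum_div]
          exact Finset.sum_congr rfl fun b _ => (mul_div_assoc _ _ _).symm
      _ ≤ C * P / m := by gcongr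
  -- assembly
  have hVsum : xb ⬝ᵥ ((∑ b : Fin n → Bool, piw w b • (A b)⁻¹) *ᵥ xb)
      = ∑ b : Fin n → Bool, piw w b * (xb ⬝ᵥ z b) :=
    dot_sum_smul_mulVec (piw w) (fun b => (A b)⁻¹) xb
  have main : |(∑ b : Fin n → Bool, piw w b * (xb ⬝ᵥ z b)) - xb ⬝ᵥ yh|
      ≤ C * P / m + δ * P := by
    calc |(∑ b : Fin n → Bool, piw w b * (xb ⬝ᵥ z b)) - xb ⬝ᵥ yh|
        = |((∑ b : Fin n → Bool, piw w b * (xb ⬝ᵥ z b)) - xb ⬝ᵥ y)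
            + (xb ⬝ᵥ y - xb ⬝ᵥ yh)| := by ring_nf
      _ ≤ |(∑ b : Fin n → Bool, piw w b * (xb ⬝ᵥ z b)) - xb ⬝ᵥ y|
            + |xb ⬝ᵥ y - xb ⬝ᵥ yh| := abs_add_le _ _
      _ ≤ C * P / m + δ * P := add_le_add step2 step1
  have hgoal : |(n : ℝ) * (xb ⬝ᵥ ((∑ b : Fin n → Bool, piw w b • (A b)⁻¹) *ᵥ xb))
      - n * (xb ⬝ᵥ (Bh⁻¹ *ᵥ xb))| ≤ 16*C^2/(η^4*c^2) * δ + 64*C^3/(η^6*c^3) / n := by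
    rw [hVsum]
    have hyh' : xb ⬝ᵥ (Bh⁻¹ *ᵥ xb) = xb ⬝ᵥ yh := by rw [hyhdef]
    rw [hyh', ← mul_sub, abs_mul, abs_of_pos hn0]
    calc (n:ℝ) * |(∑ b : Fin n → Bool, piw w b * (xb ⬝ᵥ z b)) - xb ⬝ᵥ yh|
        ≤ n * (C * P / m + δ * P) := mul_le_mul_of_nonneg_left main hn0.le
      _ = 16*C^2/(η^4*c^2) * δ + 64*C^3/(η^6*c^3) / n := by
          rw [hPdef, hmdef, hm₀def]
          have hηne : η ≠ 0 := ne_of_gt hη0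
          have hcne : c ≠ 0 := ne_of_gt hc
          have hnne : (n:ℝ) ≠ 0 := ne_of_gt hn0
          field_simp
          ring
  exact hgoal


end S18

set_option maxHeartbeats 2000000 in
/-- design optimality: minimizing the plug-in variance criterion over
the constrained feasible set asymptotically recovers the minimal oracle variance. -/


theorem stmt_18 (d : ℕ) (η c C : ℝ) (hη : η ∈ Ioo (0:ℝ) (1/2)) (hc : 0 < c) (hC : 0 < C)
    (nstar : ℕ) (hnstar : d ≤ nstar)
    (X : ∀ n : ℕ, Matrix (Fin n) (Fin d) ℝ)
    (hXrow : ∀ n : ℕ, nstar ≤ n → ∀ i, ∑ j, (X n i j)^2 ≤ C)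
    (hXpos : ∀ n : ℕ, nstar ≤ n →
      ((X n)ᵀ * X n - ((n : ℝ) * c) • (1 : Matrix (Fin d) (Fin d) ℝ)).PosSemidef)
    (xbar : ∀ n : ℕ, Fin d → ℝ) (hxbar : ∀ n : ℕ, nstar ≤ n → ∑ j, (xbar n j)^2 ≤ C)
    (pAT pC : ∀ n : ℕ, Fin n → ℝ)
    (Cset : ∀ n : ℕ, Set (Fin n → ℝ)) (hCne : ∀ n, (Cset n).Nonempty)
    (hCsub : ∀ n : ℕ, ∀ e ∈ Cset n, ∀ i, e i ∈ Icc (0:ℝ) 1)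
    (hCw : ∀ n : ℕ, nstar ≤ n → ∀ e ∈ Cset n, ∀ i, pAT n i + pC n i * e i ∈ Icc η (1 - η))
    -- the oracle variance `V_n(e) = n x̄ᵀ E[(Xᵀ diag(W - w(e))² X)⁻¹] x̄`, written as an
    -- explicit expectation over the independent Bernoulli(w(e)ᵢ) treatment indicators
    (V : ∀ n : ℕ, (Fin n → ℝ) → ℝ)
    (hV : ∀ n : ℕ, ∀ e : Fin n → ℝ, V n e = n * (xbar n ⬝ᵥ
      (∑ b : Fin n → Bool,
        (∏ i, if b i then pAT n i + pC n i * e i else 1 - (pAT n i + pC n i * e i)) •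
        ((X n)ᵀ * Matrix.diagonal
          (fun i => ((if b i then (1:ℝ) else 0) - (pAT n i + pC n i * e i))^2) * X n)⁻¹).mulVec
      (xbar n)))
    (Ω : Type) [MeasurableSpace Ω] (μ : Measure Ω) [IsProbabilityMeasure μ]
    (pATh pCh : ∀ n : ℕ, Ω → Fin n → ℝ)
    -- uniform consistency of the estimated compliance probabilities
    (hconv : ∀ ε > (0:ℝ), Tendsto (fun n : ℕ =>
      μ {ω | ε ≤ ⨆ i : Fin n, (|pATh n ω i - pAT n i| + |pCh n ω i - pC n i|)}) atTop (nhds 0))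
    -- the plug-in variance criterion computed from the estimated probabilities
    (Vt : ∀ n : ℕ, Ω → (Fin n → ℝ) → ℝ)
    (hVt : ∀ n : ℕ, ∀ ω, ∀ e : Fin n → ℝ, Vt n ω e = n * (xbar n ⬝ᵥ
      (((X n)ᵀ * Matrix.diagonal (fun i => (pATh n ω i + pCh n ω i * e i) *
        (1 - (pATh n ω i + pCh n ω i * e i))) * X n)⁻¹).mulVec (xbar n)))
    (estar : ∀ n : ℕ, Fin n → ℝ)
    (hestar : ∀ n : ℕ, estar n ∈ Cset n ∧ ∀ e ∈ Cset n, V n (estar n) ≤ V n e)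
    (ehat : ∀ n : ℕ, Ω → Fin n → ℝ)
    (hehat : ∀ n : ℕ, ∀ᵐ ω ∂μ, ehat n ω ∈ Cset n ∧ ∀ e ∈ Cset n, Vt n ω (ehat n ω) ≤ Vt n ω e) :
    ∀ ε > (0:ℝ), Tendsto (fun n : ℕ =>
      μ {ω | ε ≤ |V n (ehat n ω) - V n (estar n)|}) atTop (nhds 0) := by
  intro ε hε
  obtain ⟨hη0, hη2⟩ := hη
  have hB1pos : 0 < 16*C^2/(η^4*c^2) := by positivity
  have hB2pos : 0 < 64*C^3/(η^6*c^3) := by positivity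
  set B1 : ℝ := 16*C^2/(η^4*c^2) with hB1def
  set B2 : ℝ := 64*C^3/(η^6*c^3) with hB2def
  set δ₀ : ℝ := min (η/2) (ε/(4*(B1+1))) with hδ₀def
  have hδ₀pos : 0 < δ₀ := lt_min (by linarith) (div_pos hε (by linarith))
  obtain ⟨N₁, hN₁⟩ := exists_nat_gt (4*B2/ε)
  set N : ℕ := max (max nstar 1) N₁ with hNdef
  have hev : ∀ n : ℕ, N ≤ n →
      μ {ω | ε ≤ |V n (ehat n ω) - V n (estar n)|}
        ≤ μ {ω | δ₀ ≤ ⨆ i : Fin n, (|pATh n ω i - pAT n i| + |pCh n ω i - pC n i|)} := by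
    intro n hNn
    have hn1 : 1 ≤ n := le_trans (le_trans (le_max_right nstar 1) (le_max_left _ N₁)) hNn
    have hns : nstar ≤ n := le_trans (le_trans (le_max_left nstar 1) (le_max_left _ N₁)) hNn
    have hnN₁ : N₁ ≤ n := le_trans (le_max_right _ N₁) hNn
    have hn0 : (0:ℝ) < n := by exact_mod_cast hn1
    have hb2 : B2/(n:ℝ) < ε/4 := by
      have h4 : (4*B2/ε) < (n:ℝ) := lt_of_lt_of_le hN₁ (by exact_mod_cast hnN₁)
      have h5 : 4*B2 < ε*(n:ℝ) := by
        have := (div_lt_iff₀ hε).mp h4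
        linarith
      rw [div_lt_div_iff₀ hn0 (by norm_num : (0:ℝ) < 4)]
      linarith
    have hb1 : B1*δ₀ < ε/4 := by
      have h1 : δ₀ ≤ ε/(4*(B1+1)) := min_le_right _ _
      have h2 : B1*δ₀ ≤ B1*(ε/(4*(B1+1))) := mul_le_mul_of_nonneg_left h1 hB1pos.le
      have h3 : B1*(ε/(4*(B1+1))) < ε/4 := by
        rw [mul_div_assoc', div_lt_div_iff₀ (by linarith) (by norm_num : (0:ℝ) < 4)]
        nlinarith
      linarith
    have hXlb : ∀ v : Fin d → ℝ, ((n:ℝ)*c) * (v ⬝ᵥ v) ≤ v ⬝ᵥ ((X n)ᵀ * X n) *ᵥ v := by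
      intro v
      have hps := (hXpos n hns).dotProduct_mulVec_nonneg v
      have he : ((X n)ᵀ * X n - ((n:ℝ)*c) • (1 : Matrix (Fin d) (Fin d) ℝ)) *ᵥ v
          = ((X n)ᵀ * X n) *ᵥ v - ((n:ℝ)*c) • v := by
        rw [Matrix.sub_mulVec, Matrix.smul_mulVec, Matrix.one_mulVec]
      rw [star_trivial, he, dotProduct_sub, dotProduct_smul] at hps
      simp only [smul_eq_mul] at hps
      linarith
    have hsubset : {ω | ε ≤ |V n (ehat n ω) - V n (estar n)|}
        ⊆ {ω | δ₀ ≤ ⨆ i : Fin n, (|pATh n ω i - pAT n i| + |pCh n ω i - pC n i|)}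
          ∪ {ω | ¬(ehat n ω ∈ Cset n ∧ ∀ e ∈ Cset n, Vt n ω (ehat n ω) ≤ Vt n ω e)} := by
      intro ω hω
      by_contra hcon
      have h1 : ¬ (δ₀ ≤ ⨆ i : Fin n, (|pATh n ω i - pAT n i| + |pCh n ω i - pC n i|)) :=
        fun h => hcon (Set.mem_union_left _ h)
      have h2 : ¬¬(ehat n ω ∈ Cset n ∧ ∀ e ∈ Cset n, Vt n ω (ehat n ω) ≤ Vt n ω e) :=
        fun h => hcon (Set.mem_union_right _ h)
      rw [not_le] at h1
      obtain ⟨hmemC, hmin⟩ := not_not.mp h2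
      simp only [Set.mem_setOf_eq] at hω
      have herr : ∀ i : Fin n, |pATh n ω i - pAT n i| + |pCh n ω i - pC n i| ≤ δ₀ := by
        intro i
        exact le_of_lt (lt_of_le_of_lt (le_ciSup (Set.Finite.bddAbove (Set.finite_range
          (fun i : Fin n => |pATh n ω i - pAT n i| + |pCh n ω i - pC n i|))) i) h1)
      have hkey : ∀ e ∈ Cset n, |V n e - Vt n ω e| ≤ B1*δ₀ + B2/n := by
        intro e heC
        have hwbound : ∀ i, η ≤ pAT n i + pC n i * e i ∧ pAT n i + pC n i * e i ≤ 1 - η :=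
          fun i => ⟨(hCw n hns e heC i).1, (hCw n hns e heC i).2⟩
        have hwhdiff : ∀ i, |(pATh n ω i + pCh n ω i * e i) - (pAT n i + pC n i * e i)| ≤ δ₀ := by
          intro i
          have he01 := hCsub n e heC i
          have h5 : (pATh n ω i + pCh n ω i * e i) - (pAT n i + pC n i * e i)
              = (pATh n ω i - pAT n i) + (pCh n ω i - pC n i) * e i := by ring
          rw [h5]
          calc |(pATh n ω i - pAT n i) + (pCh n ω i - pC n i) * e i|
              ≤ |pATh n ω i - pAT n i| + |(pCh n ω i - pC n i) * e i| := abs_add_le _ _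
            _ ≤ |pATh n ω i - pAT n i| + |pCh n ω i - pC n i| := by
                rw [abs_mul]
                have h6 : |pCh n ω i - pC n i| * |e i| ≤ |pCh n ω i - pC n i| * 1 := by
                  apply mul_le_mul_of_nonneg_left _ (abs_nonneg _)
                  rw [abs_le]; exact ⟨by linarith [he01.1], he01.2⟩
                linarith
            _ ≤ δ₀ := herr i
        have hcore := S18.core hn1 η c C hη0 hη2 hc hC (X n) (hXrow n hns) hXlb
          (xbar n) (hxbar n hns) (fun i => pAT n i + pC n i * e i)
          (fun i => pATh n ω i + pCh n ω i * e i) hwbound δ₀ hδ₀pos.le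
          (min_le_left _ _) hwhdiff
        rw [hV n e, hVt n ω e]
        exact hcore
      have h1k := hkey (ehat n ω) hmemC
      have h2k := hkey (estar n) (hestar n).1
      have hminV := (hestar n).2 (ehat n ω) hmemC
      have hminVt := hmin (estar n) (hestar n).1
      obtain ⟨ha1, ha2⟩ := abs_le.mp h1k
      obtain ⟨hb1', hb2'⟩ := abs_le.mp h2k
      have habs : |V n (ehat n ω) - V n (estar n)| = V n (ehat n ω) - V n (estar n) :=
        abs_of_nonneg (by linarith)
      rw [habs] at hω
      linarith
    calc μ {ω | ε ≤ |V n (ehat n ω) - V n (estar n)|}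
        ≤ μ ({ω | δ₀ ≤ ⨆ i : Fin n, (|pATh n ω i - pAT n i| + |pCh n ω i - pC n i|)}
            ∪ {ω | ¬(ehat n ω ∈ Cset n ∧ ∀ e ∈ Cset n, Vt n ω (ehat n ω) ≤ Vt n ω e)}) :=
          measure_mono hsubset
      _ ≤ μ {ω | δ₀ ≤ ⨆ i : Fin n, (|pATh n ω i - pAT n i| + |pCh n ω i - pC n i|)}
            + μ {ω | ¬(ehat n ω ∈ Cset n ∧ ∀ e ∈ Cset n, Vt n ω (ehat n ω) ≤ Vt n ω e)} :=
          measure_union_le _ _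
      _ = μ {ω | δ₀ ≤ ⨆ i : Fin n, (|pATh n ω i - pAT n i| + |pCh n ω i - pC n i|)} := by
          rw [MeasureTheory.ae_iff.mp (hehat n), add_zero]
  refine tendsto_of_tendsto_of_tendsto_of_le_of_le' tendsto_const_nhds (hconv δ₀ hδ₀pos) ?_ ?_
  · exact Filter.Eventually.of_forall fun n => zero_le
  · exact Filter.eventually_atTop.mpr ⟨N, hev⟩
end
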